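/- arXiv:2505.08394 — 7 statements merged into one kernel-verified Lean document; each statement's English description precedes it below -/
import Mathlib

section
/- For every n ≥ 1 and real θ > 0, the sum over all partitions of n (equivalently, over all cycle types 1^{m_1} 2^{m_2} ⋯ n^{m_n} with m_1 + 2m_2 + ⋯ + n m_n = n) of n! · θ^{m_1+m_2+⋯+m_n} / (1^{m_1} m_1! 2^{m_2} m_2! ⋯ n^{m_n} m_n!) equals θ(θ+1)⋯(θ+n−1). -/
open Finset

noncomputable def ff (θ : ℝ) (n : ℕ) (p : n.Partition) : ℝ :=
  (n.factorial : ℝ) * θ ^ (Multiset.card p.parts) /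
    ∏ i ∈ Finset.Icc 1 n, ((i : ℝ) ^ (p.parts.count i) * ((p.parts.count i).factorial : ℝ))

lemma mem_parts_le {n : ℕ} (p : n.Partition) {i : ℕ} (hi : i ∈ p.parts) : i ≤ n := by
  obtain ⟨t, ht⟩ := Multiset.exists_cons_of_mem hi
  have := p.parts_sum
  rw [ht, Multiset.sum_cons] at this
  omega

lemma count_eq_zero' {n : ℕ} (p : n.Partition) {i : ℕ} (hi : i ∉ Finset.Icc 1 n) :
    p.parts.count i = 0 := by
  rw [Multiset.count_eq_zero]
  intro h
  exact hi (Finset.mem_Icc.mpr ⟨p.parts_pos h, mem_parts_le p h⟩)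

lemma denom_pos {n : ℕ} (p : n.Partition) :
    0 < ∏ i ∈ Finset.Icc 1 n, ((i : ℝ) ^ (p.parts.count i) * ((p.parts.count i).factorial : ℝ)) := by
  apply Finset.prod_pos
  intro i hi
  have : 1 ≤ i := (Finset.mem_Icc.mp hi).1
  positivity

lemma sum_j_count {n : ℕ} (p : n.Partition) :
    ∑ j ∈ Finset.Icc 1 n, j * p.parts.count j = n := by
  have h1 := congrArg Multiset.sum (Multiset.toFinset_sum_count_nsmul_eq p.parts)
  rw [Multiset.sum_sum] at h1
  have hsub : p.parts.toFinset ⊆ Finset.Icc 1 n := by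
    intro i hi
    rw [Multiset.mem_toFinset] at hi
    exact Finset.mem_Icc.mpr ⟨p.parts_pos hi, mem_parts_le p hi⟩
  calc ∑ j ∈ Finset.Icc 1 n, j * p.parts.count j
      = ∑ j ∈ p.parts.toFinset, j * p.parts.count j := by
        refine (Finset.sum_subset hsub ?_).symm
        intro x _ hx
        rw [Multiset.count_eq_zero.mpr (by simpa using hx)]
        ring
    _ = n := by
        conv_rhs => rw [← p.parts_sum]
        rw [← h1]
        apply Finset.sum_congr rfl
        intro x _
        simp [Multiset.sum_nsmul, mul_comm]

def insertPart {a : ℕ} (j : ℕ) (hj : 0 < j) (q : a.Partition) : (j + a).Partition where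
  parts := j ::ₘ q.parts
  parts_pos := by
    intro i hi
    rcases Multiset.mem_cons.mp hi with h | h
    · subst h; exact hj
    · exact q.parts_pos h
  parts_sum := by rw [Multiset.sum_cons, q.parts_sum]

lemma ff_insert (θ : ℝ) (j a : ℕ) (hj : 0 < j) (q : a.Partition) :
    (((insertPart j hj q).parts.count j : ℕ) : ℝ) * ff θ (j + a) (insertPart j hj q) =
      (((j + a).factorial : ℝ) / (a.factorial : ℝ)) * (θ / j) * ff θ a q := by
  have hja : a ≤ j + a := Nat.le_add_left a j
  have hcnt : (insertPart j hj q).parts.count j = q.parts.count j + 1 := by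
    simp [insertPart, Multiset.count_cons_self]
  have hjmem : j ∈ Finset.Icc 1 (j + a) := Finset.mem_Icc.mpr ⟨hj, Nat.le_add_right j a⟩
  -- denominator over big interval for q equals the one over small interval
  have hq_eq : (∏ i ∈ Finset.Icc 1 (j + a),
        ((i : ℝ) ^ (q.parts.count i) * ((q.parts.count i).factorial : ℝ)))
      = ∏ i ∈ Finset.Icc 1 a,
        ((i : ℝ) ^ (q.parts.count i) * ((q.parts.count i).factorial : ℝ)) := by
    refine (Finset.prod_subset ?_ ?_).symm
    · exact Finset.Icc_subset_Icc_right hja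
    · intro x hx hx'
      rw [count_eq_zero' q hx']
      simp
  -- denominator of the inserted partition
  have hins : (∏ i ∈ Finset.Icc 1 (j + a),
        (((i : ℝ)) ^ ((insertPart j hj q).parts.count i) *
          (((insertPart j hj q).parts.count i).factorial : ℝ)))
      = (j : ℝ) * ((q.parts.count j : ℕ) + 1 : ℝ) *
        ∏ i ∈ Finset.Icc 1 a,
          ((i : ℝ) ^ (q.parts.count i) * ((q.parts.count i).factorial : ℝ)) := by
    rw [← hq_eq]
    rw [← Finset.mul_prod_erase _ _ hjmem, ← Finset.mul_prod_erase _ _ hjmem]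
    have herase : ∀ x ∈ (Finset.Icc 1 (j + a)).erase j,
        ((x : ℝ)) ^ ((insertPart j hj q).parts.count x) *
          (((insertPart j hj q).parts.count x).factorial : ℝ)
        = (x : ℝ) ^ (q.parts.count x) * ((q.parts.count x).factorial : ℝ) := by
      intro x hx
      have hxj : x ≠ j := Finset.ne_of_mem_erase hx
      simp [insertPart, Multiset.count_cons_of_ne hxj]
    rw [Finset.prod_congr rfl herase]
    rw [hcnt]
    push_cast
    rw [pow_succ, Nat.factorial_succ]
    push_cast
    ring
  have hcard : Multiset.card (insertPart j hj q).parts = Multiset.card q.parts + 1 := by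
    simp [insertPart]
  have hP : (0:ℝ) < ∏ i ∈ Finset.Icc 1 a,
      ((i : ℝ) ^ (q.parts.count i) * ((q.parts.count i).factorial : ℝ)) := denom_pos q
  have hjR : (0:ℝ) < (j:ℝ) := by exact_mod_cast hj
  have hfa : (0:ℝ) < (a.factorial : ℝ) := by exact_mod_cast a.factorial_pos
  rw [ff, ff, hins, hcnt, hcard]
  push_cast
  rw [pow_succ]
  field_simp

def removePart {n : ℕ} (j : ℕ) (p : n.Partition) (hp : j ∈ p.parts) : (n - j).Partition where
  parts := p.parts.erase j
  parts_pos := fun h => p.parts_pos (Multiset.mem_of_mem_erase h)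
  parts_sum := by
    have h1 : j + (p.parts.erase j).sum = n := by
      rw [← Multiset.sum_cons, Multiset.cons_erase hp, p.parts_sum]
    omega

lemma parts_cast {m n : ℕ} (h : m = n) (p : m.Partition) :
    ((h ▸ p : n.Partition)).parts = p.parts := by subst h; rfl

lemma key_sum (θ : ℝ) (j a : ℕ) (hj : 0 < j) :
    ∑ p : (j + a).Partition, ((p.parts.count j : ℕ) : ℝ) * ff θ (j + a) p =
      (((j + a).factorial : ℝ) / (a.factorial : ℝ)) * (θ / j) *
        ∑ q : a.Partition, ff θ a q := by
  rw [Finset.mul_sum]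
  have hstep : ∑ p : (j + a).Partition, ((p.parts.count j : ℕ) : ℝ) * ff θ (j + a) p
      = ∑ p ∈ Finset.univ.filter (fun p : (j + a).Partition => j ∈ p.parts),
          ((p.parts.count j : ℕ) : ℝ) * ff θ (j + a) p := by
    refine (Finset.sum_filter_of_ne ?_).symm
    intro p _ hne
    by_contra h
    rw [Multiset.count_eq_zero.mpr h] at hne
    simp at hne
  rw [hstep]
  have heq : j + a - j = a := by omega
  refine Finset.sum_bij' (fun p hp => (heq ▸ removePart j p (by simpa using hp) : a.Partition))
    (fun q _ => insertPart j hj q) ?_ ?_ ?_ ?_ ?_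
  · intro p hp; exact Finset.mem_univ _
  · intro q hq
    simp [insertPart, Multiset.mem_cons_self]
  · intro p hp
    have hmem : j ∈ p.parts := by simpa using hp
    apply Nat.Partition.ext
    have hparts : ((heq ▸ removePart j p hmem : a.Partition)).parts = p.parts.erase j :=
      parts_cast heq _
    simp [insertPart, hparts, Multiset.cons_erase hmem]
  · intro q hq
    apply Nat.Partition.ext
    rw [parts_cast heq]
    simp [insertPart, removePart]
  · intro p hp
    have hmem : j ∈ p.parts := by simpa using hp
    have hparts : ((heq ▸ removePart j p hmem : a.Partition)).parts = p.parts.erase j :=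
      parts_cast heq _
    have hrec : p = insertPart j hj (heq ▸ removePart j p hmem : a.Partition) := by
      apply Nat.Partition.ext
      simp [insertPart, hparts, Multiset.cons_erase hmem]
    calc ((p.parts.count j : ℕ) : ℝ) * ff θ (j + a) p
        = (((insertPart j hj (heq ▸ removePart j p hmem : a.Partition)).parts.count j : ℕ) : ℝ)
          * ff θ (j + a) (insertPart j hj (heq ▸ removePart j p hmem : a.Partition)) := by
          rw [← hrec]
      _ = _ := ff_insert θ j a hj _

lemma hockey (θ : ℝ) (n : ℕ) :
    θ * ∑ m ∈ Finset.range n, (ascPochhammer ℝ m).eval θ / (m.factorial : ℝ)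
      = (n : ℝ) * (ascPochhammer ℝ n).eval θ / (n.factorial : ℝ) := by
  induction n with
  | zero => simp
  | succ n ih =>
    rw [Finset.sum_range_succ, mul_add, ih, ascPochhammer_succ_eval]
    have h1 : ((n+1).factorial : ℝ) = ((n:ℝ)+1) * (n.factorial : ℝ) := by
      rw [Nat.factorial_succ]; push_cast; ring
    have h2 : (n.factorial : ℝ) ≠ 0 := by positivity
    rw [h1]
    push_cast
    field_simp
    ring

lemma aux_main (θ : ℝ) : ∀ n : ℕ, ∑ p : n.Partition, ff θ n p = (ascPochhammer ℝ n).eval θ := by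
  intro n
  induction n using Nat.strong_induction_on with
  | _ n ih =>
    rcases Nat.eq_zero_or_pos n with hn0 | hn1
    · subst hn0
      rw [Fintype.sum_unique]
      simp [ff]
    -- main recurrence
    have hnR : (0:ℝ) < (n:ℝ) := by exact_mod_cast hn1
    have step1 : (n : ℝ) * ∑ p : n.Partition, ff θ n p
        = ∑ j ∈ Finset.Icc 1 n, (j:ℝ) * ∑ p : n.Partition, ((p.parts.count j : ℕ) : ℝ) * ff θ n p := by
      rw [Finset.mul_sum]
      have hpt : ∀ p : n.Partition, (n:ℝ) * ff θ n p
          = ∑ j ∈ Finset.Icc 1 n, (j:ℝ) * (((p.parts.count j : ℕ) : ℝ) * ff θ n p) := by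
        intro p
        have := sum_j_count p
        calc (n:ℝ) * ff θ n p = ((∑ j ∈ Finset.Icc 1 n, j * p.parts.count j : ℕ) : ℝ) * ff θ n p := by
              rw [this]
          _ = _ := by push_cast; rw [Finset.sum_mul]; apply Finset.sum_congr rfl; intros; ring
      rw [Finset.sum_congr rfl (fun p _ => hpt p), Finset.sum_comm]
      apply Finset.sum_congr rfl
      intro j _
      rw [Finset.mul_sum]
    have step2 : ∀ j ∈ Finset.Icc 1 n,
        (j:ℝ) * ∑ p : n.Partition, ((p.parts.count j : ℕ) : ℝ) * ff θ n p
          = θ * ((n.factorial : ℝ) / ((n - j).factorial : ℝ)) *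
              (ascPochhammer ℝ (n - j)).eval θ := by
      intro j hj
      rw [Finset.mem_Icc] at hj
      obtain ⟨a, rfl⟩ : ∃ a, n = j + a := ⟨n - j, by omega⟩
      have ha : j + a - j = a := by omega
      rw [ha, key_sum θ j a hj.1, ih a (by omega)]
      have hjR : ((j:ℝ)) ≠ 0 := by
        have : (0:ℝ) < (j:ℝ) := by exact_mod_cast hj.1
        exact ne_of_gt this
      field_simp
    rw [Finset.sum_congr rfl step2] at step1
    -- reindex j ↦ n - j
    have step3 : ∑ j ∈ Finset.Icc 1 n,
        θ * ((n.factorial : ℝ) / ((n - j).factorial : ℝ)) * (ascPochhammer ℝ (n - j)).eval θ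
        = ∑ m ∈ Finset.range n,
            θ * ((n.factorial : ℝ) / (m.factorial : ℝ)) * (ascPochhammer ℝ m).eval θ := by
      refine Finset.sum_nbij' (fun j => n - j) (fun m => n - m) ?_ ?_ ?_ ?_ ?_
      · intro j hj; rw [Finset.mem_Icc] at hj
        show n - j ∈ Finset.range n; rw [Finset.mem_range]; omega
      · intro m hm; rw [Finset.mem_range] at hm
        show n - m ∈ Finset.Icc 1 n; rw [Finset.mem_Icc]; omega
      · intro j hj; rw [Finset.mem_Icc] at hj; show n - (n - j) = j; omega
      · intro m hm; rw [Finset.mem_range] at hm; show n - (n - m) = m; omega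
      · intro j hj; rfl
    rw [step3] at step1
    have step4 : ∑ m ∈ Finset.range n,
        θ * ((n.factorial : ℝ) / (m.factorial : ℝ)) * (ascPochhammer ℝ m).eval θ
        = (n.factorial : ℝ) * (θ * ∑ m ∈ Finset.range n, (ascPochhammer ℝ m).eval θ / (m.factorial : ℝ)) := by
      rw [Finset.mul_sum, Finset.mul_sum]
      apply Finset.sum_congr rfl
      intros; ring
    rw [step4, hockey] at step1
    have hfn : ((n.factorial : ℕ) : ℝ) ≠ 0 := by positivity
    have : (n:ℝ) * ∑ p : n.Partition, ff θ n p = (n:ℝ) * (ascPochhammer ℝ n).eval θ := by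
      rw [step1]; field_simp
    exact mul_left_cancel₀ (ne_of_gt hnR) this


/-- Summing `n! · θ^{m₁+⋯+mₙ} / (1^{m₁} m₁! ⋯ n^{mₙ} mₙ!)` over all partitions of `n`
(equivalently, over all cycle types of permutations of `n` letters) gives the rising
factorial `θ(θ+1)⋯(θ+n−1)`.  Here, for a partition `p` of `n`, `mᵢ` is the number of
parts of `p` equal to `i`, and the number of parts of `p` is `m₁ + ⋯ + mₙ`. -/
theorem sum_over_cycle_types (n : ℕ) (hn : 1 ≤ n) (θ : ℝ) (hθ : 0 < θ) :
    ∑ p : n.Partition,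
      (n.factorial : ℝ) * θ ^ (Multiset.card p.parts) /
        ∏ i ∈ Finset.Icc 1 n, ((i : ℝ) ^ (p.parts.count i) * ((p.parts.count i).factorial : ℝ))
      = (ascPochhammer ℝ n).eval θ := by
  exact aux_main θ n
end

section
/- Let λ be a partition of n. Then the product over the boxes □ of the Young diagram of λ of (α + c(□))/h(□), where c(□) = j − i is the content of the box in row i and column j and h(□) is the hook length, equals the specialization of the Schur function s_λ in which every Newton power sum p_1, p_2, … is set equal to the complex number α. -/
noncomputable section

/-- Content of a box `(i, j)` (0-indexed): `j - i`. -/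
def content (c : ℕ × ℕ) : ℤ := (c.2 : ℤ) - (c.1 : ℤ)

/-- Hook length of the box `c` of the Young diagram `μ`. -/
def hookLen (μ : YoungDiagram) (c : ℕ × ℕ) : ℕ :=
  μ.rowLen c.1 + μ.colLen c.2 - c.1 - c.2 - 1

/-- The algebra of symmetric functions is `ℂ[p₁, p₂, …]`, realized as the multivariate
polynomial ring where the variable `X r` stands for the Newton power sum `p_{r+1}`.
`hpoly k` is the complete homogeneous symmetric function `h_k`, defined through
Newton's identity `k·h_k = ∑_{r=1}^{k} p_r h_{k−r}`. -/
def hpoly : ℕ → MvPolynomial ℕ ℂ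
  | 0 => 1
  | (k + 1) =>
      (((k : ℂ) + 1)⁻¹) •
        ∑ i ∈ Finset.range (k + 1), MvPolynomial.X i * hpoly (k - i)
  termination_by k => k
  decreasing_by simp_wf; all_goals omega

/-- `h_m` for an integer index, zero for negative `m`. -/
def hpolyZ (m : ℤ) : MvPolynomial ℕ ℂ := if 0 ≤ m then hpoly m.toNat else 0

/-- The Schur function `s_μ ∈ ℂ[p₁, p₂, …]`, via the Jacobi–Trudi determinant
`s_μ = det (h_{μ_i − i + j})`. -/
def schurPoly (μ : YoungDiagram) : MvPolynomial ℕ ℂ :=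
  Matrix.det (Matrix.of fun i j : Fin μ.card =>
    hpolyZ ((μ.rowLen i : ℤ) - (i : ℤ) + (j : ℤ)))

namespace HookAux
open Finset Polynomial

/-! ### Specialization of `hpoly` -/

def Rfac (α : ℂ) (m : ℕ) : ℂ := ∏ t ∈ Finset.range m, (α + t)

lemma Rfac_succ (α : ℂ) (m : ℕ) : Rfac α (m+1) = Rfac α m * (α + m) := by
  simp [Rfac, Finset.prod_range_succ]

lemma sum_Rfac (α : ℂ) : ∀ n : ℕ, α * ∑ j ∈ range n, Rfac α j / (j.factorial : ℂ)
    = n * (Rfac α n / (n.factorial : ℂ))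
  | 0 => by simp
  | (n+1) => by
      rw [Finset.sum_range_succ, mul_add, sum_Rfac α n, Rfac_succ]
      have h1 : ((n.factorial : ℂ)) ≠ 0 := Nat.cast_ne_zero.mpr n.factorial_ne_zero
      have h3 : ((n:ℂ)+1) ≠ 0 := Nat.cast_add_one_ne_zero n
      rw [Nat.factorial_succ]
      push_cast
      field_simp
      ring

lemma hpoly_spec (α : ℂ) : ∀ k, MvPolynomial.aeval (fun _ : ℕ => α) (hpoly k)
    = Rfac α k / (k.factorial : ℂ)
  | 0 => by simp [hpoly, Rfac]
  | (k+1) => by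
      rw [hpoly]
      rw [map_smul, map_sum]
      have : ∀ i ∈ range (k+1), MvPolynomial.aeval (fun _ : ℕ => α)
          (MvPolynomial.X i * hpoly (k - i)) = α * (Rfac α (k-i) / ((k-i).factorial : ℂ)) := by
        intro i _
        rw [map_mul, MvPolynomial.aeval_X, hpoly_spec α (k-i)]
      rw [Finset.sum_congr rfl this]
      have reflect : ∑ i ∈ range (k+1), α * (Rfac α (k-i) / ((k-i).factorial : ℂ))
          = ∑ j ∈ range (k+1), α * (Rfac α j / (j.factorial : ℂ)) := by
        have := Finset.sum_range_reflect (fun j => α * (Rfac α j / (j.factorial : ℂ))) (k+1)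
        simpa using this
      rw [reflect, ← Finset.mul_sum, sum_Rfac α (k+1)]
      have h2 : ((k:ℂ) + 1) ≠ 0 := Nat.cast_add_one_ne_zero k
      rw [smul_eq_mul, Nat.factorial_succ]
      push_cast
      field_simp

/-- value of the specialized `hpolyZ` -/
def hval (α : ℂ) (m : ℤ) : ℂ :=
  if 0 ≤ m then Rfac α m.toNat / ((m.toNat).factorial : ℂ) else 0

lemma hpolyZ_spec (α : ℂ) (m : ℤ) :
    MvPolynomial.aeval (fun _ : ℕ => α) (hpolyZ m) = hval α m := by
  unfold hpolyZ hval
  split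
  · exact hpoly_spec α m.toNat
  · simp

lemma hval_zero (α : ℂ) : hval α 0 = 1 := by simp [hval, Rfac]

lemma hval_neg (α : ℂ) {m : ℤ} (h : m < 0) : hval α m = 0 := by
  simp [hval, not_le.mpr h]

/-! ### Young diagram bookkeeping -/

/-- `ell μ i = λ_i + (r - 1 - i)` where `r` is the number of rows. -/
def ell (μ : YoungDiagram) (i : ℕ) : ℕ := μ.rowLen i + (μ.colLen 0 - 1 - i)

lemma rowLen_eq_zero {μ : YoungDiagram} {i : ℕ} (h : μ.colLen 0 ≤ i) : μ.rowLen i = 0 := by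
  by_contra hne
  have h0 : (i, 0) ∈ μ := YoungDiagram.mem_iff_lt_rowLen.mpr (Nat.pos_of_ne_zero hne)
  have := YoungDiagram.mem_iff_lt_colLen.mp h0
  omega

lemma rowLen_pos {μ : YoungDiagram} {i : ℕ} (h : i < μ.colLen 0) : 0 < μ.rowLen i := by
  have h0 : (i, 0) ∈ μ := YoungDiagram.mem_iff_lt_colLen.mpr h
  exact YoungDiagram.mem_iff_lt_rowLen.mp h0

lemma colLen_le {μ : YoungDiagram} (j : ℕ) : μ.colLen j ≤ μ.colLen 0 :=
  μ.colLen_anti 0 j (Nat.zero_le j)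

lemma colLen_le_card (μ : YoungDiagram) : μ.colLen 0 ≤ μ.card := by
  rw [μ.colLen_eq_card, YoungDiagram.card]
  apply Finset.card_le_card
  intro c hc
  exact (YoungDiagram.mem_col_iff.mp hc).1

lemma ell_cast {μ : YoungDiagram} {i : ℕ} (h : i < μ.colLen 0) :
    (ell μ i : ℤ) = (μ.rowLen i : ℤ) + (μ.colLen 0 : ℤ) - 1 - i := by
  unfold ell
  have : i ≤ μ.colLen 0 - 1 := by omega
  push_cast [Nat.sub_sub, Nat.cast_sub (by omega : 1 + i ≤ μ.colLen 0)]
  ring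

lemma ell_strict {μ : YoungDiagram} {i i' : ℕ} (h : i < i') (h' : i' < μ.colLen 0) :
    ell μ i' < ell μ i := by
  have := μ.rowLen_anti i i' (le_of_lt h)
  unfold ell
  have := rowLen_pos h'
  omega

lemma prod_cells {M : Type*} [CommMonoid M] (μ : YoungDiagram) (f : ℕ × ℕ → M) :
    ∏ c ∈ μ.cells, f c
      = ∏ i ∈ range (μ.colLen 0), ∏ j ∈ range (μ.rowLen i), f (i, j) := by
  have hdecomp : μ.cells = (range (μ.colLen 0)).biUnion (fun i => μ.row i) := by
    ext c
    simp only [Finset.mem_biUnion, Finset.mem_range, YoungDiagram.mem_row_iff,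
      YoungDiagram.mem_cells]
    constructor
    · intro hc
      refine ⟨c.1, ?_, hc, rfl⟩
      have := YoungDiagram.mem_iff_lt_colLen.mp (show (c.1, c.2) ∈ μ from hc)
      exact lt_of_lt_of_le this (colLen_le c.2)
    · rintro ⟨i, _, hc, _⟩; exact hc
  rw [hdecomp, Finset.prod_biUnion]
  · apply Finset.prod_congr rfl
    intro i _
    rw [YoungDiagram.row_eq_prod, Finset.singleton_product, Finset.prod_map]
    rfl
  · intro a _ b _ hab
    simp only [Finset.disjoint_left]
    intro c hca hcb
    exact hab ((YoungDiagram.mem_row_iff.mp hca).2 ▸ (YoungDiagram.mem_row_iff.mp hcb).2 ▸ rfl)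

/-! ### Hook lengths of a row -/

lemma hook_eq {μ : YoungDiagram} {i j : ℕ} (hj : j < μ.rowLen i) (hi : i < μ.colLen 0) :
    hookLen μ (i, j) = ell μ i - (j + (μ.colLen 0 - μ.colLen j)) := by
  have hm : (i, j) ∈ μ := YoungDiagram.mem_iff_lt_rowLen.mpr hj
  have h1 : i < μ.colLen j := YoungDiagram.mem_iff_lt_colLen.mp hm
  have h2 : μ.colLen j ≤ μ.colLen 0 := colLen_le j
  unfold hookLen ell
  simp only
  omega

lemma hook_pos {μ : YoungDiagram} {c : ℕ × ℕ} (hc : c ∈ μ) : 0 < hookLen μ c := by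
  obtain ⟨i, j⟩ := c
  have h1 : j < μ.rowLen i := YoungDiagram.mem_iff_lt_rowLen.mp hc
  have h2 : i < μ.colLen j := YoungDiagram.mem_iff_lt_colLen.mp hc
  unfold hookLen
  simp only
  omega

/-- The hook lengths of row `i`, together with `ell i - ell i'` for `i' > i`,
multiply to `(ell i)!`. -/
lemma hook_row_prod {μ : YoungDiagram} {i : ℕ} (hi : i < μ.colLen 0) :
    (∏ j ∈ range (μ.rowLen i), hookLen μ (i, j))
      * ∏ i' ∈ Ico (i+1) (μ.colLen 0), (ell μ i - ell μ i')
      = (ell μ i).factorial := by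
  classical
  set r := μ.colLen 0 with hr
  set L := ell μ i with hLdef
  have hLval : L = μ.rowLen i + (r - 1 - i) := rfl
  set u : ℕ → ℕ := fun j => j + (r - μ.colLen j) with hu
  have hcol : ∀ j, j < μ.rowLen i → i + 1 ≤ μ.colLen j ∧ μ.colLen j ≤ r := fun j hj =>
    ⟨YoungDiagram.mem_iff_lt_colLen.mp (YoungDiagram.mem_iff_lt_rowLen.mpr hj), colLen_le j⟩
  have hA : ∀ j, j < μ.rowLen i → hookLen μ (i, j) = L - u j := fun j hj => hook_eq hj hi
  have hAlt : ∀ j, j < μ.rowLen i → u j < L := by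
    intro j hj
    have h1 := hcol j hj
    have h2 : i + 1 ≤ r := hi
    simp only [hu, hLval]
    omega
  have hBlt : ∀ i', i + 1 ≤ i' → i' < r → ell μ i' < L := fun i' h1 h2 =>
    ell_strict (by omega) h2
  have humono : ∀ a b, a < b → b < μ.rowLen i → u a < u b := by
    intro a b hab hb
    have h1 := μ.colLen_anti a b (le_of_lt hab)
    have h2 := hcol a (lt_trans hab hb)
    have h3 := hcol b hb
    simp only [hu]
    omega
  set S1 := (range (μ.rowLen i)).image u with hS1
  set S2 := (Ico (i+1) r).image (ell μ) with hS2
  have huinj : Set.InjOn u (range (μ.rowLen i)) := by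
    intro a ha b hb hab
    simp only [coe_range, Set.mem_Iio] at ha hb
    rcases lt_trichotomy a b with h | h | h
    · exact absurd hab (ne_of_lt (humono a b h hb))
    · exact h
    · exact absurd hab.symm (ne_of_lt (humono b a h ha))
  have hellinj : Set.InjOn (ell μ) (Ico (i+1) r) := by
    intro a ha b hb hab
    simp only [coe_Ico, Set.mem_Ico] at ha hb
    rcases lt_trichotomy a b with h | h | h
    · exact absurd hab.symm (ne_of_lt (ell_strict h hb.2))
    · exact h
    · exact absurd hab (ne_of_lt (ell_strict h ha.2))
  have hdisj : Disjoint S1 S2 := by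
    rw [Finset.disjoint_left]
    rintro v hv1 hv2
    obtain ⟨j, hj, rfl⟩ := Finset.mem_image.mp hv1
    obtain ⟨i', hi', heq⟩ := Finset.mem_image.mp hv2
    rw [Finset.mem_range] at hj
    rw [Finset.mem_Ico] at hi'
    have hcj := hcol j hj
    have h2 : i + 1 ≤ r := hi
    have hell' : ell μ i' = μ.rowLen i' + (r - 1 - i') := rfl
    rw [hell'] at heq
    by_cases hcase : j < μ.rowLen i'
    · have h1 : i' + 1 ≤ μ.colLen j :=
        YoungDiagram.mem_iff_lt_colLen.mp (YoungDiagram.mem_iff_lt_rowLen.mpr hcase)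
      simp only [hu] at heq
      omega
    · have h1 : μ.colLen j ≤ i' := by
        by_contra hcon
        exact hcase (YoungDiagram.mem_iff_lt_rowLen.mp
          (YoungDiagram.mem_iff_lt_colLen.mpr (by omega)))
      simp only [hu] at heq
      omega
  have hsub : S1 ∪ S2 ⊆ range L := by
    intro v hv
    rw [Finset.mem_union] at hv
    rw [Finset.mem_range]
    rcases hv with hv | hv
    · obtain ⟨j, hj, rfl⟩ := Finset.mem_image.mp hv
      exact hAlt j (Finset.mem_range.mp hj)
    · obtain ⟨i', hi', rfl⟩ := Finset.mem_image.mp hv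
      rw [Finset.mem_Ico] at hi'
      exact hBlt i' hi'.1 hi'.2
  have hir : i + 1 ≤ r := hi
  have hcard : (range L).card ≤ (S1 ∪ S2).card := by
    rw [Finset.card_union_of_disjoint hdisj,
      Finset.card_image_of_injOn huinj, Finset.card_image_of_injOn hellinj]
    simp only [Finset.card_range, Nat.card_Ico]
    omega
  have hunion : S1 ∪ S2 = range L := Finset.eq_of_subset_of_card_le hsub hcard
  have key : ∏ v ∈ range L, (L - v) = L.factorial := by
    clear * -
    induction L with
    | zero => simp
    | succ n ih =>
        rw [Finset.prod_range_succ' (fun v => n + 1 - v)]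
        simp only [Nat.succ_sub_succ]
        rw [ih, Nat.sub_zero, Nat.factorial_succ, mul_comm]
  rw [← key, ← hunion, Finset.prod_union hdisj,
    Finset.prod_image (fun a ha b hb => huinj ha hb),
    Finset.prod_image (fun a ha b hb => hellinj ha hb)]
  congr 1
  exact Finset.prod_congr rfl fun j hj => hA j (Finset.mem_range.mp hj)

/-! ### Generic (non-integer) specialization point -/

def Good (α : ℂ) : Prop := ∀ m : ℤ, α ≠ (m : ℂ)

lemma Good.add_ne {α : ℂ} (h : Good α) (z : ℤ) : α + (z : ℂ) ≠ 0 := fun h0 =>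
  h (-z) (by push_cast; linear_combination h0)

lemma Good.infinite : {x : ℂ | Good x}.Infinite := by
  apply Set.infinite_of_injective_forall_mem
    (f := fun n : ℕ => (n : ℂ) + 1/2)
  · intro a b hab
    simp only at hab
    have : (a : ℂ) = b := by linear_combination hab
    exact_mod_cast this
  · intro n m heq
    have h2 : ((2*m - 2*n : ℤ) : ℂ) = ((1:ℤ) : ℂ) := by
      push_cast
      linear_combination -2 * heq
    have := Int.cast_injective (α := ℂ) h2
    omega

/-! ### The staged column operations -/

def fall (x : ℂ) (k : ℕ) : ℂ := ∏ t ∈ range k, (x - (t:ℂ))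

lemma fall_eval (x : ℂ) (k : ℕ) : fall x k = (descPochhammer ℂ k).eval x := by
  induction k with
  | zero => simp [fall, descPochhammer_zero]
  | succ n ih => rw [fall, prod_range_succ, ← fall, ih, descPochhammer_succ_eval]

lemma fall_nat (L k : ℕ) : fall (L : ℂ) k = (L.descFactorial k : ℂ) := by
  rw [fall_eval, descPochhammer_eval_eq_descFactorial]

/-- entry of the matrix after `s` stages of column operations -/
def ent (α : ℂ) (r s k : ℕ) (x : ℂ) : ℂ :=
  (∏ m ∈ Icc 1 (min s (r - 1 - k)), (α - (m:ℂ))) * fall x k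
    * ∏ t ∈ Ico (k + 1 + min s (r - 1 - k)) r, (x + α - (t:ℂ))

lemma ent_zero (α : ℂ) (r k : ℕ) (x : ℂ) :
    ent α r 0 k x = fall x k * ∏ t ∈ Ico (k + 1) r, (x + α - (t:ℂ)) := by
  simp [ent]

lemma ent_freeze (α : ℂ) {r s k : ℕ} (h : r - 1 - k ≤ s) (x : ℂ) :
    ent α r (s+1) k x = ent α r s k x := by
  unfold ent
  rw [min_eq_right h, min_eq_right (le_trans h (Nat.le_succ s))]

lemma ent_step (α : ℂ) {r s k : ℕ} (h : k + s + 2 ≤ r) (x : ℂ) :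
    ent α r s k x - ent α r s (k+1) x = ent α r (s+1) k x := by
  unfold ent
  rw [min_eq_left (by omega : s ≤ r - 1 - k), min_eq_left (by omega : s ≤ r - 1 - (k+1)),
    min_eq_left (by omega : s + 1 ≤ r - 1 - k)]
  have hsplit : ∏ t ∈ Ico (k + 1 + s) r, (x + α - (t:ℂ))
      = (x + α - ((k+1+s:ℕ):ℂ)) * ∏ t ∈ Ico (k + 1 + s + 1) r, (x + α - (t:ℂ)) :=
    Finset.prod_eq_prod_Ico_succ_bot (by omega) _
  have hfall : fall x (k+1) = fall x k * (x - (k:ℂ)) := by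
    rw [fall, prod_range_succ]; rfl
  have hIcc : ∏ m ∈ Icc 1 (s+1), (α - (m:ℂ))
      = (∏ m ∈ Icc 1 s, (α - (m:ℂ))) * (α - ((s+1:ℕ):ℂ)) :=
    Finset.prod_Icc_succ_top (by omega) _
  rw [hsplit, hfall, hIcc,
    show k + 1 + 1 + s = k + 1 + s + 1 from by ring,
    show k + 1 + (s + 1) = k + 1 + s + 1 from by ring]
  push_cast
  ring

lemma ent_last (α : ℂ) {r k : ℕ} (h : k < r) (x : ℂ) :
    ent α r (r-1) k x = (∏ m ∈ Icc 1 (r - 1 - k), (α - (m:ℂ))) * fall x k := by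
  unfold ent
  rw [min_eq_right (by omega)]
  rw [show k + 1 + (r - 1 - k) = r by omega, Finset.Ico_self, Finset.prod_empty, mul_one]

/-- one stage of column operations preserves the determinant -/
lemma det_stage (α : ℂ) (r : ℕ) (x : Fin r → ℂ) (s : ℕ) :
    (Matrix.of fun i j : Fin r => ent α r s (r - 1 - (j:ℕ)) (x i)).det
      = (Matrix.of fun i j : Fin r => ent α r (s+1) (r - 1 - (j:ℕ)) (x i)).det := by
  classical
  set M := Matrix.of fun i j : Fin r => ent α r s (r - 1 - (j:ℕ)) (x i) with hM
  set T : Matrix (Fin r) (Fin r) ℂ := Matrix.of (fun j' j : Fin r =>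
    if j' = j then (1:ℂ)
    else if ((j':ℕ) + 1 = (j:ℕ) ∧ s + 1 ≤ (j:ℕ)) then (-1:ℂ) else 0) with hT
  have hTtri : T.BlockTriangular id := by
    intro j' j hj
    have hj2 : j < j' := hj
    simp only [hT, Matrix.of_apply]
    rw [if_neg (by intro h; subst h; exact absurd hj2 (lt_irrefl _)),
      if_neg (by rintro ⟨h1, h2⟩; have := Fin.lt_iff_val_lt_val.mp hj2; omega)]
  have hTdet : T.det = 1 := by
    rw [Matrix.det_of_upperTriangular hTtri]
    apply Finset.prod_eq_one
    intro j _
    simp [hT]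
  have hmul : M * T = Matrix.of fun i j : Fin r => ent α r (s+1) (r - 1 - (j:ℕ)) (x i) := by
    ext i j
    rw [Matrix.mul_apply, Matrix.of_apply]
    by_cases hs : s + 1 ≤ (j:ℕ)
    · have hj1 : 1 ≤ (j:ℕ) := by omega
      have hjr := j.is_lt
      set j0 : Fin r := ⟨(j:ℕ) - 1, by omega⟩ with hj0
      have hj0v : (j0:ℕ) = (j:ℕ) - 1 := rfl
      have hne : j0 ≠ j := by
        intro h
        have : (j0:ℕ) = (j:ℕ) := congrArg Fin.val h
        omega
      have hzero : ∀ j' ∈ (Finset.univ : Finset (Fin r)), j' ∉ ({j0, j} : Finset (Fin r)) →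
          M i j' * T j' j = 0 := by
        intro j' _ hj'
        simp only [Finset.mem_insert, Finset.mem_singleton] at hj'
        push_neg at hj'
        have h1 : j' ≠ j := hj'.2
        have h2 : ¬((j':ℕ) + 1 = (j:ℕ) ∧ s + 1 ≤ (j:ℕ)) := by
          rintro ⟨ha, _⟩
          exact hj'.1 (Fin.ext (by omega))
        simp only [hT, Matrix.of_apply, if_neg h1, if_neg h2, mul_zero]
      rw [← Finset.sum_subset (Finset.subset_univ ({j0, j} : Finset (Fin r))) hzero,
        Finset.sum_pair hne]
      have hTj0 : T j0 j = -1 := by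
        simp only [hT, Matrix.of_apply, if_neg hne]
        rw [if_pos ⟨by omega, hs⟩]
      have hTjj : T j j = 1 := by simp [hT]
      rw [hTj0, hTjj, mul_one, mul_neg_one]
      have hstep := ent_step α (r := r) (s := s) (k := r - 1 - (j:ℕ)) (by omega) (x i)
      have hk1 : r - 1 - ((j0:ℕ)) = r - 1 - (j:ℕ) + 1 := by omega
      simp only [hM, Matrix.of_apply, hk1]
      linear_combination hstep
    · rw [Finset.sum_eq_single j]
      · have hTjj : T j j = 1 := by simp [hT]
        rw [hTjj, mul_one, hM]
        simp only [Matrix.of_apply]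
        rw [ent_freeze α (by omega : r - 1 - (r - 1 - (j:ℕ)) ≤ s)]
      · intro j' _ h1
        have h2 : ¬((j':ℕ) + 1 = (j:ℕ) ∧ s + 1 ≤ (j:ℕ)) := by rintro ⟨_, h⟩; exact hs h
        simp only [hT, Matrix.of_apply, if_neg h1, if_neg h2, mul_zero]
      · intro h; exact absurd (Finset.mem_univ j) h
  rw [← hmul, Matrix.det_mul, hTdet, mul_one]

lemma det_stages (α : ℂ) (r : ℕ) (x : Fin r → ℂ) : ∀ s : ℕ,
    (Matrix.of fun i j : Fin r => ent α r 0 (r - 1 - (j:ℕ)) (x i)).det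
      = (Matrix.of fun i j : Fin r => ent α r s (r - 1 - (j:ℕ)) (x i)).det
  | 0 => rfl
  | (s+1) => by rw [det_stages α r x s, det_stage]

/-! ### The falling-factorial Vandermonde determinant -/

lemma det_fall (r : ℕ) (x : Fin r → ℂ) :
    (Matrix.of fun i j : Fin r => fall (x i) (r - 1 - (j:ℕ))).det
      = ∏ i : Fin r, ∏ j ∈ Ioi i, (x i - x j) := by
  rw [← Matrix.det_submatrix_equiv_self Fin.revPerm]
  have hsub : ((Matrix.of fun i j : Fin r => fall (x i) (r - 1 - (j:ℕ))).submatrix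
        Fin.revPerm Fin.revPerm)
      = Matrix.of fun i j : Fin r => (descPochhammer ℂ (j:ℕ)).eval (x (Fin.rev i)) := by
    ext i j
    simp only [Matrix.submatrix_apply, Matrix.of_apply, Fin.revPerm_apply]
    rw [fall_eval]
    congr 2
    have := j.is_lt
    rw [Fin.val_rev]
    omega
  rw [hsub, ← Matrix.det_eval_matrixOfPolynomials_eq_det_vandermonde (fun i => x (Fin.rev i))
    (fun j => descPochhammer ℂ (j:ℕ)) (fun j => descPochhammer_natDegree (R := ℂ) (n := (j:ℕ)))
    (fun j => monic_descPochhammer _ _), Matrix.det_vandermonde]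
  rw [Finset.prod_sigma', Finset.prod_sigma']
  refine Finset.prod_nbij' (fun p => ⟨p.2.rev, p.1.rev⟩) (fun p => ⟨p.2.rev, p.1.rev⟩)
    ?_ ?_ ?_ ?_ ?_
  · rintro ⟨a, b⟩ hab
    simp only [Finset.mem_sigma, Finset.mem_univ, Finset.mem_Ioi, true_and] at hab ⊢
    exact Fin.rev_lt_rev.mpr hab
  · rintro ⟨a, b⟩ hab
    simp only [Finset.mem_sigma, Finset.mem_univ, Finset.mem_Ioi, true_and] at hab ⊢
    exact Fin.rev_lt_rev.mpr hab
  · rintro ⟨a, b⟩ _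
    simp [Fin.rev_rev]
  · rintro ⟨a, b⟩ _
    simp [Fin.rev_rev]
  · rintro ⟨a, b⟩ _
    simp

/-! ### The entry factorization (generic α) -/

lemma hval_factor {α : ℂ} (hα : Good α) (L k r : ℕ) (hk : k < r) :
    hval α ((L:ℤ) - (k:ℤ))
      = (Rfac α L / ((L.factorial : ℂ) * ∏ s ∈ Ico 1 r, (α + (L:ℂ) - (s:ℂ))))
        * (fall (L:ℂ) k * ∏ t ∈ Ico (k+1) r, ((L:ℂ) + α - (t:ℂ))) := by
  have hD : ∀ a b : ℕ, (∏ s ∈ Ico a b, (α + (L:ℂ) - (s:ℂ))) ≠ 0 := by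
    intro a b
    rw [Finset.prod_ne_zero_iff]
    intro s _
    have h := hα.add_ne ((L:ℤ) - s)
    intro h0
    apply h
    push_cast
    linear_combination h0
  by_cases hLk : k ≤ L
  · have htn : ((L:ℤ) - (k:ℤ)).toNat = L - k := by omega
    rw [hval, if_pos (by omega), htn, fall_nat]
    have hsplit : (∏ s ∈ Ico 1 (k+1), (α + (L:ℂ) - (s:ℂ)))
          * (∏ s ∈ Ico (k+1) r, (α + (L:ℂ) - (s:ℂ)))
        = ∏ s ∈ Ico 1 r, (α + (L:ℂ) - (s:ℂ)) :=
      Finset.prod_Ico_consecutive _ (by omega) (by omega)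
    have hRsplit : Rfac α L = Rfac α (L-k) * ∏ s ∈ Ico 1 (k+1), (α + (L:ℂ) - (s:ℂ)) := by
      have h1 : Rfac α L = Rfac α (L-k) * ∏ u ∈ Ico (L-k) L, (α + (u:ℂ)) := by
        unfold Rfac
        simp only [Finset.range_eq_Ico]
        rw [← Finset.prod_Ico_consecutive (fun t : ℕ => (α + (t:ℂ)))
            (by omega : 0 ≤ L - k) (by omega : L - k ≤ L)]
      have key : ∏ u ∈ Ico (L-k) L, (α + (u:ℂ)) = ∏ s ∈ Ico 1 (k+1), (α + (L:ℂ) - (s:ℂ)) := by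
        refine Finset.prod_nbij' (fun u => L - u) (fun s => L - s) ?_ ?_ ?_ ?_ ?_
        · intro u hu; rw [Finset.mem_Ico] at hu ⊢; omega
        · intro t ht; rw [Finset.mem_Ico] at ht ⊢; omega
        · intro u hu; rw [Finset.mem_Ico] at hu; omega
        · intro t ht; rw [Finset.mem_Ico] at ht; omega
        · intro u hu
          rw [Finset.mem_Ico] at hu
          rw [Nat.cast_sub (by omega : u ≤ L)]
          ring
      rw [h1, key]
    have hdfnat : L.descFactorial k ≠ 0 := by
      rw [Ne, Nat.descFactorial_eq_zero_iff_lt]; omega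
    have hdf : ((L - k).factorial : ℂ) * (L.descFactorial k : ℂ) = (L.factorial : ℂ) := by
      rw [← Nat.cast_mul, Nat.factorial_mul_descFactorial hLk]
    have hf1 : (((L-k).factorial : ℕ) : ℂ) ≠ 0 := Nat.cast_ne_zero.mpr (Nat.factorial_ne_zero _)
    have hf2 : ((L.factorial : ℕ) : ℂ) ≠ 0 := Nat.cast_ne_zero.mpr (Nat.factorial_ne_zero _)
    have hdfne : (L.descFactorial k : ℂ) ≠ 0 := Nat.cast_ne_zero.mpr hdfnat
    have hcomm : ∏ t ∈ Ico (k+1) r, ((L:ℂ) + α - (t:ℂ))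
        = ∏ t ∈ Ico (k+1) r, (α + (L:ℂ) - (t:ℂ)) :=
      Finset.prod_congr rfl fun t _ => by ring
    rw [hcomm, ← hsplit, hRsplit, eq_comm, div_mul_eq_mul_div, div_eq_div_iff
      (mul_ne_zero hf2 (mul_ne_zero (hD 1 (k+1)) (hD (k+1) r))) hf1]
    linear_combination Rfac α (L - k) * (∏ s ∈ Ico 1 (k+1), (α + (L:ℂ) - (s:ℂ)))
      * (∏ s ∈ Ico (k+1) r, (α + (L:ℂ) - (s:ℂ))) * hdf
  · rw [hval_neg α (by omega), fall_nat,
      Nat.descFactorial_eq_zero_iff_lt.mpr (by omega)]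
    simp

/-! ### The per-row linear factor identity -/

lemma row_linear {α : ℂ} (μ : YoungDiagram) {i : ℕ} (hi : i < μ.colLen 0) :
    (∏ j ∈ range (μ.rowLen i), (α + (j:ℂ) - (i:ℂ)))
        * ∏ s ∈ Ico 1 (μ.colLen 0), (α + (ell μ i : ℂ) - (s:ℂ))
      = Rfac α (ell μ i) * ∏ m ∈ Icc 1 i, (α - (m:ℂ)) := by
  have hir : i + 1 ≤ μ.colLen 0 := hi
  set r := μ.colLen 0 with hrdef
  set lam := μ.rowLen i with hlamdef
  set L := ell μ i with hLdef
  have hLZ : (L:ℤ) = (lam:ℤ) + (r:ℤ) - 1 - (i:ℤ) := ell_cast hi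
  set G : ℤ → ℂ := fun t => α + (t:ℂ) with hG
  have e1 : ∏ j ∈ range lam, (α + (j:ℂ) - (i:ℂ))
      = ∏ t ∈ Finset.Ico (-(i:ℤ)) ((lam:ℤ) - (i:ℤ)), G t := by
    refine Finset.prod_nbij' (fun j => (j:ℤ) - (i:ℤ)) (fun t => (t + (i:ℤ)).toNat) ?_ ?_ ?_ ?_ ?_
    · intro j hj; rw [Finset.mem_range] at hj; rw [Finset.mem_Ico]; omega
    · intro t ht; rw [Finset.mem_Ico] at ht; rw [Finset.mem_range]; omega
    · intro j hj; rw [Finset.mem_range] at hj; omega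
    · intro t ht; rw [Finset.mem_Ico] at ht; omega
    · intro j hj; simp only [hG, Int.cast_sub, Int.cast_neg, Int.cast_natCast]; try push_cast; try ring
  have e2 : ∏ s ∈ Ico 1 r, (α + (L:ℂ) - (s:ℂ))
      = ∏ t ∈ Finset.Ico ((lam:ℤ) - (i:ℤ)) (L:ℤ), G t := by
    refine Finset.prod_nbij' (fun s => (L:ℤ) - (s:ℤ)) (fun t => ((L:ℤ) - t).toNat) ?_ ?_ ?_ ?_ ?_
    · intro s hs; rw [Finset.mem_Ico] at hs; rw [Finset.mem_Ico]; omega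
    · intro t ht; rw [Finset.mem_Ico] at ht; rw [Finset.mem_Ico]; omega
    · intro s hs; rw [Finset.mem_Ico] at hs; omega
    · intro t ht; rw [Finset.mem_Ico] at ht; omega
    · intro s hs; simp only [hG, Int.cast_sub, Int.cast_neg, Int.cast_natCast]; try push_cast; try ring
  have e3 : Rfac α L = ∏ t ∈ Finset.Ico (0:ℤ) (L:ℤ), G t := by
    unfold Rfac
    refine Finset.prod_nbij' (fun j => (j:ℤ)) (fun t => t.toNat) ?_ ?_ ?_ ?_ ?_
    · intro j hj; rw [Finset.mem_range] at hj; rw [Finset.mem_Ico]; omega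
    · intro t ht; rw [Finset.mem_Ico] at ht; rw [Finset.mem_range]; omega
    · intro j hj; omega
    · intro t ht; rw [Finset.mem_Ico] at ht; omega
    · intro j hj; simp only [hG, Int.cast_sub, Int.cast_neg, Int.cast_natCast]; try push_cast; try ring
  have e4 : ∏ m ∈ Icc 1 i, (α - (m:ℂ)) = ∏ t ∈ Finset.Ico (-(i:ℤ)) (0:ℤ), G t := by
    refine Finset.prod_nbij' (fun m => -(m:ℤ)) (fun t => (-t).toNat) ?_ ?_ ?_ ?_ ?_
    · intro m hm; rw [Finset.mem_Icc] at hm; rw [Finset.mem_Ico]; omega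
    · intro t ht; rw [Finset.mem_Ico] at ht; rw [Finset.mem_Icc]; omega
    · intro m hm; rw [Finset.mem_Icc] at hm; omega
    · intro t ht; rw [Finset.mem_Ico] at ht; omega
    · intro m hm; simp only [hG, Int.cast_sub, Int.cast_neg, Int.cast_natCast]; try push_cast; try ring
  rw [e1, e2, e3, e4,
    ← Finset.prod_union (Finset.Ico_disjoint_Ico_consecutive _ _ _),
    Finset.Ico_union_Ico_eq_Ico (by omega) (by omega),
    mul_comm (∏ t ∈ Finset.Ico (0:ℤ) (L:ℤ), G t) _,
    ← Finset.prod_union (Finset.Ico_disjoint_Ico_consecutive _ _ _),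
    Finset.Ico_union_Ico_eq_Ico (by omega) (by omega)]

/-! ### Reduction of the Jacobi–Trudi determinant to `colLen 0` rows -/

lemma schur_reduce (μ : YoungDiagram) (α : ℂ) :
    MvPolynomial.aeval (fun _ : ℕ => α) (schurPoly μ)
      = (Matrix.of fun i j : Fin (μ.colLen 0) =>
          hval α ((μ.rowLen i : ℤ) - (i : ℤ) + (j : ℤ))).det := by
  classical
  have hrN : μ.colLen 0 ≤ μ.card := colLen_le_card μ
  set r := μ.colLen 0 with hrdef
  set N := μ.card with hNdef
  have hmapdet : MvPolynomial.aeval (fun _ : ℕ => α) (schurPoly μ)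
      = (Matrix.of fun i j : Fin N =>
          hval α ((μ.rowLen i : ℤ) - (i : ℤ) + (j : ℤ))).det := by
    rw [schurPoly]
    have h1 := RingHom.map_det ((MvPolynomial.aeval (fun _ : ℕ => α)).toRingHom)
      (Matrix.of fun i j : Fin N => hpolyZ ((μ.rowLen i : ℤ) - (i : ℤ) + (j : ℤ)))
    simp only [AlgHom.toRingHom_eq_coe, RingHom.coe_coe] at h1
    rw [h1]
    congr 1
    ext i j
    simp only [Matrix.map_apply, Matrix.of_apply]
    exact hpolyZ_spec α _
  rw [hmapdet]
  set e : Fin r ⊕ Fin (N - r) ≃ Fin N :=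
    finSumFinEquiv.trans (finCongr (Nat.add_sub_cancel' hrN)) with he
  have he1 : ∀ a : Fin r, ((e (Sum.inl a)) : ℕ) = (a : ℕ) := by
    intro a
    simp [he, finCongr_apply]
  have he2 : ∀ b : Fin (N - r), ((e (Sum.inr b)) : ℕ) = r + (b : ℕ) := by
    intro b
    simp [he, finCongr_apply]
  rw [← Matrix.det_submatrix_equiv_self e]
  have hblocks : (Matrix.of fun i j : Fin N =>
        hval α ((μ.rowLen i : ℤ) - (i : ℤ) + (j : ℤ))).submatrix e e
      = Matrix.fromBlocks
          (Matrix.of fun i j : Fin r => hval α ((μ.rowLen i : ℤ) - (i : ℤ) + (j : ℤ)))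
          (Matrix.of fun (i : Fin r) (b : Fin (N-r)) =>
            hval α ((μ.rowLen i : ℤ) - (i : ℤ) + ((r:ℤ) + (b : ℤ))))
          0
          (Matrix.of fun (a b : Fin (N-r)) => hval α ((b:ℤ) - (a:ℤ))) := by
    ext iv jv
    cases iv with
    | inl i =>
        cases jv with
        | inl j =>
            simp only [Matrix.submatrix_apply, Matrix.fromBlocks_apply₁₁, Matrix.of_apply,
              he1]
        | inr b =>
            simp only [Matrix.submatrix_apply, Matrix.fromBlocks_apply₁₂, Matrix.of_apply,
              he1, he2]
            try congr 1
            try push_cast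
            try ring
    | inr a =>
        cases jv with
        | inl j =>
            simp only [Matrix.submatrix_apply, Matrix.fromBlocks_apply₂₁, Matrix.of_apply,
              he1, he2, Matrix.zero_apply]
            have hz : μ.rowLen (r + (a:ℕ)) = 0 := rowLen_eq_zero (by omega)
            rw [hz]
            exact hval_neg α (by
              have := j.is_lt
              push_cast
              omega)
        | inr b =>
            simp only [Matrix.submatrix_apply, Matrix.fromBlocks_apply₂₂, Matrix.of_apply,
              he2]
            have hz : μ.rowLen (r + (a:ℕ)) = 0 := rowLen_eq_zero (by omega)
            rw [hz]
            congr 1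
            push_cast
            ring
  rw [hblocks, Matrix.det_fromBlocks_zero₂₁]
  have htri : (Matrix.of fun (a b : Fin (N-r)) => hval α ((b:ℤ) - (a:ℤ))).BlockTriangular id := by
    intro a b hba
    have hba2 : b < a := hba
    exact hval_neg α (by
      have := Fin.lt_iff_val_lt_val.mp hba2
      push_cast
      omega)
  have hD : (Matrix.of fun (a b : Fin (N-r)) => hval α ((b:ℤ) - (a:ℤ))).det = 1 := by
    rw [Matrix.det_of_upperTriangular htri]
    apply Finset.prod_eq_one
    intro a _
    simp only [Matrix.of_apply, sub_self, hval_zero]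
  rw [hD, mul_one]

/-! ### The main computation for generic α -/

lemma main_good (μ : YoungDiagram) {α : ℂ} (hα : Good α) :
    MvPolynomial.aeval (fun _ : ℕ => α) (schurPoly μ)
      = ∏ c ∈ μ.cells, (α + (content c : ℂ)) / (hookLen μ c : ℂ) := by
  classical
  set r := μ.colLen 0 with hrdef
  rw [schur_reduce]
  set x : ℕ → ℂ := fun i => ((ell μ i : ℕ) : ℂ) with hx
  set cf : ℕ → ℂ := fun i => Rfac α (ell μ i)
      / (((ell μ i).factorial : ℂ) * ∏ s ∈ Ico 1 r, (α + x i - (s:ℂ))) with hcf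
  have hDne : ∀ i : ℕ, (∏ s ∈ Ico 1 r, (α + x i - (s:ℂ))) ≠ 0 := by
    intro i
    rw [Finset.prod_ne_zero_iff]
    intro s _ h0
    apply hα.add_ne ((ell μ i : ℤ) - (s:ℤ))
    push_cast
    simp only [hx] at h0
    push_cast at h0
    linear_combination h0
  have hfacne : ∀ i : ℕ, (((ell μ i).factorial : ℕ) : ℂ) ≠ 0 :=
    fun i => Nat.cast_ne_zero.mpr (Nat.factorial_ne_zero _)
  -- Step 1: entry factorization
  have hent : ∀ i j : Fin r, hval α ((μ.rowLen i : ℤ) - (i:ℤ) + (j:ℤ))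
      = cf (i:ℕ) * ent α r 0 (r - 1 - (j:ℕ)) (x (i:ℕ)) := by
    intro i j
    have hi := i.is_lt
    have hj := j.is_lt
    have hLZ : ((ell μ (i:ℕ) : ℕ) : ℤ) = (μ.rowLen i : ℤ) + (r:ℤ) - 1 - (i:ℤ) :=
      ell_cast hi
    have harg : (μ.rowLen i : ℤ) - (i:ℤ) + (j:ℤ)
        = ((ell μ (i:ℕ) : ℕ) : ℤ) - ((r - 1 - (j:ℕ) : ℕ) : ℤ) := by
      have h2 : ((r - 1 - (j:ℕ) : ℕ) : ℤ) = (r:ℤ) - 1 - (j:ℤ) := by push_cast; omega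
      omega
    rw [harg, hval_factor hα (ell μ (i:ℕ)) (r - 1 - (j:ℕ)) r (by omega), ent_zero]
    try simp only [hcf, hx]
  have hM : (Matrix.of fun i j : Fin r => hval α ((μ.rowLen i : ℤ) - (i:ℤ) + (j:ℤ)))
      = Matrix.of fun i j : Fin r => cf (i:ℕ) * (Matrix.of fun i j : Fin r =>
          ent α r 0 (r - 1 - (j:ℕ)) (x (i:ℕ))) i j := by
    ext i j
    exact hent i j
  rw [hM, Matrix.det_mul_column, det_stages α r (fun i : Fin r => x (i:ℕ)) (r-1)]
  have hlast : (Matrix.of fun i j : Fin r => ent α r (r-1) (r - 1 - (j:ℕ)) (x (i:ℕ)))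
      = Matrix.of fun i j : Fin r => (∏ m ∈ Icc 1 (j:ℕ), (α - (m:ℂ)))
          * (Matrix.of fun i j : Fin r => fall (x (i:ℕ)) (r - 1 - (j:ℕ))) i j := by
    ext i j
    simp only [Matrix.of_apply]
    rw [ent_last α (by omega : r - 1 - (j:ℕ) < r),
      show r - 1 - (r - 1 - (j:ℕ)) = (j:ℕ) from by have := j.is_lt; omega]
  rw [hlast, Matrix.det_mul_row, det_fall]
  -- Step 2: RHS transformation
  have hRHS : ∏ c ∈ μ.cells, (α + (content c : ℂ)) / (hookLen μ c : ℂ)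
      = ∏ i ∈ range r, ((∏ j ∈ range (μ.rowLen i), (α + (j:ℂ) - (i:ℂ)))
          * (∏ i' ∈ Ico (i+1) r, (x i - x i')) / (((ell μ i).factorial : ℕ) : ℂ)) := by
    rw [prod_cells μ (fun c => (α + (content c : ℂ)) / (hookLen μ c : ℂ))]
    apply Finset.prod_congr rfl
    intro i hi
    rw [Finset.mem_range] at hi
    rw [Finset.prod_div_distrib]
    have hnum : ∏ j ∈ range (μ.rowLen i), (α + (content (i,j) : ℂ))
        = ∏ j ∈ range (μ.rowLen i), (α + (j:ℂ) - (i:ℂ)) := by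
      apply Finset.prod_congr rfl
      intro j _
      simp only [_root_.content]
      push_cast
      ring
    have hden : (((ell μ i).factorial : ℕ) : ℂ)
        = (∏ j ∈ range (μ.rowLen i), ((hookLen μ (i,j) : ℕ) : ℂ))
          * ∏ i' ∈ Ico (i+1) r, (x i - x i') := by
      rw [← hook_row_prod hi]
      push_cast
      congr 1
      apply Finset.prod_congr rfl
      intro i' hi'
      rw [Finset.mem_Ico] at hi'
      have hlt : ell μ i' < ell μ i := ell_strict (by omega) hi'.2
      simp only [hx]
      rw [Nat.cast_sub (le_of_lt hlt)]
    have hVne : (∏ i' ∈ Ico (i+1) r, (x i - x i')) ≠ 0 := by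
      rw [Finset.prod_ne_zero_iff]
      intro i' hi'
      rw [Finset.mem_Ico] at hi'
      have hlt : ell μ i' < ell μ i := ell_strict (by omega) hi'.2
      simp only [hx]
      rw [sub_ne_zero]
      exact_mod_cast Nat.ne_of_gt hlt
    have hHne : (∏ j ∈ range (μ.rowLen i), ((hookLen μ (i,j) : ℕ) : ℂ)) ≠ 0 := by
      rw [Finset.prod_ne_zero_iff]
      intro j hj
      rw [Finset.mem_range] at hj
      have := hook_pos (μ := μ) (c := (i,j)) (YoungDiagram.mem_iff_lt_rowLen.mpr hj)
      exact Nat.cast_ne_zero.mpr (by omega)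
    rw [hnum, div_eq_div_iff hHne (hfacne i)]
    linear_combination (∏ j ∈ range (μ.rowLen i), (α + (j:ℂ) - (i:ℂ))) * hden
  rw [hRHS]
  -- Step 3: convert Fin products to range products
  rw [Fin.prod_univ_eq_prod_range (fun i => cf i) r,
    Fin.prod_univ_eq_prod_range (fun j => ∏ m ∈ Icc 1 j, (α - (m:ℂ))) r]
  have hIoi : ∏ i : Fin r, ∏ j ∈ Ioi i, (x (i:ℕ) - x (j:ℕ))
      = ∏ i ∈ range r, ∏ i' ∈ Ico (i+1) r, (x i - x i') := by
    rw [← Fin.prod_univ_eq_prod_range (fun i => ∏ i' ∈ Ico (i+1) r, (x i - x i')) r]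
    apply Finset.prod_congr rfl
    intro i _
    apply Finset.prod_bij (fun (j : Fin r) (_ : j ∈ Ioi i) => (j:ℕ))
    · intro j hj
      rw [Finset.mem_Ioi] at hj
      rw [Finset.mem_Ico]
      exact ⟨Fin.lt_iff_val_lt_val.mp hj, j.is_lt⟩
    · intro a ha b hb hab
      exact Fin.ext hab
    · intro j hj
      rw [Finset.mem_Ico] at hj
      exact ⟨⟨j, hj.2⟩, Finset.mem_Ioi.mpr (Fin.lt_iff_val_lt_val.mpr hj.1), rfl⟩
    · intro j _
      rfl
  rw [hIoi]
  -- Step 4: per-row identity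
  rw [← Finset.prod_mul_distrib, ← Finset.prod_mul_distrib]
  apply Finset.prod_congr rfl
  intro i hi
  rw [Finset.mem_range] at hi
  have hrow := row_linear (α := α) μ hi
  rw [← hrdef] at hrow
  have hD := hDne i
  have hL := hfacne i
  simp only [hcf, hx] at hD ⊢
  rw [div_mul_eq_mul_div, div_eq_div_iff (mul_ne_zero hL hD) hL]
  linear_combination
    (-((∏ i' ∈ Ico (i+1) r, (((ell μ i : ℕ):ℂ) - ((ell μ i' : ℕ):ℂ)))
      * (((ell μ i).factorial : ℂ)))) * hrow

end HookAux

/-- Specializing every Newton power sum `p₁, p₂, …` to the complex number `α` in the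
Schur function `s_μ` yields the hook–content product `∏_{□∈μ} (α + c(□))/h(□)`. -/
theorem schur_specialization_hook_content (μ : YoungDiagram) (α : ℂ) :
    MvPolynomial.aeval (fun _ : ℕ => α) (schurPoly μ)
      = ∏ c ∈ μ.cells, (α + content c) / (hookLen μ c : ℂ) := by
  classical
  set SP : Polynomial ℂ :=
    MvPolynomial.aeval (fun _ : ℕ => (Polynomial.X : Polynomial ℂ)) (schurPoly μ) with hSP
  set HP : Polynomial ℂ := ∏ c ∈ μ.cells,
    (Polynomial.C ((hookLen μ c : ℂ)⁻¹)
      * (Polynomial.X + Polynomial.C ((content c : ℤ) : ℂ))) with hHP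
  have hevalSP : ∀ β : ℂ, Polynomial.eval β SP
      = MvPolynomial.aeval (fun _ : ℕ => β) (schurPoly μ) := by
    intro β
    have hcomp : ((Polynomial.aeval β : Polynomial ℂ →ₐ[ℂ] ℂ).comp
          (MvPolynomial.aeval (fun _ : ℕ => (Polynomial.X : Polynomial ℂ))))
        = MvPolynomial.aeval (fun _ : ℕ => β) := by
      apply MvPolynomial.algHom_ext
      intro i
      simp
    have := congrArg (fun ψ => ψ (schurPoly μ)) hcomp
    simp only [AlgHom.comp_apply] at this
    rw [hSP, ← Polynomial.coe_aeval_eq_eval]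
    exact this
  have hevalHP : ∀ β : ℂ, Polynomial.eval β HP
      = ∏ c ∈ μ.cells, (β + (content c : ℂ)) / (hookLen μ c : ℂ) := by
    intro β
    rw [hHP, Polynomial.eval_prod]
    apply Finset.prod_congr rfl
    intro c _
    simp only [Polynomial.eval_mul, Polynomial.eval_C, Polynomial.eval_add, Polynomial.eval_X]
    rw [div_eq_mul_inv, mul_comm]
  have key : SP = HP := by
    apply Polynomial.eq_of_infinite_eval_eq
    apply Set.Infinite.mono _ HookAux.Good.infinite
    intro β hβ
    simp only [Set.mem_setOf_eq]
    rw [hevalSP, hevalHP]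
    exact HookAux.main_good μ hβ
  rw [← hevalSP α, key, hevalHP]

end
end

section
/- Let G be a compact group with normalized Haar measure μ_G and let z: G → C∖{0} be a continuous class function. Equip the wreath product S_n(G) = G^n ⋊ S_n with the product measure μ_{S_n(G)} of Haar measures and the uniform measure on S_n. For x = ((g_1,…,g_n), s) define the weight w(x) = ∏ over cycles (i_1…i_r) of s of |z(g_{i_r}⋯g_{i_1})|². Then ∫_{S_n(G)} n! · w(x)/(I)_n dμ_{S_n(G)}(x) = 1, where I = ∫_G |z(g)|² dμ_G(g). That is, the Ewens measure on S_n(G) is a probability measure. -/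
open scoped Classical
open MeasureTheory

noncomputable section

/-- Ordered product of `g` along the cycle of `s` containing `i`:
`g_{i_r} ⋯ g_{i_2} g_{i_1}` for the cycle `(i_1 i_2 … i_r)` with `i_1 = i`, `i_2 = s i`, …. -/
def cycleProd {M : Type*} [Monoid M] {n : ℕ} (s : Equiv.Perm (Fin n)) (g : Fin n → M)
    (i : Fin n) : M :=
  (((List.range (Function.minimalPeriod s i)).map (fun k => g ((s ^ k) i))).reverse).prod

/-- Canonical representatives (minimal elements) of the cycles of `s`. -/
def cycleReps {n : ℕ} (s : Equiv.Perm (Fin n)) : Finset (Fin n) :=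
  Finset.univ.filter (fun i => ∀ j, s.SameCycle i j → i ≤ j)

namespace WreathAux

set_option linter.unusedSectionVars false

open Equiv Equiv.Perm

lemma mem_cycleReps_iff {s : Perm (Fin n)} {i : Fin n} :
    i ∈ cycleReps s ↔ ∀ j, s.SameCycle i j → i ≤ j := by
  simp [cycleReps]

lemma sameCycle_of_pow {s : Perm (Fin n)} {i j : Fin n} (k : ℕ) (h : (s ^ k) i = j) :
    s.SameCycle i j := ⟨(k : ℤ), by rw [zpow_natCast]; exact h⟩

lemma minimalPeriod_pos (s : Perm (Fin n)) (i : Fin n) :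
    0 < Function.minimalPeriod s i := by
  apply Function.IsPeriodicPt.minimalPeriod_pos (orderOf_pos s)
  show (⇑s)^[orderOf s] i = i
  rw [← Equiv.Perm.coe_pow, pow_orderOf_eq_one]
  rfl

lemma exists_pow_lt_minimalPeriod {s : Perm (Fin n)} {i j : Fin n} (h : s.SameCycle i j) :
    ∃ k < Function.minimalPeriod s i, (s ^ k) i = j := by
  obtain ⟨k, -, hk⟩ := h.exists_pow_eq'
  refine ⟨k % Function.minimalPeriod s i, Nat.mod_lt _ (minimalPeriod_pos s i), ?_⟩
  rw [← hk]
  show (⇑(s ^ _)) i = (⇑(s ^ k)) i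
  rw [Equiv.Perm.coe_pow, Equiv.Perm.coe_pow]
  exact Function.iterate_mod_minimalPeriod_eq

/-- The minimal representative of the cycle of `i`. -/
def repOf (s : Perm (Fin n)) (i : Fin n) : Fin n :=
  (Finset.univ.filter (fun j => s.SameCycle i j)).min'
    ⟨i, by simp [Equiv.Perm.SameCycle.refl]⟩

lemma sameCycle_repOf (s : Perm (Fin n)) (i : Fin n) : s.SameCycle i (repOf s i) := by
  have := (Finset.univ.filter (fun j => s.SameCycle i j)).min'_mem
    ⟨i, by simp [Equiv.Perm.SameCycle.refl]⟩
  simpa [repOf] using this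

lemma repOf_mem (s : Perm (Fin n)) (i : Fin n) : repOf s i ∈ cycleReps s := by
  rw [mem_cycleReps_iff]
  intro j hj
  apply Finset.min'_le
  simp only [Finset.mem_filter, Finset.mem_univ, true_and]
  exact (sameCycle_repOf s i).trans hj

lemma reps_eq_of_sameCycle {s : Perm (Fin n)} {i j : Fin n} (hi : i ∈ cycleReps s)
    (hj : j ∈ cycleReps s) (h : s.SameCycle i j) : i = j :=
  le_antisymm (mem_cycleReps_iff.mp hi j h) (mem_cycleReps_iff.mp hj i h.symm)

lemma eq_repOf_of_mem {s : Perm (Fin n)} {i j : Fin n} (hj : j ∈ cycleReps s)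
    (h : s.SameCycle i j) : j = repOf s i :=
  reps_eq_of_sameCycle hj (repOf_mem s i) (h.symm.trans (sameCycle_repOf s i))

/-! ### The decomposition `Perm (Fin (n+1)) ≃ Fin (n+1) × Perm (Fin n)` -/

section Decompose

variable (e : Perm (Fin n))

lemma t0_pow (k : ℕ) (i : Fin n) :
    ((decomposeFin.symm ((0 : Fin (n + 1)), e)) ^ k) i.succ = ((e ^ k) i).succ := by
  induction k with
  | zero => simp
  | succ k ih =>
    rw [pow_succ', Equiv.Perm.mul_apply, ih, decomposeFin_symm_apply_succ,
      Equiv.swap_self, pow_succ', Equiv.Perm.mul_apply]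
    rfl

lemma t0_pow_zero (k : ℕ) :
    ((decomposeFin.symm ((0 : Fin (n + 1)), e)) ^ k) 0 = 0 := by
  induction k with
  | zero => simp
  | succ k ih => rw [pow_succ', Equiv.Perm.mul_apply, ih, decomposeFin_symm_apply_zero]

lemma sameCycle_t0_succ_iff (i j : Fin n) :
    (decomposeFin.symm ((0 : Fin (n + 1)), e)).SameCycle i.succ j.succ ↔ e.SameCycle i j := by
  constructor
  · intro h
    obtain ⟨k, -, hk⟩ := h.exists_pow_eq'
    rw [t0_pow] at hk
    exact sameCycle_of_pow k (Fin.succ_injective _ hk)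
  · intro h
    obtain ⟨k, -, hk⟩ := h.exists_pow_eq'
    exact sameCycle_of_pow k (by rw [t0_pow, hk])

lemma not_sameCycle_t0_succ_zero (i : Fin n) :
    ¬ (decomposeFin.symm ((0 : Fin (n + 1)), e)).SameCycle i.succ 0 := by
  intro h
  obtain ⟨k, -, hk⟩ := h.exists_pow_eq'
  rw [t0_pow] at hk
  exact Fin.succ_ne_zero _ hk

lemma cycleReps_t0 :
    cycleReps (decomposeFin.symm ((0 : Fin (n + 1)), e))
      = insert 0 ((cycleReps e).image Fin.succ) := by
  ext a
  cases a using Fin.cases with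
  | zero => simp [mem_cycleReps_iff, Fin.zero_le]
  | succ i =>
    simp only [Finset.mem_insert, Finset.mem_image]
    constructor
    · intro h
      have h' := mem_cycleReps_iff.mp h
      right
      refine ⟨i, ?_, rfl⟩
      rw [mem_cycleReps_iff]
      intro j hj
      exact Fin.succ_le_succ_iff.mp (h' j.succ ((sameCycle_t0_succ_iff e i j).mpr hj))
    · rintro (h | ⟨b, hb, hbe⟩)
      · exact absurd h (Fin.succ_ne_zero i)
      · obtain rfl : b = i := Fin.succ_injective _ hbe
        rw [mem_cycleReps_iff]
        intro j hj
        cases j using Fin.cases with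
        | zero => exact absurd hj (not_sameCycle_t0_succ_zero e b)
        | succ j =>
          exact Fin.succ_le_succ_iff.mpr
            (mem_cycleReps_iff.mp hb j ((sameCycle_t0_succ_iff e b j).mp hj))

lemma card_t0 :
    (cycleReps (decomposeFin.symm ((0 : Fin (n + 1)), e))).card = (cycleReps e).card + 1 := by
  rw [cycleReps_t0, Finset.card_insert_of_notMem (by simp [Fin.succ_ne_zero]),
    Finset.card_image_of_injective _ (Fin.succ_injective n)]

variable (q : Fin n)

lemma t_succ_apply (x : Fin n) :
    decomposeFin.symm (Fin.succ q, e) x.succ = if e x = q then 0 else (e x).succ := by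
  rw [decomposeFin_symm_apply_succ]
  rcases eq_or_ne (e x) q with h | h
  · rw [if_pos h, h, Equiv.swap_apply_right]
  · rw [if_neg h, Equiv.swap_apply_of_ne_of_ne (Fin.succ_ne_zero _)
      (by simpa [Fin.succ_inj] using h)]

lemma claim1 : ∀ k : ℕ, ∃ m : ℕ,
    ((decomposeFin.symm (Fin.succ q, e)) ^ m) 0 = ((e ^ k) q).succ
  | 0 => ⟨1, by simp⟩
  | (k + 1) => by
    obtain ⟨m, hm⟩ := claim1 k
    rcases eq_or_ne (e ((e ^ k) q)) q with h | h
    · exact ⟨1, by rw [pow_one, decomposeFin_symm_apply_zero, pow_succ',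
        Equiv.Perm.mul_apply, h]⟩
    · exact ⟨m + 1, by rw [pow_succ', Equiv.Perm.mul_apply, hm, t_succ_apply, if_neg h,
        ← Equiv.Perm.mul_apply, ← pow_succ']⟩

lemma claim2 : ∀ k : ℕ,
    ((decomposeFin.symm (Fin.succ q, e)) ^ k) 0 = 0 ∨
      ∃ m : ℕ, ((decomposeFin.symm (Fin.succ q, e)) ^ k) 0 = ((e ^ m) q).succ
  | 0 => Or.inl (by simp)
  | (k + 1) => by
    rcases claim2 k with h | ⟨m, hm⟩
    · exact Or.inr ⟨0, by rw [pow_succ', Equiv.Perm.mul_apply, h,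
        decomposeFin_symm_apply_zero, pow_zero, Equiv.Perm.one_apply]⟩
    · rcases eq_or_ne (e ((e ^ m) q)) q with h | h
      · exact Or.inl (by rw [pow_succ', Equiv.Perm.mul_apply, hm, t_succ_apply, if_pos h])
      · exact Or.inr ⟨m + 1, by rw [pow_succ', Equiv.Perm.mul_apply, hm, t_succ_apply,
          if_neg h, ← Equiv.Perm.mul_apply, ← pow_succ']⟩

lemma sameCycle_t_zero_succ_iff (j : Fin n) :
    (decomposeFin.symm (Fin.succ q, e)).SameCycle 0 j.succ ↔ e.SameCycle q j := by
  constructor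
  · intro h
    obtain ⟨k, -, hk⟩ := h.exists_pow_eq'
    rcases claim2 e q k with h0 | ⟨m, hm⟩
    · rw [h0] at hk
      exact absurd hk.symm (Fin.succ_ne_zero j)
    · rw [hm] at hk
      exact sameCycle_of_pow m (Fin.succ_injective _ hk)
  · intro h
    obtain ⟨k, -, hk⟩ := h.exists_pow_eq'
    obtain ⟨m, hm⟩ := claim1 e q k
    exact sameCycle_of_pow m (by rw [hm, hk])

lemma claim3 : ∀ (k : ℕ) (i : Fin n), ∃ m : ℕ,
    ((decomposeFin.symm (Fin.succ q, e)) ^ m) i.succ = ((e ^ k) i).succ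
  | 0, i => ⟨0, by simp⟩
  | (k + 1), i => by
    obtain ⟨m, hm⟩ := claim3 k i
    rcases eq_or_ne (e ((e ^ k) i)) q with h | h
    · refine ⟨m + 2, ?_⟩
      have h1 : ((decomposeFin.symm (Fin.succ q, e)) ^ (m + 1)) i.succ = 0 := by
        rw [pow_succ', Equiv.Perm.mul_apply, hm, t_succ_apply, if_pos h]
      rw [pow_succ' _ (m + 1), Equiv.Perm.mul_apply, h1, decomposeFin_symm_apply_zero,
        pow_succ', Equiv.Perm.mul_apply, h]
    · exact ⟨m + 1, by rw [pow_succ', Equiv.Perm.mul_apply, hm, t_succ_apply, if_neg h,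
        ← Equiv.Perm.mul_apply, ← pow_succ']⟩

lemma claim4 : ∀ (k : ℕ) (i : Fin n),
    (((decomposeFin.symm (Fin.succ q, e)) ^ k) i.succ = 0 ∧ e.SameCycle i q) ∨
      ∃ m : ℕ, ((decomposeFin.symm (Fin.succ q, e)) ^ k) i.succ = ((e ^ m) i).succ
  | 0, i => Or.inr ⟨0, by simp⟩
  | (k + 1), i => by
    rcases claim4 k i with ⟨h0, hsc⟩ | ⟨m, hm⟩
    · obtain ⟨m', -, hm'⟩ := hsc.exists_pow_eq'
      exact Or.inr ⟨m', by rw [pow_succ', Equiv.Perm.mul_apply, h0,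
        decomposeFin_symm_apply_zero, hm']⟩
    · rcases eq_or_ne (e ((e ^ m) i)) q with h | h
      · refine Or.inl ⟨?_, ?_⟩
        · rw [pow_succ', Equiv.Perm.mul_apply, hm, t_succ_apply, if_pos h]
        · exact sameCycle_of_pow (m + 1) (by rw [pow_succ', Equiv.Perm.mul_apply, h])
      · exact Or.inr ⟨m + 1, by rw [pow_succ', Equiv.Perm.mul_apply, hm, t_succ_apply,
          if_neg h, ← Equiv.Perm.mul_apply, ← pow_succ']⟩

lemma sameCycle_t_succ_iff (i j : Fin n) :
    (decomposeFin.symm (Fin.succ q, e)).SameCycle i.succ j.succ ↔ e.SameCycle i j := by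
  constructor
  · intro h
    obtain ⟨k, -, hk⟩ := h.exists_pow_eq'
    rcases claim4 e q k i with ⟨h0, -⟩ | ⟨m, hm⟩
    · rw [h0] at hk
      exact absurd hk.symm (Fin.succ_ne_zero j)
    · rw [hm] at hk
      exact sameCycle_of_pow m (Fin.succ_injective _ hk)
  · intro h
    obtain ⟨k, -, hk⟩ := h.exists_pow_eq'
    obtain ⟨m, hm⟩ := claim3 e q k i
    exact sameCycle_of_pow m (by rw [hm, hk])

lemma sameCycle_t_succ_zero_iff (i : Fin n) :
    (decomposeFin.symm (Fin.succ q, e)).SameCycle i.succ 0 ↔ e.SameCycle q i :=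
  ⟨fun h => (sameCycle_t_zero_succ_iff e q i).mp h.symm,
    fun h => ((sameCycle_t_zero_succ_iff e q i).mpr h).symm⟩

lemma cycleReps_t :
    cycleReps (decomposeFin.symm (Fin.succ q, e))
      = insert 0 (((cycleReps e).erase (repOf e q)).image Fin.succ) := by
  ext a
  cases a using Fin.cases with
  | zero => simp [mem_cycleReps_iff, Fin.zero_le]
  | succ i =>
    simp only [Finset.mem_insert, Finset.mem_image, Finset.mem_erase]
    constructor
    · intro h
      have h' := mem_cycleReps_iff.mp h
      have hnq : ¬ e.SameCycle q i := by
        intro hq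
        have := h' 0 ((sameCycle_t_succ_zero_iff e q i).mpr hq)
        exact absurd (Fin.le_zero_iff.mp this) (Fin.succ_ne_zero i)
      right
      refine ⟨i, ⟨?_, ?_⟩, rfl⟩
      · intro hEq
        exact hnq (hEq ▸ sameCycle_repOf e q)
      · rw [mem_cycleReps_iff]
        intro j hj
        exact Fin.succ_le_succ_iff.mp (h' j.succ ((sameCycle_t_succ_iff e q i j).mpr hj))
    · rintro (h | ⟨b, ⟨hbne, hb⟩, hbe⟩)
      · exact absurd h (Fin.succ_ne_zero i)
      · obtain rfl : b = i := Fin.succ_injective _ hbe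
        rw [mem_cycleReps_iff]
        intro j hj
        cases j using Fin.cases with
        | zero =>
          exact absurd (eq_repOf_of_mem hb ((sameCycle_t_succ_zero_iff e q b).mp hj)) hbne
        | succ j =>
          exact Fin.succ_le_succ_iff.mpr
            (mem_cycleReps_iff.mp hb j ((sameCycle_t_succ_iff e q b j).mp hj))

lemma card_t :
    (cycleReps (decomposeFin.symm (Fin.succ q, e))).card = (cycleReps e).card := by
  rw [cycleReps_t, Finset.card_insert_of_notMem (by simp [Fin.succ_ne_zero]),
    Finset.card_image_of_injective _ (Fin.succ_injective n),
    Finset.card_erase_of_mem (repOf_mem e q)]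
  have : 1 ≤ (cycleReps e).card := Finset.card_pos.mpr ⟨_, repOf_mem e q⟩
  omega

end Decompose

lemma sum_pow_card_cycleReps (x : ℝ) :
    ∀ n : ℕ, ∑ s : Perm (Fin n), x ^ (cycleReps s).card = (ascPochhammer ℝ n).eval x
  | 0 => by
    have h : ∀ s : Perm (Fin 0), (cycleReps s).card = 0 := fun s => by
      simp [cycleReps]
    simp [h, ascPochhammer_zero]
  | (n + 1) => by
    have ih := sum_pow_card_cycleReps x n
    rw [← Equiv.sum_comp (Equiv.Perm.decomposeFin.symm)
      (fun s : Perm (Fin (n + 1)) => x ^ (cycleReps s).card), Fintype.sum_prod_type,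
      Fin.sum_univ_succ]
    simp only [card_t0, card_t]
    rw [ascPochhammer_succ_right, Polynomial.eval_mul, ← ih]
    simp only [Finset.sum_const, Finset.card_univ, Fintype.card_perm, Polynomial.eval_add,
      Polynomial.eval_X, Polynomial.eval_natCast, pow_succ, Fintype.card_fin, nsmul_eq_mul]
    rw [← Finset.sum_mul]
    ring



section SM

variable {G : Type*} [Group G] [TopologicalSpace G] [IsTopologicalGroup G] [CompactSpace G]

/-- Uniform two-sided modulus of continuity on a compact group. -/
lemma exists_modulus (f : G → ℝ) (hf : Continuous f) {ε : ℝ} (hε : 0 < ε) :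
    ∃ V : Set G, IsOpen V ∧ (1 : G) ∈ V ∧
      ∀ v ∈ V, ∀ s t : G, |f (s * v * t) - f (s * t)| ≤ ε := by
  have hΦc : Continuous fun p : G × G × G => f (p.2.1 * p.1 * p.2.2) := by
    apply hf.comp
    exact (continuous_snd.fst.mul continuous_fst).mul continuous_snd.snd
  set Φ : C(G × G × G, ℝ) := ⟨fun p => f (p.2.1 * p.1 * p.2.2), hΦc⟩ with hΦ
  set Ψ : C(G, C(G × G, ℝ)) := Φ.curry with hΨ
  refine ⟨(fun v => ‖Ψ v - Ψ 1‖) ⁻¹' Set.Iio ε, ?_, ?_, ?_⟩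
  · exact (continuous_norm.comp (map_continuous Ψ |>.sub continuous_const)).isOpen_preimage
      _ isOpen_Iio
  · simpa using hε
  · intro v hv s t
    have h1 : (Ψ v - Ψ 1) (s, t) = f (s * v * t) - f (s * t) := by
      simp [hΨ, hΦ, ContinuousMap.curry_apply]
    have h2 := (Ψ v - Ψ 1).norm_coe_le_norm (s, t)
    rw [h1] at h2
    have : ‖Ψ v - Ψ 1‖ < ε := hv
    calc |f (s * v * t) - f (s * t)| ≤ ‖Ψ v - Ψ 1‖ := h2
      _ ≤ ε := this.le

/-- Bump function supported in a neighborhood of `1`. -/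
lemma exists_bump {V : Set G} (hV : IsOpen V) (h1 : (1 : G) ∈ V) :
    ∃ φ : G → ℝ, Continuous φ ∧ (∀ x, 0 ≤ φ x) ∧ φ 1 = 1 ∧ ∀ x, φ x ≠ 0 → x ∈ V := by
  have hdisj : Disjoint (Vᶜ) (closure {(1 : G)}) := by
    refine Set.disjoint_left.mpr fun y hyc hycl => hyc ?_
    have h2 : (1 : G) ⤳ y := specializes_iff_mem_closure.mpr hycl
    exact (h2.inseparable.mem_open_iff hV).mp h1
  obtain ⟨f, hf0, hf1, hf01⟩ := exists_continuous_zero_one_of_isClosed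
    hV.isClosed_compl isClosed_closure hdisj
  exact ⟨f, f.continuous, fun x => (hf01 x).1, hf1 (subset_closure rfl),
    fun x hx => by_contra fun hxV => hx (hf0 hxV)⟩

/-- Finite partition of unity approximating `f (x * y)` by sums of products. -/
lemma exists_partition (f : G → ℝ) (hf : Continuous f) {ε : ℝ} (hε : 0 < ε) :
    ∃ (T : Finset G) (χ : G → G → ℝ),
      (∀ a, Continuous (χ a)) ∧ (∀ a x, 0 ≤ χ a x) ∧
      (∀ x y : G, |f (x * y) - ∑ a ∈ T, χ a x * f (a * y)| ≤ ε) := by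
  obtain ⟨V, hV, h1V, hmod⟩ := exists_modulus f hf hε
  obtain ⟨φ, hφc, hφ0, hφ1, hφV⟩ := exists_bump hV h1V
  have hcov : (Set.univ : Set G) ⊆ ⋃ a : G, ((fun x => φ (a⁻¹ * x)) ⁻¹' Set.Ioi 0) := by
    intro x _
    refine Set.mem_iUnion.mpr ⟨x, ?_⟩
    simp [hφ1]
  obtain ⟨T, hT⟩ := isCompact_univ.elim_finite_subcover
    (fun a : G => ((fun x => φ (a⁻¹ * x)) ⁻¹' Set.Ioi 0))
    (fun a => (hφc.comp (continuous_const.mul continuous_id)).isOpen_preimage _ isOpen_Ioi) hcov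
  set S : G → ℝ := fun x => ∑ a ∈ T, φ (a⁻¹ * x) with hS
  have hSc : Continuous S := continuous_finset_sum _ fun a _ =>
    hφc.comp (continuous_const.mul continuous_id)
  have hSpos : ∀ x, 0 < S x := by
    intro x
    obtain ⟨a, ha, hax⟩ := Set.mem_iUnion₂.mp (hT (Set.mem_univ x))
    exact Finset.sum_pos' (fun b _ => hφ0 _) ⟨a, ha, hax⟩
  refine ⟨T, fun a x => φ (a⁻¹ * x) / S x, ?_, ?_, ?_⟩
  · exact fun a => (hφc.comp (continuous_const.mul continuous_id)).div hSc
      fun x => (hSpos x).ne'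
  · exact fun a x => div_nonneg (hφ0 _) (hSpos x).le
  · intro x y
    have hsum1 : ∑ a ∈ T, φ (a⁻¹ * x) / S x = 1 := by
      have hSx : ∑ a ∈ T, φ (a⁻¹ * x) = S x := rfl
      rw [← Finset.sum_div, hSx, div_self (hSpos x).ne']
    have hrw : ∑ a ∈ T, (φ (a⁻¹ * x) / S x) * (f (x * y) - f (a * y))
        = f (x * y) - ∑ a ∈ T, (φ (a⁻¹ * x) / S x) * f (a * y) := by
      simp only [mul_sub]
      rw [Finset.sum_sub_distrib, ← Finset.sum_mul, hsum1, one_mul]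
    rw [← hrw]
    calc |∑ a ∈ T, (φ (a⁻¹ * x) / S x) * (f (x * y) - f (a * y))|
        ≤ ∑ a ∈ T, |(φ (a⁻¹ * x) / S x) * (f (x * y) - f (a * y))| :=
          Finset.abs_sum_le_sum_abs _ _
      _ ≤ ∑ a ∈ T, (φ (a⁻¹ * x) / S x) * ε := by
          apply Finset.sum_le_sum
          intro a _
          rw [abs_mul, abs_of_nonneg (div_nonneg (hφ0 _) (hSpos x).le)]
          rcases eq_or_ne (φ (a⁻¹ * x)) 0 with h0 | h0
          · simp [h0]
          · apply mul_le_mul_of_nonneg_left _ (div_nonneg (hφ0 _) (hSpos x).le)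
            have hmem : a⁻¹ * x ∈ V := hφV _ h0
            have := hmod (a⁻¹ * x) hmem a y
            rwa [mul_inv_cancel_left] at this
      _ = ε := by rw [← Finset.sum_mul, hsum1, one_mul]

variable [MeasurableSpace G] [BorelSpace G]

/-- Key measurability lemma: compositions of a continuous function with finite products of
coordinates are strongly measurable for the product σ-algebra. -/
lemma stronglyMeasurable_comp_list_prod {ι : Type*} (L : List ι) :
    ∀ (f : G → ℝ), Continuous f →
      StronglyMeasurable (fun g : ι → G => f ((L.map g).prod)) := by
  induction L with
  | nil => exact fun f hf => by simpa using stronglyMeasurable_const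
  | cons i L ih =>
    intro f hf
    have H : ∀ n : ℕ, ∃ (T : Finset G) (χ : G → G → ℝ),
        (∀ a, Continuous (χ a)) ∧ (∀ a x, 0 ≤ χ a x) ∧
        (∀ x y : G, |f (x * y) - ∑ a ∈ T, χ a x * f (a * y)| ≤ 1 / (n + 1)) :=
      fun n => exists_partition f hf (by positivity)
    choose T χ hχc hχ0 hbound using H
    set A : ℕ → (ι → G) → ℝ := fun n g =>
      ∑ a ∈ T n, χ n a (g i) * f (a * (L.map g).prod) with hA
    have hASM : ∀ n, StronglyMeasurable (A n) := by
      intro n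
      apply Finset.stronglyMeasurable_fun_sum
      intro a _
      exact (((hχc n a).measurable.comp (measurable_pi_apply i)).stronglyMeasurable).mul
        (ih (fun z => f (a * z)) (hf.comp (continuous_const.mul continuous_id)))
    apply stronglyMeasurable_of_tendsto Filter.atTop hASM
    rw [tendsto_pi_nhds]
    intro g
    have hdist : ∀ n, dist (A n g) (f (((i :: L).map g).prod)) ≤ 1 / (n + 1) := by
      intro n
      rw [Real.dist_eq, abs_sub_comm]
      have := hbound n (g i) ((L.map g).prod)
      simpa [List.map_cons, List.prod_cons, hA] using this
    refine tendsto_iff_dist_tendsto_zero.mpr ?_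
    apply squeeze_zero (fun n => dist_nonneg) hdist
    exact tendsto_one_div_add_atTop_nhds_zero_nat

end SM



section MeasureStuff

variable {G : Type*} [Group G] [TopologicalSpace G] [IsTopologicalGroup G] [CompactSpace G]
  [MeasurableSpace G] [BorelSpace G]
  (μ : Measure G) [μ.IsHaarMeasure] [IsProbabilityMeasure μ]

lemma exists_bound (f : G → ℝ) (hf : Continuous f) : ∃ C : ℝ, ∀ x : G, ‖f x‖ ≤ C := by
  obtain ⟨x₀, -, hx₀⟩ := isCompact_univ.exists_isMaxOn ⟨1, Set.mem_univ 1⟩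
    (hf.norm.continuousOn (s := Set.univ))
  exact ⟨‖f x₀‖, fun x => hx₀ (Set.mem_univ x)⟩

lemma integrable_of_continuous (f : G → ℝ) (hf : Continuous f) : Integrable f μ := by
  obtain ⟨C, hC⟩ := exists_bound f hf
  exact ⟨hf.measurable.aestronglyMeasurable,
    HasFiniteIntegral.of_bounded (C := C) (Filter.Eventually.of_forall hC)⟩

lemma revProd_eq (m : ℕ) (h : Fin m → G) :
    (List.ofFn h).reverse.prod = (((List.finRange m).reverse).map h).prod := by
  rw [List.ofFn_eq_map, List.map_reverse]

/-- Single-cycle integral: the ordered product of `m+1` independent Haar-random elements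
is Haar-distributed. -/
lemma integral_revProd (f : G → ℝ) (hf : Continuous f) (m : ℕ) :
    ∫ h : Fin (m + 1) → G, f ((List.ofFn h).reverse.prod) ∂(Measure.pi fun _ => μ)
      = ∫ x, f x ∂μ := by
  have MP := measurePreserving_piFinSuccAbove (fun _ : Fin (m + 1) => μ) 0
  set H : G × (Fin m → G) → ℝ := fun p => f ((List.ofFn p.2).reverse.prod * p.1) with hH
  -- strong measurability of `H`
  set L : List (Fin (m + 1)) := ((List.finRange m).reverse.map Fin.succ) ++ [0] with hL
  set F' : (Fin (m + 1) → G) → ℝ := fun h => f ((L.map h).prod) with hF'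
  have hF'SM : StronglyMeasurable F' := stronglyMeasurable_comp_list_prod L f hf
  have hHeq : ∀ p : G × (Fin m → G),
      F' ((MeasurableEquiv.piFinSuccAbove (fun _ : Fin (m + 1) => G) 0).symm p) = H p := by
    rintro ⟨x, t⟩
    have h1 : ((MeasurableEquiv.piFinSuccAbove (fun _ : Fin (m + 1) => G) 0).symm (x, t))
        = Fin.cons x t := by
      simp [MeasurableEquiv.piFinSuccAbove, Fin.insertNthEquiv, Fin.insertNth_zero]
    rw [h1]
    show f ((L.map (Fin.cons x t)).prod) = f ((List.ofFn t).reverse.prod * x)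
    congr 1
    rw [hL, List.map_append, List.prod_append, List.map_map, revProd_eq]
    simp [Function.comp_def, Fin.cons_succ]
  have hHSM : StronglyMeasurable H := by
    have := hF'SM.comp_measurable
      (MeasurableEquiv.piFinSuccAbove (fun _ : Fin (m + 1) => G) 0).symm.measurable
    have h2 : (F' ∘ (MeasurableEquiv.piFinSuccAbove (fun _ : Fin (m + 1) => G) 0).symm) = H :=
      funext hHeq
    rwa [h2] at this
  obtain ⟨C, hC⟩ := exists_bound f hf
  have hHint : Integrable H (μ.prod (Measure.pi fun _ : Fin m => μ)) :=
    ⟨hHSM.aestronglyMeasurable,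
      HasFiniteIntegral.of_bounded (C := C) (Filter.Eventually.of_forall fun p => hC _)⟩
  have key : ∀ h : Fin (m + 1) → G,
      f ((List.ofFn h).reverse.prod)
        = H ((MeasurableEquiv.piFinSuccAbove (fun _ : Fin (m + 1) => G) 0) h) := by
    intro h
    show f ((List.ofFn h).reverse.prod)
        = f ((List.ofFn fun j => h ((0 : Fin (m + 1)).succAbove j)).reverse.prod * h 0)
    congr 1
    rw [List.ofFn_succ, List.reverse_cons, List.prod_append, List.prod_singleton]
    simp [Fin.zero_succAbove]
  calc ∫ h : Fin (m + 1) → G, f ((List.ofFn h).reverse.prod) ∂(Measure.pi fun _ => μ)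
      = ∫ h : Fin (m + 1) → G,
          H ((MeasurableEquiv.piFinSuccAbove (fun _ : Fin (m + 1) => G) 0) h)
          ∂(Measure.pi fun _ => μ) := by simp_rw [key]
    _ = ∫ p, H p ∂((μ).prod (Measure.pi fun _ : Fin m => μ)) := MP.integral_comp' H
    _ = ∫ t : Fin m → G, ∫ x : G, H (x, t) ∂μ ∂(Measure.pi fun _ : Fin m => μ) :=
        integral_prod_symm H hHint
    _ = ∫ _t : Fin m → G, ∫ x, f x ∂μ ∂(Measure.pi fun _ : Fin m => μ) := by
        congr 1
        funext t
        show ∫ x, f ((List.ofFn t).reverse.prod * x) ∂μ = ∫ x, f x ∂μ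
        exact integral_mul_left_eq_self f _
    _ = ∫ x, f x ∂μ := by simp

/-- The main factorization: the integral of the product over cycles is `I ^ #cycles`. -/
lemma integral_prod_cycleProd (f : G → ℝ) (hf : Continuous f) {n : ℕ} (s : Perm (Fin n)) :
    ∫ g : Fin n → G, ∏ i ∈ cycleReps s, f (cycleProd s g i) ∂(Measure.pi fun _ => μ)
      = (∫ x, f x ∂μ) ^ (cycleReps s).card := by
  classical
  set κ : cycleReps s → Type _ := fun j => Fin (Function.minimalPeriod s (j : Fin n)) with hκ
  set toF : (Σ j : cycleReps s, κ j) → Fin n := fun x => (s ^ ((x.2 : Fin _) : ℕ)) (x.1 : Fin n)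
    with htoF
  have hinj : Function.Injective toF := by
    rintro ⟨⟨j, hj⟩, k⟩ ⟨⟨j', hj'⟩, k'⟩ h
    simp only [htoF] at h
    have hsc : s.SameCycle j j' :=
      (sameCycle_of_pow (k : ℕ) rfl).trans (h ▸ (sameCycle_of_pow (k' : ℕ) rfl).symm)
    obtain rfl : j = j' :=
      le_antisymm (mem_cycleReps_iff.mp hj _ hsc) (mem_cycleReps_iff.mp hj' _ hsc.symm)
    have hk : (⇑s)^[(k : ℕ)] j = (⇑s)^[(k' : ℕ)] j := by
      rw [← Equiv.Perm.coe_pow, ← Equiv.Perm.coe_pow]; exact h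
    have hkk : (k : ℕ) = (k' : ℕ) :=
      Function.iterate_injOn_Iio_minimalPeriod (Set.mem_Iio.mpr k.isLt)
        (Set.mem_Iio.mpr k'.isLt) hk
    have : k = k' := Fin.ext hkk
    subst this
    rfl
  have hsurj : Function.Surjective toF := by
    intro i
    obtain ⟨k, hk, hki⟩ := exists_pow_lt_minimalPeriod (sameCycle_repOf s i).symm
    exact ⟨⟨⟨repOf s i, repOf_mem s i⟩, ⟨k, hk⟩⟩, hki⟩
  set E : (Σ j : cycleReps s, κ j) ≃ Fin n := Equiv.ofBijective toF ⟨hinj, hsurj⟩ with hE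
  have MP1 := measurePreserving_piCongrLeft (fun _ : Fin n => μ) E
  rw [← MP1.integral_comp' (fun g => ∏ i ∈ cycleReps s, f (cycleProd s g i))]
  have hint : ∀ g' : (Σ j : cycleReps s, κ j) → G,
      ∏ i ∈ cycleReps s,
          f (cycleProd s ((MeasurableEquiv.piCongrLeft (fun _ => G) E) g') i)
        = ∏ j : cycleReps s, f ((List.ofFn fun k : κ j => g' ⟨j, k⟩).reverse.prod) := by
    intro g'
    rw [← Finset.prod_coe_sort (cycleReps s)]
    refine Finset.prod_congr rfl fun j _ => ?_
    congr 1
    show (((List.range (Function.minimalPeriod s (j : Fin n))).map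
        (fun k => (MeasurableEquiv.piCongrLeft (fun _ => G) E) g' ((s ^ k) (j : Fin n)))).reverse).prod
      = (List.ofFn fun k : κ j => g' ⟨j, k⟩).reverse.prod
    congr 1
    rw [List.ofFn_eq_map, ← List.map_coe_finRange_eq_range, List.map_map]
    congr 1
    apply List.map_congr_left
    intro k _
    have h1 : (s ^ ((k : Fin _) : ℕ)) (j : Fin n) = E ⟨j, k⟩ := rfl
    show (MeasurableEquiv.piCongrLeft (fun _ => G) E) g' ((s ^ ((k : Fin _) : ℕ)) (j : Fin n))
        = g' ⟨j, k⟩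
    rw [h1, MeasurableEquiv.coe_piCongrLeft, Equiv.piCongrLeft_apply_apply]
  simp_rw [hint]
  -- uncurrying
  set U : (∀ j : cycleReps s, κ j → G) ≃ᵐ ((Σ j : cycleReps s, κ j) → G) :=
    { toEquiv := (Equiv.piCurry fun (j : cycleReps s) (_ : κ j) => G).symm
      measurable_toFun := measurable_pi_lambda _ fun x =>
        (measurable_pi_apply x.2).comp (measurable_pi_apply x.1)
      measurable_invFun := measurable_pi_lambda _ fun j =>
        measurable_pi_lambda _ fun k =>
          (show Measurable fun F : (Σ j : cycleReps s, κ j) → G => F ⟨j, k⟩ from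
            measurable_pi_apply _) } with hU
  have MPU : MeasurePreserving U
      (Measure.pi fun j : cycleReps s => (Measure.pi fun _ : κ j => μ))
      (Measure.pi fun _ : (Σ j : cycleReps s, κ j) => μ) := by
    refine ⟨U.measurable, ?_⟩
    refine (Measure.pi_eq fun S hS => ?_).symm
    rw [MeasurableEquiv.map_apply]
    have hpre : (⇑U) ⁻¹' (Set.univ.pi S)
        = Set.univ.pi fun j : cycleReps s => Set.univ.pi fun k : κ j => S ⟨j, k⟩ := by
      ext h
      simp only [Set.mem_preimage, Set.mem_pi, Set.mem_univ, true_implies, Sigma.forall]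
      rfl
    rw [hpre, Measure.pi_pi]
    simp_rw [Measure.pi_pi]
    rw [← Finset.univ_sigma_univ, Finset.prod_sigma]
  rw [← MPU.integral_comp'
    (fun g' => ∏ j : cycleReps s, f ((List.ofFn fun k : κ j => g' ⟨j, k⟩).reverse.prod))]
  have hcomp : ∀ h : ∀ j : cycleReps s, κ j → G,
      (∏ j : cycleReps s, f ((List.ofFn fun k : κ j => (U h) ⟨j, k⟩).reverse.prod))
        = ∏ j : cycleReps s, f ((List.ofFn (h j)).reverse.prod) := by
    intro h
    rfl
  simp_rw [hcomp]
  letI : MeasureSpace G := ⟨μ⟩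
  have hvol : (Measure.pi fun j : cycleReps s => (Measure.pi fun _ : κ j => μ))
      = (volume : Measure (∀ j : cycleReps s, κ j → G)) := rfl
  rw [hvol]
  rw [show (volume : Measure (∀ j : cycleReps s, κ j → G)) = Measure.pi fun _ => volume from rfl,
    MeasureTheory.integral_fintype_prod_eq_prod (ι := cycleReps s) (E := fun j => κ j → G)
    (f := fun j h => f ((List.ofFn h).reverse.prod))]
  have hone : ∀ j : cycleReps s,
      (∫ h : κ j → G, f ((List.ofFn h).reverse.prod)) = ∫ x, f x ∂μ := by
    intro j
    obtain ⟨m, hm⟩ : ∃ m, Function.minimalPeriod s (j : Fin n) = m + 1 :=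
      ⟨_, (Nat.succ_pred_eq_of_pos (minimalPeriod_pos s (j : Fin n))).symm⟩
    have h2 : (∫ h : κ j → G, f ((List.ofFn h).reverse.prod))
        = ∫ h : Fin (m + 1) → G, f ((List.ofFn h).reverse.prod) ∂(Measure.pi fun _ => μ) := by
      show (∫ h : Fin (Function.minimalPeriod s (j : Fin n)) → G, f ((List.ofFn h).reverse.prod)
          ∂(volume : Measure (Fin (Function.minimalPeriod s (j : Fin n)) → G))) = _
      rw [hm]
      rfl
    rw [h2, integral_revProd μ f hf m]
  rw [Finset.prod_congr rfl fun j _ => hone j, Finset.prod_const, Finset.card_univ,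
    Fintype.card_coe]

end MeasureStuff

end WreathAux

/-- The Ewens measure on the wreath product `S_n(G) = Gⁿ ⋊ S_n` of a compact group `G`
with `S_n` is a probability measure: for a continuous nowhere-zero central function
`z : G → ℂ`, integrating the density `n!·w(x)/(I)_n` (where
`w((g,s)) = ∏_{cycles (i_1…i_r) of s} |z(g_{i_r}⋯g_{i_1})|²` and `I = ∫_G |z|² dμ`)
against the product of the normalized Haar measure on `Gⁿ` and the uniform measure
on `S_n` gives `1`. -/
theorem wreath_ewens_is_probability (G : Type*) [Group G] [TopologicalSpace G]
    [IsTopologicalGroup G] [CompactSpace G] [MeasurableSpace G] [BorelSpace G]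
    (μ : Measure G) [μ.IsHaarMeasure] [IsProbabilityMeasure μ]
    (z : G → ℂ) (hz : Continuous z) (hz0 : ∀ x, z x ≠ 0)
    (hcentral : ∀ a b : G, z (a * b * a⁻¹) = z b) (n : ℕ) (hn : 1 ≤ n) :
    (1 / (n.factorial : ℝ)) *
        ∑ s : Equiv.Perm (Fin n),
          ∫ g : Fin n → G,
            ((n.factorial : ℝ) * ∏ i ∈ cycleReps s, ‖z (cycleProd s g i)‖ ^ 2) /
              (ascPochhammer ℝ n).eval (∫ x, ‖z x‖ ^ 2 ∂μ)
            ∂(Measure.pi fun _ => μ)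
      = 1 := by
  classical
  set f : G → ℝ := fun x => ‖z x‖ ^ 2 with hf
  have hfc : Continuous f := (hz.norm).pow 2
  set I : ℝ := ∫ x, ‖z x‖ ^ 2 ∂μ with hI
  have hIpos : 0 < I := by
    obtain ⟨x₀, -, hx₀⟩ := isCompact_univ.exists_isMinOn ⟨1, Set.mem_univ 1⟩
      (hfc.continuousOn (s := Set.univ))
    have hx₀pos : 0 < f x₀ := by
      have := norm_pos_iff.mpr (hz0 x₀)
      positivity
    have hmono : f x₀ ≤ I := by
      have h1 : ∫ _x : G, f x₀ ∂μ ≤ ∫ x, f x ∂μ :=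
        integral_mono (integrable_const _) (WreathAux.integrable_of_continuous μ f hfc)
          fun x => hx₀ (Set.mem_univ x)
      simpa using h1
    linarith
  set D : ℝ := (ascPochhammer ℝ n).eval I with hD
  have hDpos : 0 < D := ascPochhammer_pos n I hIpos
  have hfact : (0 : ℝ) < (n.factorial : ℝ) := by positivity
  have hsummand : ∀ s : Equiv.Perm (Fin n),
      (∫ g : Fin n → G,
          ((n.factorial : ℝ) * ∏ i ∈ cycleReps s, ‖z (cycleProd s g i)‖ ^ 2) / D
          ∂(Measure.pi fun _ => μ))
        = ((n.factorial : ℝ) / D) * I ^ (cycleReps s).card := by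
    intro s
    have h1 : (fun g : Fin n → G =>
        ((n.factorial : ℝ) * ∏ i ∈ cycleReps s, ‖z (cycleProd s g i)‖ ^ 2) / D)
        = fun g : Fin n → G =>
          ((n.factorial : ℝ) / D) * ∏ i ∈ cycleReps s, f (cycleProd s g i) := by
      funext g
      rw [hf]
      ring
    rw [h1, integral_const_mul, WreathAux.integral_prod_cycleProd μ f hfc s]
  calc (1 / (n.factorial : ℝ)) *
        ∑ s : Equiv.Perm (Fin n),
          ∫ g : Fin n → G,
            ((n.factorial : ℝ) * ∏ i ∈ cycleReps s, ‖z (cycleProd s g i)‖ ^ 2) / D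
            ∂(Measure.pi fun _ => μ)
      = (1 / (n.factorial : ℝ)) *
          ∑ s : Equiv.Perm (Fin n), ((n.factorial : ℝ) / D) * I ^ (cycleReps s).card := by
        rw [Finset.sum_congr rfl fun s _ => hsummand s]
    _ = (1 / (n.factorial : ℝ)) * ((n.factorial : ℝ) / D) *
          ∑ s : Equiv.Perm (Fin n), I ^ (cycleReps s).card := by
        rw [← Finset.mul_sum]; ring
    _ = (1 / (n.factorial : ℝ)) * ((n.factorial : ℝ) / D) * D := by
        rw [WreathAux.sum_pow_card_cycleReps I n]
    _ = 1 := by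
        field_simp


end
end

section
/- Let G be a compact group, ζ an irreducible unitary representation of G on V with character χ, and k ≥ 1. Define the representation ϱ of S_k(G) = G^k ⋊ S_k on V^{⊗k} by ϱ(g,s) = (π(g_1)⊗⋯⊗π(g_k)) ∘ I(s), where I(s) permutes tensor factors by v_1⊗⋯⊗v_k ↦ v_{s^{-1}(1)}⊗⋯⊗v_{s^{-1}(k)}. Then the character of ϱ at ((g_1,…,g_k), s), where s has cycle decomposition (i_1…i_{l_1})(j_1…j_{l_2})⋯(ν_1…ν_{l_p}), equals χ(g_{i_{l_1}}⋯g_{i_2}g_{i_1}) · χ(g_{j_{l_2}}⋯g_{j_2}g_{j_1}) ⋯ χ(g_{ν_{l_p}}⋯g_{ν_2}g_{ν_1}). -/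
open scoped Classical TensorProduct
open PiTensorProduct

noncomputable section

/-- The operator `I(s)` on `V^{⊗k}` permuting the tensor factors:
`v_1 ⊗ ⋯ ⊗ v_k ↦ v_{s⁻¹(1)} ⊗ ⋯ ⊗ v_{s⁻¹(k)}`. -/
def permOp (k : ℕ) (V : Type*) [AddCommGroup V] [Module ℂ V] (s : Equiv.Perm (Fin k)) :
    (⨂[ℂ] _i : Fin k, V) →ₗ[ℂ] ⨂[ℂ] _i : Fin k, V :=
  (PiTensorProduct.reindex ℂ (fun _ : Fin k => V) s).toLinearMap

set_option linter.unusedSectionVars false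

/-! ### Cycle combinatorics -/

section PermFacts

open Function

variable {k : ℕ} (s : Equiv.Perm (Fin k))

lemma wt_periodic (i : Fin k) : i ∈ periodicPts ⇑s :=
  ⟨orderOf s, orderOf_pos s, by
    show (⇑s)^[orderOf s] i = i
    rw [Equiv.Perm.iterate_eq_pow, pow_orderOf_eq_one]; rfl⟩

lemma wt_minper_pos (i : Fin k) : 0 < minimalPeriod ⇑s i :=
  minimalPeriod_pos_of_mem_periodicPts (wt_periodic s i)

instance wtNeZero (s : Equiv.Perm (Fin k)) (i : Fin k) : NeZero (minimalPeriod ⇑s i) :=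
  ⟨(wt_minper_pos s i).ne'⟩

lemma wt_pow_minper (i : Fin k) : (s ^ minimalPeriod ⇑s i) i = i := by
  have := iterate_minimalPeriod (f := ⇑s) (x := i)
  rwa [Equiv.Perm.iterate_eq_pow] at this

lemma wt_sameCycle_iff (r i : Fin k) :
    s.SameCycle r i ↔ ∃ j < minimalPeriod ⇑s r, (s ^ j) r = i := by
  constructor
  · intro h
    obtain ⟨j, _, hj⟩ := h.exists_pow_eq'
    refine ⟨j % minimalPeriod ⇑s r, Nat.mod_lt _ (wt_minper_pos s r), ?_⟩
    have h2 : (⇑s)^[j % minimalPeriod ⇑s r] r = (⇑s)^[j] r := iterate_mod_minimalPeriod_eq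
    rw [Equiv.Perm.iterate_eq_pow, Equiv.Perm.iterate_eq_pow] at h2
    rw [h2]; exact hj
  · rintro ⟨j, _, rfl⟩
    exact ⟨j, by simp⟩

lemma wt_mem_cycleReps {r : Fin k} : r ∈ cycleReps s ↔ ∀ j, s.SameCycle r j → r ≤ j := by
  simp [cycleReps]

/-- The minimal element of the cycle of `i`. -/
def wtRep (i : Fin k) : Fin k :=
  (Finset.univ.filter (fun j => s.SameCycle j i)).min'
    ⟨i, by simp [Equiv.Perm.SameCycle.refl]⟩

lemma wtRep_sameCycle (i : Fin k) : s.SameCycle (wtRep s i) i := by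
  have := Finset.min'_mem (Finset.univ.filter (fun j => s.SameCycle j i))
    ⟨i, by simp [Equiv.Perm.SameCycle.refl]⟩
  simpa [wtRep] using (Finset.mem_filter.mp this).2

lemma wtRep_le {i j : Fin k} (h : s.SameCycle j i) : wtRep s i ≤ j :=
  Finset.min'_le _ _ (by simpa using h)

lemma wtRep_mem (i : Fin k) : wtRep s i ∈ cycleReps s := by
  rw [wt_mem_cycleReps]
  intro j hj
  exact wtRep_le s (hj.symm.trans (wtRep_sameCycle s i))

/-- Points of `Fin k` are classified by their cycle representative together with the
power of `s` needed to reach them from the representative. -/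
def wtEquiv : (Σ r : ↥(cycleReps s), Fin (minimalPeriod ⇑s (r : Fin k))) ≃ Fin k :=
  Equiv.ofBijective (fun p => (s ^ (p.2 : ℕ)) (p.1 : Fin k)) <| by
    constructor
    · rintro ⟨⟨r₁, hr₁⟩, j₁⟩ ⟨⟨r₂, hr₂⟩, j₂⟩ h
      simp only at h
      have h1 : s.SameCycle r₁ ((s ^ (j₁ : ℕ)) r₁) := ⟨((j₁ : ℕ) : ℤ), by rw [zpow_natCast]⟩
      have h2 : s.SameCycle r₂ ((s ^ (j₂ : ℕ)) r₂) := ⟨((j₂ : ℕ) : ℤ), by rw [zpow_natCast]⟩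
      have h2' : s.SameCycle ((s ^ (j₁ : ℕ)) r₁) r₂ := by rw [h]; exact h2.symm
      have hsc : s.SameCycle r₁ r₂ := h1.trans h2'
      have hr : r₁ = r₂ :=
        le_antisymm ((wt_mem_cycleReps s).mp hr₁ _ hsc) ((wt_mem_cycleReps s).mp hr₂ _ hsc.symm)
      subst hr
      have hj : (j₁ : ℕ) = (j₂ : ℕ) := by
        have h' : (⇑s)^[(j₁ : ℕ)] r₁ = (⇑s)^[(j₂ : ℕ)] r₁ := by
          rw [Equiv.Perm.iterate_eq_pow, Equiv.Perm.iterate_eq_pow]; exact h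
        exact iterate_injOn_Iio_minimalPeriod j₁.2 j₂.2 h'
      simp [Fin.ext_iff, hj]
    · intro i
      obtain ⟨j, hj, hji⟩ := (wt_sameCycle_iff s _ i).mp (wtRep_sameCycle s i)
      exact ⟨⟨⟨wtRep s i, wtRep_mem s i⟩, ⟨j, hj⟩⟩, hji⟩

@[simp] lemma wtEquiv_apply (p) : wtEquiv s p = (s ^ ((p.2 : Fin _) : ℕ)) (p.1 : Fin k) := rfl

lemma wt_sub_one_val (n : ℕ) [NeZero n] (j : Fin n) :
    ((j - 1 : Fin n) : ℕ) = if (j : ℕ) = 0 then n - 1 else (j : ℕ) - 1 := by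
  obtain ⟨m, rfl⟩ : ∃ m, n = m + 1 :=
    ⟨n - 1, (Nat.succ_pred_eq_of_pos (Nat.pos_of_ne_zero (NeZero.ne n))).symm⟩
  rw [Fin.sub_def]
  rcases Nat.eq_zero_or_pos m with hm | hm
  · subst hm
    have : (j : ℕ) = 0 := by omega
    simp [this, Fin.val_one']
  · have h1 : ((1 : Fin (m+1)) : ℕ) = 1 := by
      rw [Fin.val_one']
      exact Nat.mod_eq_of_lt (by omega)
    simp only [h1]
    by_cases h0 : (j : ℕ) = 0
    · simp only [h0, if_pos rfl]
      show (m + 1 - 1 + 0) % (m+1) = m + 1 - 1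
      simp [Nat.mod_eq_of_lt]
    · simp only [if_neg h0]
      show (m + 1 - 1 + (j : ℕ)) % (m+1) = (j : ℕ) - 1
      have hj : (j : ℕ) < m + 1 := j.2
      have hrw : m + 1 - 1 + (j : ℕ) = ((j : ℕ) - 1) + (m + 1) := by omega
      rw [hrw, Nat.add_mod_right]
      exact Nat.mod_eq_of_lt (by omega)

lemma wt_inv_pow_apply (r : Fin k) (j : Fin (minimalPeriod ⇑s r)) :
    s⁻¹ ((s ^ (j : ℕ)) r) = (s ^ (((j - 1 : Fin (minimalPeriod ⇑s r))) : ℕ)) r := by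
  rw [wt_sub_one_val]
  by_cases hj : (j : ℕ) = 0
  · rw [hj, if_pos rfl, pow_zero, Equiv.Perm.one_apply]
    have h1 : (s ^ minimalPeriod ⇑s r) r = r := wt_pow_minper s r
    have h2 : minimalPeriod ⇑s r = (minimalPeriod ⇑s r - 1) + 1 :=
      (Nat.succ_pred_eq_of_pos (wt_minper_pos s r)).symm
    rw [h2, pow_succ'] at h1
    conv_lhs => rw [← h1]
    simp
  · rw [if_neg hj]
    have h2 : (j : ℕ) = ((j : ℕ) - 1) + 1 :=
      (Nat.succ_pred_eq_of_pos (Nat.pos_of_ne_zero hj)).symm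
    conv_lhs => rw [h2, pow_succ']
    simp

end PermFacts

/-! ### Trace of a cyclic product of matrices as a sum over paths -/

section MatrixFacts

open Function

variable {μ : Type*} [Fintype μ] [DecidableEq μ] {R : Type*} [CommRing R]

lemma wt_Q_succ (N : ℕ → Matrix μ μ R) (n : ℕ) :
    ((List.range (n+1)).map N).reverse.prod = N n * ((List.range n).map N).reverse.prod := by
  rw [List.range_succ, List.map_append, List.reverse_append]
  simp

lemma wt_chain (N : ℕ → Matrix μ μ R) :
    ∀ (n : ℕ) (x y : μ),
      (∑ e : Fin (n+1) → μ, if e 0 = y ∧ e (Fin.last n) = x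
          then ∏ j : Fin n, N j (e j.succ) (e j.castSucc) else 0)
        = (((List.range n).map N).reverse.prod) x y := by
  intro n
  induction n with
  | zero =>
    intro x y
    rw [← Equiv.sum_comp (Equiv.funUnique (Fin 1) μ).symm]
    simp only [List.range_zero, List.map_nil, List.reverse_nil, List.prod_nil,
      Matrix.one_apply, Equiv.funUnique_symm_apply]
    by_cases hxy : x = y
    · subst hxy; simp
    · have hemp : (Finset.filter (fun v : μ => v = y ∧ v = x) Finset.univ) = ∅ := by
        ext v
        simp only [Finset.mem_filter, Finset.mem_univ, true_and, Finset.notMem_empty,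
          iff_false, not_and]
        rintro rfl h
        exact hxy h.symm
      simp [hxy, hemp]
  | succ n ih =>
    intro x y
    rw [wt_Q_succ, Matrix.mul_apply]
    have hrhs : ∀ w : μ, (((List.range n).map N).reverse.prod) w y
        = ∑ e : Fin (n+1) → μ, if e 0 = y ∧ e (Fin.last n) = w
            then ∏ j : Fin n, N j (e j.succ) (e j.castSucc) else 0 := fun w => (ih w y).symm
    simp_rw [hrhs, Finset.mul_sum]
    rw [Finset.sum_comm]
    rw [← Equiv.sum_comp (Fin.snocEquiv (fun _ : Fin (n+2) => μ))]
    rw [Fintype.sum_prod_type, Finset.sum_comm]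
    refine Finset.sum_congr rfl (fun e _ => ?_)
    by_cases h0 : e 0 = y
    · simp only [Fin.snocEquiv, Equiv.coe_fn_mk, Fin.snoc_last]
      have hz : ∀ z : μ, (Fin.snoc e z : Fin (n+2) → μ) 0 = e 0 := by
        intro z
        have : (0 : Fin (n+2)) = Fin.castSucc 0 := rfl
        rw [this, Fin.snoc_castSucc]
      have hprod : ∀ z : μ, (∏ j : Fin (n+1), N j ((Fin.snoc e z : Fin (n+2) → μ) j.succ)
            ((Fin.snoc e z : Fin (n+2) → μ) j.castSucc))
          = (∏ j : Fin n, N j (e j.succ) (e j.castSucc)) * N n z (e (Fin.last n)) := by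
        intro z
        rw [Fin.prod_univ_castSucc]
        congr 1
        · refine Finset.prod_congr rfl (fun j _ => ?_)
          rw [Fin.succ_castSucc, Fin.snoc_castSucc, Fin.snoc_castSucc]
          simp
        · rw [Fin.succ_last, Fin.snoc_last, Fin.snoc_castSucc]
          simp
      simp only [hz, hprod, h0, true_and]
      rw [Finset.sum_ite_eq' Finset.univ x
        (fun z => (∏ j : Fin n, N j (e j.succ) (e j.castSucc)) * N n z (e (Fin.last n)))]
      simp [mul_ite, mul_comm, mul_left_comm]
    · simp only [Fin.snocEquiv, Equiv.coe_fn_mk]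
      have hz : ∀ z : μ, (Fin.snoc e z : Fin (n+2) → μ) 0 = e 0 := by
        intro z
        have : (0 : Fin (n+2)) = Fin.castSucc 0 := rfl
        rw [this, Fin.snoc_castSucc]
      simp [hz, h0]

lemma wt_traceCycle (N : ℕ → Matrix μ μ R) (m : ℕ) :
    ∑ e : Fin (m+1) → μ, ∏ j : Fin (m+1), N j (e j) (e (j - 1))
      = Matrix.trace (((List.range (m+1)).map N).reverse.prod) := by
  rw [Matrix.trace]
  have h1 : ∀ x : μ, (((List.range (m+1)).map N).reverse.prod).diag x
      = ∑ f : Fin (m+2) → μ, if f 0 = x ∧ f (Fin.last (m+1)) = x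
          then ∏ j : Fin (m+1), N j (f j.succ) (f j.castSucc) else 0 := by
    intro x
    rw [Matrix.diag_apply, ← wt_chain N (m+1) x x]
  simp_rw [h1]
  rw [Finset.sum_comm]
  have h2 : ∀ f : Fin (m+2) → μ,
      (∑ x : μ, if f 0 = x ∧ f (Fin.last (m+1)) = x
          then ∏ j : Fin (m+1), N j (f j.succ) (f j.castSucc) else 0)
        = if f (Fin.last (m+1)) = f 0 then ∏ j : Fin (m+1), N j (f j.succ) (f j.castSucc)
          else 0 := by
    intro f
    by_cases hf : f (Fin.last (m+1)) = f 0
    · rw [Finset.sum_eq_single (f 0)]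
      · simp [hf]
      · intro x _ hx
        simp only [ite_eq_right_iff, and_imp]
        intro h' _
        exact absurd h'.symm hx
      · simp
    · rw [if_neg hf]
      apply Finset.sum_eq_zero
      intro x _
      simp only [ite_eq_right_iff, and_imp]
      intro h1' h2'
      exact absurd (h2'.trans h1'.symm) hf
  simp_rw [h2]
  rw [← Equiv.sum_comp (Fin.consEquiv (fun _ : Fin (m+2) => μ))
    (fun f => if f (Fin.last (m+1)) = f 0
      then ∏ j : Fin (m+1), N j (f j.succ) (f j.castSucc) else 0), Fintype.sum_prod_type]
  have hcons : ∀ (x : μ) (e : Fin (m+1) → μ),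
      (Fin.consEquiv (fun _ : Fin (m+2) => μ)) (x, e) = Fin.cons x e := fun x e => rfl
  simp_rw [hcons]
  have hlast : ∀ (x : μ) (e : Fin (m+1) → μ),
      (Fin.cons x e : Fin (m+2) → μ) (Fin.last (m+1)) = e (Fin.last m) := by
    intro x e
    rw [← Fin.succ_last, Fin.cons_succ]
  have hzero : ∀ (x : μ) (e : Fin (m+1) → μ), (Fin.cons x e : Fin (m+2) → μ) 0 = x :=
    fun x e => rfl
  simp_rw [hlast, hzero]
  rw [Finset.sum_comm]
  refine Finset.sum_congr rfl (fun e _ => ?_)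
  rw [Finset.sum_eq_single (e (Fin.last m))]
  · rw [if_pos rfl]
    refine Finset.prod_congr rfl (fun j _ => ?_)
    rw [Fin.cons_succ]
    congr 1
    by_cases hj : (j : ℕ) = 0
    · have hj0 : j = 0 := Fin.ext hj
      subst hj0
      have hc : (Fin.castSucc (0 : Fin (m+1))) = (0 : Fin (m+2)) := rfl
      rw [hc, Fin.cons_zero]
      have : (0 - 1 : Fin (m+1)) = Fin.last m := by
        refine Fin.ext ?_
        rw [wt_sub_one_val]
        simp
      rw [this]
    · have hc : Fin.castSucc j = Fin.succ (j - 1) := by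
        refine Fin.ext ?_
        rw [Fin.coe_castSucc, Fin.val_succ, wt_sub_one_val, if_neg hj]
        omega
      rw [hc, Fin.cons_succ]
  · intro x _ hx
    rw [if_neg (fun h : e (Fin.last m) = x => hx h.symm)]
  · simp

lemma wt_traceCycle' (l : ℕ) [NeZero l] (N : ℕ → Matrix μ μ R) :
    ∑ e : Fin l → μ, ∏ j : Fin l, N j (e j) (e (j - 1))
      = Matrix.trace (((List.range l).map N).reverse.prod) := by
  obtain ⟨m, rfl⟩ : ∃ m, l = m + 1 :=
    ⟨l - 1, (Nat.succ_pred_eq_of_pos (Nat.pos_of_ne_zero (NeZero.ne l))).symm⟩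
  exact wt_traceCycle N m

/-- The main combinatorial identity: sums over colourings of `Fin k` of products of
matrix entries along a permutation factor as products of traces over the cycles. -/
lemma wt_comb {k : ℕ} (s : Equiv.Perm (Fin k)) (M : Fin k → Matrix μ μ R) :
    ∑ f : Fin k → μ, ∏ i, M i (f i) (f (s⁻¹ i))
      = ∏ r ∈ cycleReps s, Matrix.trace
          (((List.range (minimalPeriod ⇑s r)).map (fun j => M ((s ^ j) r))).reverse.prod) := by
  have hprod : ∀ f : Fin k → μ,
      (∏ i, M i (f i) (f (s⁻¹ i)))
        = ∏ r : ↥(cycleReps s), ∏ j : Fin (minimalPeriod ⇑s (r : Fin k)),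
            M ((s ^ (j : ℕ)) r) (f ((s ^ (j : ℕ)) r))
              (f ((s ^ (((j - 1 : Fin (minimalPeriod ⇑s (r : Fin k)))) : ℕ)) r)) := by
    intro f
    rw [← Equiv.prod_comp (wtEquiv s) (fun i => M i (f i) (f (s⁻¹ i)))]
    rw [← Finset.univ_sigma_univ, Finset.prod_sigma]
    refine Finset.prod_congr rfl (fun r _ => Finset.prod_congr rfl (fun j _ => ?_))
    rw [wtEquiv_apply]
    simp only
    rw [wt_inv_pow_apply]
  have hchg : ∑ f : Fin k → μ, ∏ i, M i (f i) (f (s⁻¹ i))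
      = ∑ φ : ∀ r : ↥(cycleReps s), Fin (minimalPeriod ⇑s (r : Fin k)) → μ,
          ∏ r : ↥(cycleReps s), ∏ j : Fin (minimalPeriod ⇑s (r : Fin k)),
            M ((s ^ (j : ℕ)) r) (φ r j) (φ r (j - 1)) := by
    refine Fintype.sum_equiv
      ((Equiv.arrowCongr (wtEquiv s).symm (Equiv.refl μ)).trans
        (Equiv.piCurry (fun _ _ => μ))) _ _ (fun f => ?_)
    rw [hprod f]
    refine Finset.prod_congr rfl (fun r _ => Finset.prod_congr rfl (fun j _ => ?_))
    simp only [Equiv.trans_apply, Equiv.arrowCongr_apply, Equiv.piCurry, Sigma.curry,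
      Equiv.coe_fn_mk, Function.comp_apply, Equiv.refl_apply, Equiv.symm_symm, wtEquiv_apply]
  rw [hchg]
  rw [← Fintype.piFinset_univ, ← Finset.prod_univ_sum
    (fun r : ↥(cycleReps s) => (Finset.univ : Finset (Fin (minimalPeriod ⇑s (r : Fin k)) → μ)))
    (fun (r : ↥(cycleReps s)) (h : Fin (minimalPeriod ⇑s (r : Fin k)) → μ) =>
      ∏ j : Fin (minimalPeriod ⇑s (r : Fin k)), M ((s ^ (j : ℕ)) r) (h j) (h (j - 1)))]
  rw [← Finset.prod_coe_sort (cycleReps s)]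
  refine Finset.prod_congr rfl (fun r _ => ?_)
  exact wt_traceCycle' (minimalPeriod ⇑s (r : Fin k)) (fun j => M ((s ^ j) (r : Fin k)))

end MatrixFacts

/-! ### The trace of the wreath operator as an entry sum -/

section TensorFacts

variable {V : Type*} [AddCommGroup V] [Module ℂ V]
variable {ι : Type*} [Fintype ι] [DecidableEq ι]
variable {k : ℕ}

/-- Coordinate functionals on the tensor power. -/
def wtPhi (b : Module.Basis ι ℂ V) (k : ℕ) : (⨂[ℂ] _i : Fin k, V) →ₗ[ℂ] ((Fin k → ι) → ℂ) :=
  PiTensorProduct.lift <| MultilinearMap.pi fun f =>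
    (MultilinearMap.mkPiAlgebra ℂ (Fin k) ℂ).compLinearMap fun i => b.coord (f i)

variable (b : Module.Basis ι ℂ V)

@[simp] lemma wtPhi_tprod (v : Fin k → V) (f : Fin k → ι) :
    wtPhi b k (tprod ℂ v) f = ∏ i, b.repr (v i) (f i) := by
  simp [wtPhi, MultilinearMap.pi, Module.Basis.coord]

/-- Inverse of `wtPhi`, sending a coordinate vector to the associated tensor. -/
def wtPsi (b : Module.Basis ι ℂ V) (k : ℕ) : ((Fin k → ι) → ℂ) →ₗ[ℂ] (⨂[ℂ] _i : Fin k, V) :=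
  (Pi.basisFun ℂ (Fin k → ι)).constr ℂ fun f => tprod ℂ fun i => b (f i)

lemma wtPsi_apply (x : (Fin k → ι) → ℂ) :
    wtPsi b k x = ∑ f : Fin k → ι, x f • tprod ℂ fun i => b (f i) := by
  rw [wtPsi, Module.Basis.constr_apply_fintype]
  simp [Pi.basisFun_equivFun]

lemma wtPhi_psi : (wtPhi b k).comp (wtPsi b k) = LinearMap.id := by
  refine Module.Basis.ext (Pi.basisFun ℂ (Fin k → ι)) (fun f => ?_)
  rw [LinearMap.comp_apply, wtPsi, Module.Basis.constr_basis]
  funext f'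
  rw [wtPhi_tprod]
  simp only [Module.Basis.repr_self, LinearMap.id_coe, id_eq]
  rw [Pi.basisFun_apply]
  by_cases hff : f = f'
  · subst hff
    simp [Finsupp.single_apply]
  · obtain ⟨i, hi⟩ := Function.ne_iff.mp hff
    rw [Finset.prod_eq_zero (Finset.mem_univ i) (by simp [Finsupp.single_apply, hi]),
      Pi.single_apply, if_neg (fun h => hff h.symm)]

lemma wtPsi_phi : (wtPsi b k).comp (wtPhi b k) = LinearMap.id := by
  apply PiTensorProduct.ext
  apply MultilinearMap.ext
  intro v
  simp only [LinearMap.compMultilinearMap_apply, LinearMap.comp_apply, LinearMap.id_coe, id_eq]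
  rw [wtPsi_apply]
  have hv : (tprod ℂ v : ⨂[ℂ] _i : Fin k, V)
      = tprod ℂ fun i => ∑ j : ι, b.repr (v i) j • b j := by
    congr 1
    funext i
    exact (Module.Basis.sum_repr b (v i)).symm
  conv_rhs => rw [hv, MultilinearMap.map_sum]
  refine Finset.sum_congr rfl (fun f _ => ?_)
  rw [MultilinearMap.map_smul_univ]
  rw [wtPhi_tprod]

/-- The coordinate linear equivalence of the tensor power with a function space. -/
def wtEquivT (b : Module.Basis ι ℂ V) (k : ℕ) : (⨂[ℂ] _i : Fin k, V) ≃ₗ[ℂ] ((Fin k → ι) → ℂ) :=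
  LinearEquiv.ofLinear (wtPhi b k) (wtPsi b k) (wtPhi_psi b) (wtPsi_phi b)

/-- Trace of the wreath-type operator as a sum of products of matrix entries. -/
lemma wt_traceA (A : Fin k → (V →ₗ[ℂ] V)) (s : Equiv.Perm (Fin k)) :
    LinearMap.trace ℂ _ ((PiTensorProduct.map A).comp (permOp k V s))
      = ∑ f : Fin k → ι, ∏ i, (LinearMap.toMatrix b b (A i)) (f i) (f (s⁻¹ i)) := by
  set T := (PiTensorProduct.map A).comp (permOp k V s)
  rw [← LinearMap.trace_conj' T (wtEquivT b k)]
  rw [LinearMap.trace_eq_matrix_trace ℂ (Pi.basisFun ℂ (Fin k → ι)), Matrix.trace]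
  refine Finset.sum_congr rfl (fun f _ => ?_)
  rw [Matrix.diag_apply, LinearMap.toMatrix_apply, Pi.basisFun_repr]
  have h1 : (wtEquivT b k).conj T (Pi.basisFun ℂ (Fin k → ι) f)
      = wtPhi b k (T (wtPsi b k (Pi.basisFun ℂ (Fin k → ι) f))) := by
    simp [wtEquivT, LinearEquiv.conj_apply]
  rw [h1]
  have h2 : wtPsi b k (Pi.basisFun ℂ (Fin k → ι) f) = tprod ℂ fun i => b (f i) := by
    rw [wtPsi, Module.Basis.constr_basis]
  rw [h2]
  have h3 : T (tprod ℂ fun i => b (f i)) = tprod ℂ fun i => A i (b (f (s⁻¹ i))) := by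
    simp only [T, LinearMap.comp_apply, permOp, LinearEquiv.coe_coe]
    rw [PiTensorProduct.reindex_tprod]
    rw [PiTensorProduct.map_tprod]
    rfl
  rw [h3, wtPhi_tprod]
  refine Finset.prod_congr rfl (fun i _ => ?_)
  rw [LinearMap.toMatrix_apply]

end TensorFacts

/-- Character of the wreath product representation `ϱ(g,s) = (π(g₁)⊗⋯⊗π(g_k)) ∘ I(s)`
of `S_k(G)` on `V^{⊗k}`:  for a compact group `G` and a continuous irreducible unitary
representation `π` of `G` on `V` with character `χ`, the trace of `ϱ((g₁,…,g_k),s)`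
equals the product over the cycles `(i_1 … i_l)` of `s` of `χ(g_{i_l}⋯g_{i_2}g_{i_1})`. -/
theorem wreath_tensor_character (G : Type*) [Group G] [TopologicalSpace G]
    [IsTopologicalGroup G] [CompactSpace G]
    (V : Type*) [NormedAddCommGroup V] [InnerProductSpace ℂ V] [FiniteDimensional ℂ V]
    (π : Representation ℂ G V)
    (hcont : ∀ v : V, Continuous fun x : G => π x v)
    (hunit : ∀ (x : G) (v w : V), (inner ℂ (π x v) (π x w) : ℂ) = inner ℂ v w)
    (hirr : ∀ W : Submodule ℂ V, (∀ (x : G) (v : V), v ∈ W → π x v ∈ W) → W = ⊥ ∨ W = ⊤)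
    (k : ℕ) (g : Fin k → G) (s : Equiv.Perm (Fin k)) :
    LinearMap.trace ℂ _ ((PiTensorProduct.map fun i => π (g i)).comp (permOp k V s))
      = ∏ i ∈ cycleReps s, LinearMap.trace ℂ V (π (cycleProd s g i)) := by
  classical
  let b := Module.Free.chooseBasis ℂ V
  rw [wt_traceA b (fun i => π (g i)) s]
  rw [wt_comb s (fun i => LinearMap.toMatrix b b (π (g i)))]
  refine Finset.prod_congr rfl (fun r _ => ?_)
  have hmat : ∀ L : List G,
      LinearMap.toMatrix b b (π L.prod) = (L.map fun x => LinearMap.toMatrix b b (π x)).prod := by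
    intro L
    induction L with
    | nil => simp [LinearMap.toMatrix_one]
    | cons a t ih =>
      simp only [List.prod_cons, List.map_cons]
      rw [π.map_mul, LinearMap.toMatrix_mul, ih]
  rw [LinearMap.trace_eq_matrix_trace ℂ b, cycleProd, hmat]
  congr 2
  rw [List.map_reverse, List.map_map]
  rfl
end
end

section
/- For a permutation s of {1,…,k} with cycle decomposition into cycles C_1,…,C_p, and square matrices A^{(1)},…,A^{(k)} of the same size, the sum ∑_{a_1,…,a_k} A^{(1)}_{a_1, a_{s^{-1}(1)}} A^{(2)}_{a_2, a_{s^{-1}(2)}} ⋯ A^{(k)}_{a_k, a_{s^{-1}(k)}} equals the product over cycles C = (i_1 i_2 … i_l) of Tr(A^{(i_l)} ⋯ A^{(i_2)} A^{(i_1)}). Equivalently, Tr((A^{(1)}⊗⋯⊗A^{(k)}) ∘ I(s)) = ∏_{cycles} Tr of the product of the matrices along each cycle, where I(s) is the tensor-factor permutation operator. -/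
open scoped Classical

noncomputable section

section Aux

lemma finSubOne {n : ℕ} (u : Fin n) : (u.succ - 1 : Fin (n+1)) = u.castSucc := by
  have hn : 1 ≤ n := Nat.lt_of_le_of_lt (Nat.zero_le _) u.isLt
  ext
  simp only [Fin.sub_def, Fin.val_succ, Fin.val_one', Fin.coe_castSucc]
  rw [Nat.mod_eq_of_lt (by omega : 1 < n+1)]
  have h : n + 1 - 1 + ((u:ℕ)+1) = (u:ℕ) + (n+1) := by omega
  rw [h, Nat.add_mod_right, Nat.mod_eq_of_lt (by have := u.isLt; omega)]

lemma consCastSucc {d m : ℕ} (z : Fin d) (c' : Fin (m+1) → Fin d) (u : Fin (m+1)) :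
    Fin.cons (α := fun _ => Fin d) z c' u.castSucc = if (u:ℕ) = 0 then z else c' (u-1) := by
  induction u using Fin.cases with
  | zero => simp
  | succ v =>
    rw [← Fin.succ_castSucc, Fin.cons_succ]
    simp only [Fin.val_succ, Nat.succ_ne_zero, Nat.add_eq_zero, if_false, and_false, ite_false]
    rw [finSubOne v]

lemma pathEntry (d : ℕ) : ∀ (m : ℕ) (B : ℕ → Matrix (Fin d) (Fin d) ℂ) (x y : Fin d),
    (((List.range (m+1)).map B).reverse).prod x y
      = ∑ c : Fin (m+1) → Fin d,
          if c (Fin.last m) = x then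
            ∏ t : Fin (m+1), B t (c t) (if (t:ℕ) = 0 then y else c (t-1))
          else 0 := by
  intro m
  induction m with
  | zero =>
    intro B x y
    have e := Fintype.sum_equiv ((Equiv.funUnique (Fin 1) (Fin d)).symm)
      (fun z => if z = x then B 0 z y else 0)
      (fun c : Fin 1 → Fin d => if c (Fin.last 0) = x then
          ∏ t : Fin 1, B t (c t) (if (t:ℕ) = 0 then y else c (t-1)) else 0)
      (fun z => by simp [Equiv.funUnique, Fin.last])
    rw [← e]
    simp [List.range_succ, Finset.sum_ite_eq']
  | succ m ih =>
    intro B x y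
    have hsplit : ((List.range (m+2)).map B).reverse.prod
        = ((List.range (m+1)).map (fun t => B (t+1))).reverse.prod * B 0 := by
      rw [List.range_succ_eq_map]
      simp [List.map_map, Function.comp_def]
    rw [hsplit, Matrix.mul_apply]
    simp_rw [ih (fun t => B (t+1)) x]
    set G : (Fin (m+2) → Fin d) → ℂ := fun c =>
      if c (Fin.last (m+1)) = x then
        ∏ t : Fin (m+2), B t (c t) (if (t:ℕ) = 0 then y else c (t-1))
      else 0 with hG
    have key : ∀ (z : Fin d) (c' : Fin (m+1) → Fin d),
        G (Fin.cons (α := fun _ => Fin d) z c')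
          = (if c' (Fin.last m) = x then
              ∏ t : Fin (m+1), B (t+1) (c' t) (if (t:ℕ) = 0 then z else c' (t-1))
             else 0) * B 0 z y := by
      intro z c'
      rw [hG]
      simp only
      have hlast : Fin.cons (α := fun _ => Fin d) z c' (Fin.last (m+1)) = c' (Fin.last m) := by
        rw [← Fin.succ_last, Fin.cons_succ]
      rw [hlast]
      by_cases hx : c' (Fin.last m) = x
      · rw [if_pos hx, if_pos hx]
        rw [Fin.prod_univ_succ, Fin.cons_zero]
        simp only [Fin.val_zero, if_pos rfl]
        rw [mul_comm]
        congr 1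
        apply Finset.prod_congr rfl
        intro u _
        rw [Fin.cons_succ]
        simp only [Fin.val_succ, Nat.succ_ne_zero, Nat.add_eq_zero, if_false, and_false, ite_false]
        rw [finSubOne u, consCastSucc]
      · rw [if_neg hx, if_neg hx, zero_mul]
    calc ∑ z : Fin d, (∑ c' : Fin (m+1) → Fin d,
            if c' (Fin.last m) = x then
              ∏ t : Fin (m+1), B (t+1) (c' t) (if (t:ℕ) = 0 then z else c' (t-1))
            else 0) * B 0 z y
        = ∑ p : Fin d × (Fin (m+1) → Fin d), G (Fin.cons (α := fun _ => Fin d) p.1 p.2) := by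
          rw [Fintype.sum_prod_type]
          apply Finset.sum_congr rfl
          intro z _
          rw [Finset.sum_mul]
          exact Finset.sum_congr rfl (fun c' _ => (key z c').symm)
      _ = ∑ c : Fin (m+1+1) → Fin d, G c :=
          Fintype.sum_equiv (Fin.consEquiv (fun _ : Fin (m+2) => Fin d)) _ _ (fun p => rfl)

lemma finZeroSubOne {n : ℕ} : (0 - 1 : Fin (n+1)) = Fin.last n := by
  rcases n with _ | n
  · decide
  · ext
    simp only [Fin.sub_def, Fin.val_zero, Fin.val_one', Fin.val_last]
    rw [Nat.mod_eq_of_lt (by omega : 1 < n+1+1)]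
    exact Nat.mod_eq_of_lt (by omega)

lemma cycleTrace (d m : ℕ) (B : ℕ → Matrix (Fin d) (Fin d) ℂ) :
    ∑ c : Fin (m+1) → Fin d, ∏ t : Fin (m+1), B t (c t) (c (t-1))
      = Matrix.trace (((List.range (m+1)).map B).reverse).prod := by
  rw [Matrix.trace]
  simp only [Matrix.diag]
  symm
  calc ∑ x : Fin d, (((List.range (m+1)).map B).reverse).prod x x
      = ∑ x : Fin d, ∑ c : Fin (m+1) → Fin d,
          if c (Fin.last m) = x then
            ∏ t : Fin (m+1), B t (c t) (if (t:ℕ) = 0 then x else c (t-1))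
          else 0 := by
        exact Finset.sum_congr rfl (fun x _ => pathEntry d m B x x)
    _ = ∑ c : Fin (m+1) → Fin d, ∑ x : Fin d,
          if c (Fin.last m) = x then
            ∏ t : Fin (m+1), B t (c t) (if (t:ℕ) = 0 then x else c (t-1))
          else 0 := Finset.sum_comm
    _ = ∑ c : Fin (m+1) → Fin d, ∏ t : Fin (m+1), B t (c t) (c (t-1)) := by
        apply Finset.sum_congr rfl
        intro c _
        rw [Finset.sum_ite_eq]
        simp only [Finset.mem_univ, if_pos]
        apply Finset.prod_congr rfl
        intro t _
        congr 1
        by_cases ht : (t:ℕ) = 0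
        · have : t = 0 := Fin.ext ht
          subst this
          rw [if_pos ht, finZeroSubOne]
        · rw [if_neg ht]

variable {k : ℕ}

def orb (s : Equiv.Perm (Fin k)) (r : Fin k) : Finset (Fin k) :=
  (Finset.range (Function.minimalPeriod s r)).image (fun t => (s ^ t) r)

lemma isPeriodic (s : Equiv.Perm (Fin k)) (r : Fin k) :
    Function.IsPeriodicPt s (orderOf s) r := by
  have h : (s ^ orderOf s) r = r := by rw [pow_orderOf_eq_one]; rfl
  rwa [Equiv.Perm.coe_pow] at h

lemma mpos (s : Equiv.Perm (Fin k)) (r : Fin k) :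
    0 < Function.minimalPeriod s r :=
  (isPeriodic s r).minimalPeriod_pos (orderOf_pos s)

lemma pow_mod_apply (s : Equiv.Perm (Fin k)) (r : Fin k) (n : ℕ) :
    (s ^ (n % Function.minimalPeriod s r)) r = (s ^ n) r := by
  rw [Equiv.Perm.coe_pow, Equiv.Perm.coe_pow]
  exact Function.iterate_mod_minimalPeriod_eq

lemma mem_orb_iff {s : Equiv.Perm (Fin k)} {r i : Fin k} :
    i ∈ orb s r ↔ s.SameCycle r i := by
  constructor
  · intro h
    obtain ⟨t, _, rfl⟩ := Finset.mem_image.mp h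
    exact ⟨(t : ℤ), by rw [zpow_natCast]⟩
  · intro h
    obtain ⟨n, _, rfl⟩ := h.exists_pow_eq'
    refine Finset.mem_image.mpr ⟨n % Function.minimalPeriod s r, ?_, ?_⟩
    · exact Finset.mem_range.mpr (Nat.mod_lt _ (mpos s r))
    · exact pow_mod_apply s r n

lemma orb_inj (s : Equiv.Perm (Fin k)) (r : Fin k) :
    Set.InjOn (fun t => (s ^ t) r) (Finset.range (Function.minimalPeriod s r)) := by
  intro a ha b hb hab
  simp only [Finset.coe_range, Set.mem_Iio] at ha hb
  have := Function.iterate_injOn_Iio_minimalPeriod (f := (s : Fin k → Fin k)) (x := r)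
  apply this ha hb
  simpa only [Equiv.Perm.coe_pow] using hab

lemma card_orb (s : Equiv.Perm (Fin k)) (r : Fin k) :
    (orb s r).card = Function.minimalPeriod s r := by
  rw [orb, Finset.card_image_of_injOn (orb_inj s r), Finset.card_range]

lemma mem_orb_self (s : Equiv.Perm (Fin k)) (r : Fin k) : r ∈ orb s r :=
  mem_orb_iff.mpr (Equiv.Perm.SameCycle.refl s r)

lemma pow_mem_orb (s : Equiv.Perm (Fin k)) (r : Fin k) (t : ℕ) : (s ^ t) r ∈ orb s r :=
  mem_orb_iff.mpr ⟨(t : ℤ), by rw [zpow_natCast]⟩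

lemma apply_mem_orb {s : Equiv.Perm (Fin k)} {r i : Fin k} (h : i ∈ orb s r) :
    s i ∈ orb s r := by
  rw [mem_orb_iff] at h ⊢
  exact h.apply_right

lemma inv_apply_mem_orb_iff {s : Equiv.Perm (Fin k)} {r i : Fin k} :
    s⁻¹ i ∈ orb s r ↔ i ∈ orb s r := by
  rw [mem_orb_iff, mem_orb_iff]
  exact Equiv.Perm.sameCycle_symm_apply_right


lemma iterate_minb (s : Equiv.Perm (Fin k)) (r : Fin k) :
    (s ^ Function.minimalPeriod s r) r = r := by
  rw [Equiv.Perm.coe_pow]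
  exact Function.iterate_minimalPeriod

lemma sPrev (s : Equiv.Perm (Fin k)) (r : Fin k) {m' : ℕ}
    (hm : Function.minimalPeriod s r = m' + 1) (t : Fin (m' + 1)) :
    s⁻¹ ((s ^ (t:ℕ)) r) = (s ^ (((t - 1 : Fin (m'+1))):ℕ)) r := by
  induction t using Fin.cases with
  | zero =>
    rw [finZeroSubOne]
    simp only [Fin.val_zero, pow_zero, Fin.val_last]
    have h := iterate_minb s r
    rw [hm, pow_succ'] at h
    have : r = s ((s ^ m') r) := by
      simpa [Equiv.Perm.mul_apply] using h.symm
    rw [Equiv.Perm.one_apply, Equiv.Perm.inv_eq_iff_eq]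
    exact this
  | succ v =>
    rw [finSubOne]
    simp only [Fin.val_succ, Fin.coe_castSucc]
    rw [pow_succ']
    simp [Equiv.Perm.mul_apply]

def orbIdx (s : Equiv.Perm (Fin k)) (r : Fin k) (i : Fin k) (h : i ∈ orb s r) :
    Fin (Function.minimalPeriod s r) :=
  ⟨(Finset.mem_image.mp h).choose,
    Finset.mem_range.mp (Finset.mem_image.mp h).choose_spec.1⟩

lemma orbIdx_spec (s : Equiv.Perm (Fin k)) (r : Fin k) (i : Fin k) (h : i ∈ orb s r) :
    (s ^ ((orbIdx s r i h : Fin (Function.minimalPeriod s r)) : ℕ)) r = i :=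
  (Finset.mem_image.mp h).choose_spec.2

def orbEquiv (s : Equiv.Perm (Fin k)) (r : Fin k) (d mm : ℕ)
    (hmm : Function.minimalPeriod s r = mm) :
    (Fin k → Fin d) ≃ ((Fin mm → Fin d) × ({j : Fin k // j ∉ orb s r} → Fin d)) where
  toFun a := (fun t => a ((s ^ (t:ℕ)) r), fun j => a j.1)
  invFun p := fun i => if h : i ∈ orb s r then p.1 (Fin.cast hmm (orbIdx s r i h)) else p.2 ⟨i, h⟩
  left_inv a := by
    funext i
    by_cases h : i ∈ orb s r
    · simp only [dif_pos h]
      have : ((Fin.cast hmm (orbIdx s r i h) : Fin mm) : ℕ) = ((orbIdx s r i h : Fin _) : ℕ) := rfl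
      rw [show ((Fin.cast hmm (orbIdx s r i h) : Fin mm) : ℕ) = ((orbIdx s r i h : Fin _) : ℕ) from rfl,
        orbIdx_spec]
    · simp only [dif_neg h]
  right_inv p := by
    apply Prod.ext
    · funext t
      have hmem := pow_mem_orb s r (t:ℕ)
      simp only [dif_pos hmem]
      have hidx : (Fin.cast hmm (orbIdx s r ((s ^ (t:ℕ)) r) hmem) : Fin mm) = t := by
        apply Fin.ext
        show ((orbIdx s r _ hmem : Fin _) : ℕ) = (t : ℕ)
        apply orb_inj s r _ _ (orbIdx_spec s r _ hmem)
        · simp only [Finset.coe_range, Set.mem_Iio]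
          exact (orbIdx s r _ hmem).isLt
        · simp only [Finset.coe_range, Set.mem_Iio]
          rw [hmm]
          exact t.isLt
      rw [hidx]
    · funext j
      simp only [dif_neg j.2]

lemma singleCycleSum (d : ℕ) (s : Equiv.Perm (Fin k)) (A : Fin k → Matrix (Fin d) (Fin d) ℂ)
    (r : Fin k) :
    ∑ a : Fin k → Fin d, ∏ i ∈ orb s r, A i (a i) (a (s⁻¹ i))
      = (d:ℂ)^(k - Function.minimalPeriod s r) * Matrix.trace (cycleProd s A r) := by
  obtain ⟨m', hm⟩ : ∃ m', Function.minimalPeriod s r = m' + 1 :=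
    ⟨Function.minimalPeriod s r - 1, by have := mpos s r; omega⟩
  have hCP : cycleProd s A r
      = (((List.range (m'+1)).map (fun n => A ((s ^ n) r))).reverse).prod := by
    simp only [cycleProd, hm]
  rw [hm, hCP]
  have step1 : ∀ a : Fin k → Fin d,
      ∏ i ∈ orb s r, A i (a i) (a (s⁻¹ i))
        = ∏ t : Fin (m'+1),
            A ((s ^ (t:ℕ)) r) (a ((s ^ (t:ℕ)) r)) (a ((s ^ (((t - 1 : Fin (m'+1))):ℕ)) r)) := by
    intro a
    rw [orb, Finset.prod_image (fun x hx y hy hxy => orb_inj s r hx hy hxy), hm,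
      ← Fin.prod_univ_eq_prod_range]
    exact Finset.prod_congr rfl (fun t _ => by rw [sPrev s r hm t])
  simp_rw [step1]
  rw [Fintype.sum_equiv (orbEquiv s r d (m'+1) hm)
    (fun a : Fin k → Fin d => ∏ t : Fin (m'+1),
      A ((s ^ (t:ℕ)) r) (a ((s ^ (t:ℕ)) r)) (a ((s ^ (((t - 1 : Fin (m'+1))):ℕ)) r)))
    (fun p : (Fin (m'+1) → Fin d) × ({j : Fin k // j ∉ orb s r} → Fin d) =>
      ∏ t : Fin (m'+1), A ((s ^ (t:ℕ)) r) (p.1 t) (p.1 (t - 1)))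
    (fun a => rfl)]
  rw [Fintype.sum_prod_type]
  have hcard : Fintype.card ({j : Fin k // j ∉ orb s r} → Fin d) = d ^ (k - (m'+1)) := by
    rw [Fintype.card_fun, Fintype.card_fin, Fintype.card_subtype_compl, Fintype.card_fin,
      Fintype.card_coe, card_orb, hm]
  have step2 : ∀ c : Fin (m'+1) → Fin d,
      (∑ _b : {j : Fin k // j ∉ orb s r} → Fin d,
        ∏ t : Fin (m'+1), A ((s ^ (t:ℕ)) r) (c t) (c (t - 1)))
      = (d:ℂ)^(k - (m'+1)) * ∏ t : Fin (m'+1), A ((s ^ (t:ℕ)) r) (c t) (c (t - 1)) := by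
    intro c
    rw [Finset.sum_const, Finset.card_univ, hcard, nsmul_eq_mul]
    push_cast
    ring
  simp_rw [step2]
  rw [← Finset.mul_sum]
  congr 1
  exact cycleTrace d m' (fun n => A ((s ^ n) r))

lemma splitLemma (k d : ℕ) (C : Finset (Fin k)) (F G : (Fin k → Fin d) → ℂ)
    (hF : ∀ a b : Fin k → Fin d, (∀ i ∈ C, a i = b i) → F a = F b)
    (hG : ∀ a b : Fin k → Fin d, (∀ i ∉ C, a i = b i) → G a = G b) :
    (∑ a : Fin k → Fin d, F a) * (∑ a : Fin k → Fin d, G a)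
      = (d:ℂ)^k * ∑ a : Fin k → Fin d, F a * G a := by
  classical
  set ψ : ((Fin k → Fin d) × (Fin k → Fin d)) ≃ ((Fin k → Fin d) × (Fin k → Fin d)) :=
    { toFun := fun p => (C.piecewise p.1 p.2, C.piecewise p.2 p.1)
      invFun := fun p => (C.piecewise p.1 p.2, C.piecewise p.2 p.1)
      left_inv := by
        intro p
        ext i <;> by_cases h : i ∈ C <;> simp [Finset.piecewise, h]
      right_inv := by
        intro p
        ext i <;> by_cases h : i ∈ C <;> simp [Finset.piecewise, h] }
    with hψ
  have step1 : (∑ a : Fin k → Fin d, F a) * (∑ a : Fin k → Fin d, G a)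
      = ∑ p : (Fin k → Fin d) × (Fin k → Fin d), F p.1 * G p.2 := by
    rw [Finset.sum_mul_sum]
    exact (Fintype.sum_prod_type (fun p : (Fin k → Fin d) × (Fin k → Fin d) => F p.1 * G p.2)).symm
  have step2 : ∑ p : (Fin k → Fin d) × (Fin k → Fin d), F p.1 * G p.2
      = ∑ p : (Fin k → Fin d) × (Fin k → Fin d), F (ψ p).1 * G (ψ p).2 :=
    (Equiv.sum_comp ψ (fun p => F p.1 * G p.2)).symm
  have step3 : ∀ p : (Fin k → Fin d) × (Fin k → Fin d),
      F (ψ p).1 * G (ψ p).2 = F p.1 * G p.1 := by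
    intro p
    congr 1
    · exact hF _ _ (fun i hi => Finset.piecewise_eq_of_mem _ _ _ hi)
    · exact hG _ _ (fun i hi => Finset.piecewise_eq_of_notMem _ _ _ hi)
  rw [step1, step2]
  simp_rw [step3]
  have step4 : ∑ p : (Fin k → Fin d) × (Fin k → Fin d), F p.1 * G p.1
      = ∑ _b : Fin k → Fin d, ∑ a : Fin k → Fin d, F a * G a := by
    exact Fintype.sum_prod_type_right (fun p : (Fin k → Fin d) × (Fin k → Fin d) => F p.1 * G p.1)
  rw [step4, Finset.sum_const, Finset.card_univ, Fintype.card_fun, Fintype.card_fin,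
    Fintype.card_fin, nsmul_eq_mul]
  push_cast
  ring

lemma mem_cycleReps_iff {s : Equiv.Perm (Fin k)} {r : Fin k} :
    r ∈ cycleReps s ↔ ∀ j, s.SameCycle r j → r ≤ j := by
  simp [cycleReps]

lemma emptyCase (d : ℕ) (s : Equiv.Perm (Fin k)) (A : Fin k → Matrix (Fin d) (Fin d) ℂ) :
    ∑ a : Fin k → Fin d, ∏ i ∈ (∅ : Finset (Fin k)), A i (a i) (a (s⁻¹ i))
      = (d:ℂ)^(k - (∅ : Finset (Fin k)).card)
          * ∏ r ∈ (cycleReps s).filter (· ∈ (∅ : Finset (Fin k))), Matrix.trace (cycleProd s A r) := by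
  simp only [Finset.prod_empty, Finset.sum_const, Finset.card_univ, Fintype.card_fun,
    Fintype.card_fin, Finset.card_empty, Nat.sub_zero, nsmul_eq_mul, mul_one,
    Finset.notMem_empty, Finset.filter_false]
  push_cast
  ring

lemma mainLemma (d : ℕ) (hd : 0 < d) (s : Equiv.Perm (Fin k))
    (A : Fin k → Matrix (Fin d) (Fin d) ℂ) :
    ∀ (n : ℕ) (T : Finset (Fin k)), T.card ≤ n → (∀ i ∈ T, s i ∈ T) →
    ∑ a : Fin k → Fin d, ∏ i ∈ T, A i (a i) (a (s⁻¹ i))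
      = (d:ℂ)^(k - T.card) * ∏ r ∈ (cycleReps s).filter (· ∈ T), Matrix.trace (cycleProd s A r) := by
  intro n
  induction n with
  | zero =>
    intro T hT _
    rw [Finset.card_eq_zero.mp (Nat.le_zero.mp hT)]
    exact emptyCase d s A
  | succ n ih =>
    intro T hT hinv
    by_cases hTe : T = ∅
    · rw [hTe]; exact emptyCase d s A
    have hTne : T.Nonempty := Finset.nonempty_of_ne_empty hTe
    set r := T.min' hTne with hr
    have hrT : r ∈ T := T.min'_mem hTne
    have hinv_pow : ∀ t : ℕ, (s ^ t) r ∈ T := by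
      intro t
      induction t with
      | zero => simpa using hrT
      | succ t iht =>
        rw [pow_succ']
        simpa [Equiv.Perm.mul_apply] using hinv _ iht
    have hCT : orb s r ⊆ T := by
      intro i hi
      obtain ⟨t, _, rfl⟩ := Finset.mem_image.mp hi
      exact hinv_pow t
    have hrRep : r ∈ cycleReps s :=
      mem_cycleReps_iff.mpr (fun j hj => T.min'_le j (hCT (mem_orb_iff.mpr hj)))
    set T' := T \ orb s r with hT'
    have hT'inv : ∀ i ∈ T', s i ∈ T' := by
      intro i hi
      rw [Finset.mem_sdiff] at hi ⊢
      refine ⟨hinv i hi.1, fun hc => hi.2 ?_⟩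
      rw [mem_orb_iff] at hc ⊢
      exact Equiv.Perm.sameCycle_apply_right.mp hc
    have hOC : (orb s r).card = Function.minimalPeriod s r := card_orb s r
    have hmle : (orb s r).card ≤ T.card := Finset.card_le_card hCT
    have hTk : T.card ≤ k := by
      have := Finset.card_le_univ T
      simpa using this
    have hT'card : T'.card = T.card - (orb s r).card := Finset.card_sdiff_of_subset hCT
    have hmpos : 0 < (orb s r).card := by rw [hOC]; exact mpos s r
    have hT'le : T'.card ≤ n := by omega
    have hprodsplit : ∀ a : Fin k → Fin d,
        ∏ i ∈ T, A i (a i) (a (s⁻¹ i))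
          = (∏ i ∈ orb s r, A i (a i) (a (s⁻¹ i))) * ∏ i ∈ T', A i (a i) (a (s⁻¹ i)) := by
      intro a
      rw [mul_comm, Finset.prod_sdiff hCT]
    have hsplit := splitLemma k d (orb s r)
      (fun a => ∏ i ∈ orb s r, A i (a i) (a (s⁻¹ i)))
      (fun a => ∏ i ∈ T', A i (a i) (a (s⁻¹ i)))
      (fun a b hab => Finset.prod_congr rfl (fun i hi => by
        rw [hab i hi, hab (s⁻¹ i) (inv_apply_mem_orb_iff.mpr hi)]))
      (fun a b hab => Finset.prod_congr rfl (fun i hi => by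
        have hi' := (Finset.mem_sdiff.mp hi).2
        rw [hab i hi', hab (s⁻¹ i) (fun hc => hi' (inv_apply_mem_orb_iff.mp hc))]))
    rw [singleCycleSum d s A r, ih T' hT'le hT'inv] at hsplit
    simp_rw [← hprodsplit] at hsplit
    have hreps : (cycleReps s).filter (· ∈ T) = insert r ((cycleReps s).filter (· ∈ T')) := by
      ext j
      simp only [Finset.mem_filter, Finset.mem_insert, Finset.mem_sdiff, hT']
      constructor
      · rintro ⟨hjrep, hjT⟩
        by_cases hjC : j ∈ orb s r
        · left
          have h1 : r ≤ j := mem_cycleReps_iff.mp hrRep j (mem_orb_iff.mp hjC)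
          have h2 : j ≤ r := mem_cycleReps_iff.mp hjrep r (mem_orb_iff.mp hjC).symm
          exact le_antisymm h2 h1
        · right; exact ⟨hjrep, hjT, hjC⟩
      · rintro (rfl | ⟨hjrep, hjT, _⟩)
        · exact ⟨hrRep, hrT⟩
        · exact ⟨hjrep, hjT⟩
    have hrnot : r ∉ (cycleReps s).filter (· ∈ T') := by
      simp only [Finset.mem_filter, hT', Finset.mem_sdiff]
      rintro ⟨-, -, hc⟩
      exact hc (mem_orb_self s r)
    rw [hreps, Finset.prod_insert hrnot]
    have hdC : (d:ℂ) ≠ 0 := Nat.cast_ne_zero.mpr hd.ne'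
    apply mul_left_cancel₀ (pow_ne_zero k hdC)
    rw [← hsplit]
    have hexp : (k - Function.minimalPeriod s r) + (k - T'.card) = k + (k - T.card) := by
      omega
    rw [show ((d:ℂ) ^ (k - Function.minimalPeriod s r) * Matrix.trace (cycleProd s A r)) *
          ((d:ℂ) ^ (k - T'.card) * ∏ r ∈ (cycleReps s).filter (· ∈ T'), Matrix.trace (cycleProd s A r))
        = (d:ℂ) ^ ((k - Function.minimalPeriod s r) + (k - T'.card))
            * (Matrix.trace (cycleProd s A r) * ∏ r ∈ (cycleReps s).filter (· ∈ T'), Matrix.trace (cycleProd s A r)) by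
      rw [pow_add]; ring]
    rw [hexp, pow_add]
    ring

end Aux

/-- For a permutation `s` of `{1,…,k}` and square matrices `A^{(1)},…,A^{(k)}`, the sum
`∑_{a₁,…,a_k} A^{(1)}_{a₁,a_{s⁻¹(1)}} ⋯ A^{(k)}_{a_k,a_{s⁻¹(k)}}`
(which is `Tr((A^{(1)}⊗⋯⊗A^{(k)}) ∘ I(s))`) equals the product over the cycles
`(i_1 i_2 … i_l)` of `s` of `Tr(A^{(i_l)} ⋯ A^{(i_2)} A^{(i_1)})`. -/
theorem trace_tensor_perm (k d : ℕ) (s : Equiv.Perm (Fin k))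
    (A : Fin k → Matrix (Fin d) (Fin d) ℂ) :
    ∑ a : Fin k → Fin d, ∏ i : Fin k, A i (a i) (a (s⁻¹ i))
      = ∏ i ∈ cycleReps s, Matrix.trace (cycleProd s A i) := by
  rcases Nat.eq_zero_or_pos d with hd | hd
  · subst hd
    rcases Nat.eq_zero_or_pos k with hk | hk
    · subst hk
      have h1 : (cycleReps s) = ∅ := Finset.eq_empty_of_isEmpty _
      rw [h1, Finset.prod_empty]
      have h2 : ∀ a : Fin 0 → Fin 0, ∏ i : Fin 0, A i (a i) (a (s⁻¹ i)) = 1 := fun a => by simp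
      simp_rw [h2]
      rw [Finset.sum_const, Finset.card_univ]
      simp [Fintype.card_fun]
    · have hempty : IsEmpty (Fin k → Fin 0) := ⟨fun f => (f ⟨0, hk⟩).elim0⟩
      have huniv : (Finset.univ : Finset (Fin k → Fin 0)) = ∅ := @Finset.univ_eq_empty _ _ hempty
      rw [huniv, Finset.sum_empty]
      set i0 : Fin k := ⟨0, hk⟩
      have hne : (orb s i0).Nonempty := ⟨i0, mem_orb_self s i0⟩
      have hr0 : (orb s i0).min' hne ∈ cycleReps s :=
        mem_cycleReps_iff.mpr (fun j hj => (orb s i0).min'_le j (mem_orb_iff.mpr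
          ((mem_orb_iff.mp ((orb s i0).min'_mem hne)).trans hj)))
      symm
      apply Finset.prod_eq_zero hr0
      simp [Matrix.trace]
  · have h := mainLemma d hd s A k Finset.univ
      (by rw [Finset.card_univ, Fintype.card_fin]) (fun i _ => Finset.mem_univ _)
    rw [h, Finset.card_univ, Fintype.card_fin, Nat.sub_self, pow_zero, one_mul]
    congr 1
    exact Finset.filter_true_of_mem (fun j _ => Finset.mem_univ j)

end
end

section
/- Let G be a compact group with Haar measure μ_G and let π be an irreducible unitary representation with character χ^π. Let z: G → C be a continuous class function. For a permutation s ∈ S_n with cycle type μ(s) = (μ_1 ≥ μ_2 ≥ ⋯), define J(s) = ∫_{G^n} ∏_{cycles (i_1…i_r) of s} z(g_{i_r}⋯g_{i_1}) · conj( ∏_{cycles (i_1…i_r)} χ^π(g_{i_r}⋯g_{i_1}) ) dμ_G(g_1)⋯dμ_G(g_n). Then J(s) = (⟨z, χ^π⟩_G)^{ℓ(s)}, where ℓ(s) is the number of cycles of s and ⟨φ,ψ⟩_G = ∫_G φ(g) conj(ψ(g)) dμ_G(g). -/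
set_option maxHeartbeats 1000000


open scoped Classical
open MeasureTheory

noncomputable section

/-! ### Auxiliary lemmas on cycles -/

lemma cycleAux_minimalPeriod_pos {n : ℕ} (s : Equiv.Perm (Fin n)) (i : Fin n) :
    0 < Function.minimalPeriod s i := by
  apply Function.IsPeriodicPt.minimalPeriod_pos (orderOf_pos s)
  show (⇑s)^[orderOf s] i = i
  rw [← Equiv.Perm.coe_pow, pow_orderOf_eq_one]
  rfl

lemma cycleAux_mem_cycleReps_iff {n : ℕ} {s : Equiv.Perm (Fin n)} {i : Fin n} :
    i ∈ cycleReps s ↔ ∀ j, s.SameCycle i j → i ≤ j := by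
  simp [cycleReps]

lemma cycleAux_pow_apply_not_mem {n : ℕ} {s : Equiv.Perm (Fin n)} {i : Fin n}
    (hi : i ∈ cycleReps s) {k : ℕ} (hk0 : 0 < k) (hk : k < Function.minimalPeriod s i) :
    (s ^ k) i ∉ cycleReps s := by
  intro hmem
  have hsc : s.SameCycle i ((s ^ k) i) := ⟨(k : ℤ), by simp⟩
  have h1 : i ≤ (s ^ k) i := (cycleAux_mem_cycleReps_iff.1 hi) _ hsc
  have h2 : (s ^ k) i ≤ i := (cycleAux_mem_cycleReps_iff.1 hmem) _ hsc.symm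
  have heq : (s ^ k) i = i := le_antisymm h2 h1
  have hper : Function.IsPeriodicPt (⇑s) k i := by
    show (⇑s)^[k] i = i
    rw [← Equiv.Perm.coe_pow]
    exact heq
  exact absurd (hper.minimalPeriod_le hk0) (not_le.2 hk)

lemma cycleAux_cycleProd_split {M : Type*} [Monoid M] {n : ℕ} (s : Equiv.Perm (Fin n))
    (g : Fin n → M) (i : Fin n) :
    cycleProd s g i
      = (((List.range (Function.minimalPeriod s i - 1)).map
            (fun k => g ((s ^ (k + 1)) i))).reverse).prod * g i := by
  have h : Function.minimalPeriod (⇑s) i - 1 + 1 = Function.minimalPeriod (⇑s) i :=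
    Nat.succ_pred_eq_of_pos (cycleAux_minimalPeriod_pos s i)
  unfold cycleProd
  rw [← h, List.range_succ_eq_map, List.map_cons, List.reverse_cons, List.prod_append,
    List.map_map]
  simp only [Function.comp, pow_zero, Equiv.Perm.coe_one, id_eq, List.prod_cons, List.prod_nil,
    mul_one]
  rfl

section Aux

variable {G : Type*} [Group G] [TopologicalSpace G] [IsTopologicalGroup G] [CompactSpace G]
  [MeasurableSpace G] [BorelSpace G]

/-- Uniform continuity of a continuous function on a compact group, one-sided version. -/
lemma cycleAux_unif (f : G → ℂ) (hf : Continuous f) {ε : ℝ} (hε : 0 < ε) :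
    ∃ U : Set G, IsOpen U ∧ (1 : G) ∈ U ∧ ∀ u ∈ U, ∀ v : G, ‖f (u * v) - f v‖ ≤ ε := by
  have key : ∀ v : G, ∃ Uv Wv : Set G, IsOpen Uv ∧ IsOpen Wv ∧ (1 : G) ∈ Uv ∧ v ∈ Wv ∧
      ∀ u ∈ Uv, ∀ w ∈ Wv, ‖f (u * w) - f v‖ ≤ ε / 2 := by
    intro v
    have hc : Continuous fun q : G × G => ‖f (q.1 * q.2) - f v‖ :=
      ((hf.comp continuous_mul).sub continuous_const).norm
    have hS : IsOpen {q : G × G | ‖f (q.1 * q.2) - f v‖ < ε / 2} :=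
      isOpen_lt hc continuous_const
    have hmem : ((1 : G), v) ∈ {q : G × G | ‖f (q.1 * q.2) - f v‖ < ε / 2} := by
      simp [half_pos hε]
    rcases isOpen_prod_iff.1 hS 1 v hmem with ⟨Uv, Wv, hUo, hWo, h1, hv, hsub⟩
    refine ⟨Uv, Wv, hUo, hWo, h1, hv, ?_⟩
    intro u hu w hw
    have h2 : (u, w) ∈ {q : G × G | ‖f (q.1 * q.2) - f v‖ < ε / 2} :=
      hsub (Set.mk_mem_prod hu hw)
    exact le_of_lt h2
  choose Uv Wv hUo hWo h1 hv hest using key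
  obtain ⟨t, ht⟩ := isCompact_univ.elim_finite_subcover Wv hWo
    (fun x _ => Set.mem_iUnion.2 ⟨x, hv x⟩)
  refine ⟨⋂ v ∈ t, Uv v, isOpen_biInter_finset fun v _ => hUo v,
    Set.mem_iInter₂.2 fun v _ => h1 v, ?_⟩
  intro u hu v
  obtain ⟨j, hjt, hjW⟩ := Set.mem_iUnion₂.1 (ht (Set.mem_univ v))
  have ha : ‖f (u * v) - f j‖ ≤ ε / 2 := hest j u (Set.mem_iInter₂.1 hu j hjt) v hjW
  have hb : ‖f v - f j‖ ≤ ε / 2 := by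
    have := hest j 1 (h1 j) v hjW
    simpa using this
  have htri : ‖f (u * v) - f v‖ ≤ ‖f (u * v) - f j‖ + ‖f j - f v‖ := by
    have := dist_triangle (f (u * v)) (f j) (f v)
    simpa [dist_eq_norm] using this
  have hb' : ‖f j - f v‖ ≤ ε / 2 := by rwa [norm_sub_rev] at hb
  linarith

/-- A measurable selector for a finite measurable cover. -/
lemma cycleAux_selector (V : G → Set G) (hV : ∀ a, MeasurableSet (V a)) (t : Finset G) :
    ∃ σ : G → G, (∀ b : G, MeasurableSet {x | σ x = b}) ∧
      ∀ x : G, (∃ a ∈ t, x ∈ V a) → σ x ∈ t ∧ x ∈ V (σ x) := by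
  induction t using Finset.induction_on with
  | empty =>
      refine ⟨fun _ => 1, fun b => ?_, fun x hx => by simpa using hx⟩
      by_cases h : (1 : G) = b
      · simp only [h]
        exact MeasurableSet.univ.congr (by ext x; simp)
      · have : {x : G | (1 : G) = b} = ∅ := by ext x; simp [h]
        rw [this]; exact MeasurableSet.empty
  | @insert a u ha ih =>
      obtain ⟨σ', hσ'm, hσ'⟩ := ih
      refine ⟨fun x => if x ∈ V a then a else σ' x, ?_, ?_⟩
      · intro b
        have : {x : G | (if x ∈ V a then a else σ' x) = b}
            = (V a ∩ {x | a = b}) ∪ ((V a)ᶜ ∩ {x | σ' x = b}) := by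
          ext x; by_cases hx : x ∈ V a <;> simp [hx]
        rw [this]
        refine MeasurableSet.union ((hV a).inter ?_) ((hV a).compl.inter (hσ'm b))
        by_cases h : a = b
        · simp only [h]; exact MeasurableSet.univ.congr (by ext x; simp)
        · have : {x : G | a = b} = ∅ := by ext x; simp [h]
          rw [this]; exact MeasurableSet.empty
      · intro x hx
        by_cases hxa : x ∈ V a
        · simp only [if_pos hxa]
          exact ⟨Finset.mem_insert_self a u, hxa⟩
        · rcases hx with ⟨c, hc, hcV⟩
          have hcu : c ∈ u := by
            rcases Finset.mem_insert.1 hc with rfl | h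
            · exact absurd hcV hxa
            · exact h
          obtain ⟨hh1, hh2⟩ := hσ' x ⟨c, hcu, hcV⟩
          simp only [if_neg hxa]
          exact ⟨Finset.mem_insert_of_mem hh1, hh2⟩

/-- Strong measurability (w.r.t. the product σ-algebra) of `g ↦ f (∏ g along a word)`. -/
lemma cycleAux_word {n : ℕ} :
    ∀ (l : List (Fin n)) (f : G → ℂ), Continuous f →
      StronglyMeasurable (fun g : Fin n → G => f ((l.map g).prod)) := by
  intro l
  induction l with
  | nil =>
      intro f hf
      simp only [List.map_nil, List.prod_nil]
      exact stronglyMeasurable_const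
  | cons i l ih =>
      intro f hf
      have key : ∀ k : ℕ, ∃ h : (Fin n → G) → ℂ, StronglyMeasurable h ∧
          ∀ g : Fin n → G, ‖h g - f (((i :: l).map g).prod)‖ ≤ ((k : ℝ) + 1)⁻¹ := by
        intro k
        have hε : (0 : ℝ) < ((k : ℝ) + 1)⁻¹ := by positivity
        obtain ⟨U, hUo, hU1, hUf⟩ := cycleAux_unif f hf hε
        set Vset : G → Set G := fun a => (fun x : G => x * a⁻¹) ⁻¹' U with hVset
        have hVo : ∀ a, IsOpen (Vset a) := fun a => hUo.preimage (continuous_mul_right a⁻¹)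
        obtain ⟨t, ht⟩ := isCompact_univ.elim_finite_subcover Vset hVo
          (fun x _ => Set.mem_iUnion.2 ⟨x, by simp [hVset, hU1]⟩)
        obtain ⟨σ, hσm, hσ⟩ := cycleAux_selector Vset (fun a => (hVo a).measurableSet) t
        have hcov : ∀ x : G, σ x ∈ t ∧ x ∈ Vset (σ x) := by
          intro x
          apply hσ
          obtain ⟨a, ha, hxa⟩ := Set.mem_iUnion₂.1 (ht (Set.mem_univ x))
          exact ⟨a, ha, hxa⟩
        refine ⟨fun g => ∑ b ∈ t, if σ (g i) = b then f (b * ((l.map g).prod)) else 0, ?_, ?_⟩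
        · apply Finset.stronglyMeasurable_fun_sum
          intro b _
          refine StronglyMeasurable.ite ?_ ?_ stronglyMeasurable_const
          · have : MeasurableSet ((fun g : Fin n → G => g i) ⁻¹' {x | σ x = b}) :=
              (measurable_pi_apply i) (hσm b)
            exact this
          · exact ih (fun x => f (b * x)) (hf.comp (continuous_mul_left b))
        · intro g
          beta_reduce
          rw [Finset.sum_ite_eq t (σ (g i)) (fun b => f (b * ((l.map g).prod))),
            if_pos (hcov (g i)).1]
          simp only [List.map_cons, List.prod_cons]
          rw [norm_sub_rev]
          have hVmem : g i * (σ (g i))⁻¹ ∈ U := (hcov (g i)).2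
          have := hUf (g i * (σ (g i))⁻¹) hVmem (σ (g i) * (l.map g).prod)
          have huv : g i * (σ (g i))⁻¹ * (σ (g i) * (l.map g).prod)
              = g i * (l.map g).prod := by
            simp [mul_assoc]
          rwa [huv] at this
      choose h hm hb using key
      apply stronglyMeasurable_of_tendsto Filter.atTop hm
      rw [tendsto_pi_nhds]
      intro g
      have hlim : Filter.Tendsto (fun k : ℕ => ((k : ℝ) + 1)⁻¹) Filter.atTop (nhds 0) := by
        simpa only [one_div] using tendsto_one_div_add_atTop_nhds_zero_nat (𝕜 := ℝ)
      have h0 : Filter.Tendsto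
          (fun k : ℕ => h k g - f (((i :: l).map g).prod)) Filter.atTop (nhds 0) :=
        squeeze_zero_norm (fun k => hb k g) hlim
      have := h0.add_const (f (((i :: l).map g).prod))
      simpa using this

end Aux

/-- Let `G` be a compact group with normalized Haar measure `μ`, `π` a continuous
irreducible unitary representation of `G` with character `χ = tr ∘ π`, and
`z : G → ℂ` a continuous class function.  For a permutation `s ∈ S_n`,
`J(s) = ∫_{Gⁿ} ∏_{cycles} z(cycle product) · conj(∏_{cycles} χ(cycle product)) dμ⊗ⁿ`
equals `(⟨z, χ⟩_G)^{ℓ(s)}`, where `ℓ(s)` is the number of cycles of `s` and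
`⟨φ,ψ⟩_G = ∫_G φ(g) conj(ψ(g)) dμ(g)`. -/
theorem cycle_integral_inner_product_power (G : Type*) [Group G] [TopologicalSpace G]
    [IsTopologicalGroup G] [CompactSpace G] [MeasurableSpace G] [BorelSpace G]
    (μ : Measure G) [μ.IsHaarMeasure] [IsProbabilityMeasure μ]
    (V : Type*) [NormedAddCommGroup V] [InnerProductSpace ℂ V] [FiniteDimensional ℂ V]
    (π : Representation ℂ G V)
    (hcont : ∀ v : V, Continuous fun x : G => π x v)
    (hunit : ∀ (x : G) (v w : V), (inner ℂ (π x v) (π x w) : ℂ) = inner ℂ v w)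
    (hirr : ∀ W : Submodule ℂ V, (∀ (x : G) (v : V), v ∈ W → π x v ∈ W) → W = ⊥ ∨ W = ⊤)
    (z : G → ℂ) (hz : Continuous z) (hcentral : ∀ a b : G, z (a * b * a⁻¹) = z b)
    (n : ℕ) (s : Equiv.Perm (Fin n)) :
    ∫ g : Fin n → G,
        (∏ i ∈ cycleReps s, z (cycleProd s g i)) *
          (starRingEnd ℂ) (∏ i ∈ cycleReps s, LinearMap.trace ℂ V (π (cycleProd s g i)))
        ∂(Measure.pi fun _ => μ)
      = (∫ x, z x * (starRingEnd ℂ) (LinearMap.trace ℂ V (π x)) ∂μ) ^ (cycleReps s).card := by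
  classical
  -- continuity of the character
  have hχ : Continuous fun x : G => LinearMap.trace ℂ V (π x) := by
    set b := Module.finBasis ℂ V with hb
    have hrepr : ∀ i, Continuous fun x : G => b.coord i ((π x) (b i)) := by
      intro i
      exact (LinearMap.continuous_of_finiteDimensional (b.coord i)).comp (hcont (b i))
    have htr : (fun x : G => LinearMap.trace ℂ V (π x))
        = fun x => ∑ i, b.coord i ((π x) (b i)) := by
      funext x
      rw [LinearMap.trace_eq_matrix_trace ℂ b, Matrix.trace]
      simp [Matrix.diag, LinearMap.toMatrix_apply, Module.Basis.coord_apply]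
    rw [htr]
    exact continuous_finset_sum _ fun i _ => hrepr i
  -- the main computation, for an arbitrary continuous `F`
  have main : ∀ F : G → ℂ, Continuous F →
      ∫ g : Fin n → G, ∏ i ∈ cycleReps s, F (cycleProd s g i) ∂(Measure.pi fun _ => μ)
        = (∫ x, F x ∂μ) ^ (cycleReps s).card := by
    intro F hFc
    obtain ⟨x₀, -, hx₀⟩ := isCompact_univ.exists_isMaxOn ⟨1, Set.mem_univ 1⟩
      hFc.norm.continuousOn
    have hFb : ∀ x : G, ‖F x‖ ≤ ‖F x₀‖ := fun x => hx₀ (Set.mem_univ x)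
    obtain ⟨p, hp⟩ : ∃ p : Fin n → Prop, p = fun j => j ∈ cycleReps s := ⟨_, rfl⟩
    have hpm : ∀ j, p j ↔ j ∈ cycleReps s := fun j => by rw [hp]
    set e := MeasurableEquiv.piEquivPiSubtypeProd (fun _ : Fin n => G) p with he
    have hmp := measurePreserving_piEquivPiSubtypeProd (fun _ : Fin n => μ) p
    set f0 : (Fin n → G) → ℂ := fun g => ∏ i ∈ cycleReps s, F (cycleProd s g i) with hf0
    -- strong measurability of the integrand
    have hf0m : StronglyMeasurable f0 := by
      apply Finset.stronglyMeasurable_fun_prod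
      intro i _
      have hcp : ∀ g : Fin n → G, cycleProd s g i
          = (((((List.range (Function.minimalPeriod s i)).map
              (fun k => (s ^ k) i))).reverse).map g).prod := by
        intro g
        rw [List.map_reverse, List.map_map]
        rfl
      simp only [hcp]
      exact cycleAux_word _ F hFc
    have hf0b : ∀ g, ‖f0 g‖ ≤ ‖F x₀‖ ^ (cycleReps s).card := by
      intro g
      calc ‖∏ i ∈ cycleReps s, F (cycleProd s g i)‖
          = ∏ i ∈ cycleReps s, ‖F (cycleProd s g i)‖ := norm_prod _ _
        _ ≤ ∏ _i ∈ cycleReps s, ‖F x₀‖ :=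
            Finset.prod_le_prod (fun _ _ => norm_nonneg _) (fun i _ => hFb _)
        _ = ‖F x₀‖ ^ (cycleReps s).card := Finset.prod_const _
    -- transfer through the measurable equivalence
    have step1 := hmp.integral_comp' (fun q => f0 (e.symm q))
    simp only [he, MeasurableEquiv.symm_apply_apply] at step1
    have hint : Integrable (fun q => f0 (e.symm q))
        ((Measure.pi fun _ : Subtype p => μ).prod (Measure.pi fun _ : {i // ¬ p i} => μ)) := by
      constructor
      · exact (hf0m.comp_measurable e.symm.measurable).aestronglyMeasurable
      · exact HasFiniteIntegral.of_bounded (ae_of_all _ fun q => hf0b _)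
    show (∫ g : Fin n → G, f0 g ∂(Measure.pi fun _ => μ)) = _
    rw [step1]
    refine (integral_prod_symm _ hint).trans ?_
    -- inner integral
    have inner : ∀ y : {i // ¬ p i} → G,
        ∫ x : Subtype p → G, f0 (e.symm (x, y)) ∂(Measure.pi fun _ => μ)
          = (∫ x, F x ∂μ) ^ (cycleReps s).card := by
      intro y
      set yext : Fin n → G := fun j => if h : p j then 1 else y ⟨j, h⟩ with hyext
      set c : Fin n → G := fun i =>
        (((List.range (Function.minimalPeriod s i - 1)).map
            (fun k => yext ((s ^ (k + 1)) i))).reverse).prod with hc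
      have hg : ∀ (x : Subtype p → G) (j : Fin n),
          e.symm (x, y) j = if h : p j then x ⟨j, h⟩ else y ⟨j, h⟩ := fun x j => rfl
      have hpt : ∀ x : Subtype p → G, f0 (e.symm (x, y))
          = ∏ a : Subtype p, F (c a * x a) := by
        intro x
        simp only [hf0]
        rw [Finset.prod_subtype (cycleReps s) (fun j => (hpm j).symm)
          (fun i => F (cycleProd s (e.symm (x, y)) i))]
        apply Finset.prod_congr rfl
        intro a _
        congr 1
        rw [cycleAux_cycleProd_split]
        congr 1
        · rw [hc]
          congr 2
          apply List.map_congr_left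
          intro k hk
          have hk' : k + 1 < Function.minimalPeriod s (a : Fin n) := by
            have h1 := List.mem_range.1 hk
            have h2 := cycleAux_minimalPeriod_pos s (a : Fin n)
            omega
          have hnot : ¬ p ((s ^ (k + 1)) (a : Fin n)) := fun hmem =>
            cycleAux_pow_apply_not_mem ((hpm _).1 a.2) (Nat.succ_pos k) hk' ((hpm _).1 hmem)
          rw [hg, dif_neg hnot, hyext]
          simp [dif_neg hnot]
        · rw [hg, dif_pos a.2]
      have hfun : (fun x : Subtype p → G => f0 (e.symm (x, y)))
          = fun x => ∏ a : Subtype p, F (c a * x a) := funext hpt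
      rw [hfun]
      letI : MeasureSpace G := ⟨μ⟩
      haveI h1 : Measure.IsMulLeftInvariant (volume : Measure G) :=
        (inferInstance : Measure.IsMulLeftInvariant μ)
      haveI h2 : IsProbabilityMeasure (volume : Measure G) :=
        (inferInstance : IsProbabilityMeasure μ)
      have hvol : (Measure.pi fun _ : Subtype p => μ)
          = (volume : Measure (Subtype p → G)) := (volume_pi).symm
      rw [hvol]
      rw [volume_pi, MeasureTheory.integral_fintype_prod_eq_prod (ι := Subtype p) (fun (a : Subtype p) (t : G) => F (c a * t))]
      have hIa : ∀ a : Subtype p, (∫ t : G, F (c a * t)) = ∫ x, F x ∂μ := by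
        intro a
        exact integral_mul_left_eq_self F (c a)
      rw [Finset.prod_congr rfl (fun a _ => hIa a), Finset.prod_const, Finset.card_univ]
      congr 1
      calc Fintype.card (Subtype p)
          = Fintype.card {j // j ∈ cycleReps s} := Fintype.card_congr (Equiv.subtypeEquivRight hpm)
        _ = (cycleReps s).card := Fintype.card_coe _
    simp only [inner]
    rw [integral_const]
    simp [measure_univ]
  -- put everything together
  have hFc : Continuous fun x : G => z x * (starRingEnd ℂ) (LinearMap.trace ℂ V (π x)) :=
    hz.mul ((RCLike.continuous_conj).comp hχ)
  have hre : (fun g : Fin n → G =>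
      (∏ i ∈ cycleReps s, z (cycleProd s g i)) *
        (starRingEnd ℂ) (∏ i ∈ cycleReps s, LinearMap.trace ℂ V (π (cycleProd s g i))))
      = fun g => ∏ i ∈ cycleReps s,
          (z (cycleProd s g i) * (starRingEnd ℂ) (LinearMap.trace ℂ V (π (cycleProd s g i)))) := by
    funext g
    rw [map_prod, ← Finset.prod_mul_distrib]
  rw [hre]
  exact main _ hFc

end
end

section
/- Let G be a compact group. The canonical projection p_{n,n+1}: S_{n+1}(G) → S_n(G), defined by removing the letter n+1 from its cycle and multiplying the group element at the next position of the cycle by g_{n+1} (or simply dropping g_{n+1} if n+1 is a fixed point), preserves the colors of cycles: for every x̃ ∈ S_{n+1}(G) and every conjugacy class c of G, the multiset of conjugacy classes of the cycle-products of p_{n,n+1}(x̃) is obtained from that of x̃ by removing one occurrence of the class of g_{n+1} if n+1 was a fixed point, and is unchanged otherwise. -/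
open scoped Classical

noncomputable section

/-- The multiset of colors of the cycles of an element `x = (g, s)` of `S_n(G)`:
the color of a cycle `(i_1 … i_r)` of `s` is the conjugacy class of
`g_{i_r} ⋯ g_{i_2} g_{i_1}` in `G`. -/
def colorMultiset {G : Type*} [Group G] {n : ℕ} (g : Fin n → G) (s : Equiv.Perm (Fin n)) :
    Multiset (ConjClasses G) :=
  (cycleReps s).val.map fun i => ConjClasses.mk (cycleProd s g i)

/-- The permutation part of the canonical projection `S_{n+1}(G) → S_n(G)`:
the letter `n+1` is removed from its cycle (cycles through `n+1` are spliced). -/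
def projPerm {n : ℕ} (s : Equiv.Perm (Fin (n + 1))) : Equiv.Perm (Fin n) :=
  Equiv.removeNone (finSuccEquivLast.permCongr s)

/-- The `Gⁿ`-part of the canonical projection `S_{n+1}(G) → S_n(G)`:
`g_{n+1}` is dropped and the entry at the position `i_{m+1} = s(n+1)` following `n+1`
in its cycle is multiplied on the right by `g_{n+1}`. -/
def projG {G : Type*} [Group G] {n : ℕ} (g : Fin (n + 1) → G) (s : Equiv.Perm (Fin (n + 1)))
    (i : Fin n) : G :=
  if Fin.castSucc i = s (Fin.last n) then g (Fin.castSucc i) * g (Fin.last n)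
  else g (Fin.castSucc i)

namespace ProjAux

open Equiv Equiv.Perm Function

variable {G : Type*} [Group G]

lemma perm_mem_periodicPts {m : ℕ} (f : Equiv.Perm (Fin m)) (x : Fin m) :
    x ∈ Function.periodicPts f := by
  refine Function.mk_mem_periodicPts (orderOf_pos f) ?_
  show f^[orderOf f] x = x
  rw [← Equiv.Perm.coe_pow, pow_orderOf_eq_one]
  rfl

lemma pow_apply_eq_of_minimalPeriod {m : ℕ} (f : Equiv.Perm (Fin m)) (x : Fin m) :
    (f ^ (Function.minimalPeriod f x)) x = x := by
  rw [Equiv.Perm.coe_pow]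
  exact Function.iterate_minimalPeriod

lemma mk_cycleProd_apply {m : ℕ} (f : Equiv.Perm (Fin m)) (g : Fin m → G) (x : Fin m) :
    ConjClasses.mk (cycleProd f g (f x)) = ConjClasses.mk (cycleProd f g x) := by
  have hx := perm_mem_periodicPts f x
  have hper : Function.minimalPeriod f (f x) = Function.minimalPeriod f x :=
    Function.minimalPeriod_apply hx
  obtain ⟨q, hq⟩ : ∃ q, Function.minimalPeriod f x = q + 1 :=
    Nat.exists_eq_add_of_lt (Function.minimalPeriod_pos_of_mem_periodicPts hx) |>.imp
      (fun q h => by omega)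
  set h : ℕ → G := fun k => g ((f ^ k) x) with hh
  have hx0 : h (q + 1) = h 0 := by
    show g ((f ^ (q+1)) x) = g ((f ^ 0) x)
    rw [← hq, pow_apply_eq_of_minimalPeriod]
    simp
  have hA : cycleProd f g x = ((List.range q).map (h ∘ Nat.succ)).reverse.prod * h 0 := by
    unfold cycleProd
    rw [hq, List.range_succ_eq_map, List.map_cons, List.map_map, List.reverse_cons,
      List.prod_append, List.prod_cons, List.prod_nil, mul_one]
  have hB : cycleProd f g (f x) = h 0 * ((List.range q).map (h ∘ Nat.succ)).reverse.prod := by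
    unfold cycleProd
    rw [hper, hq]
    have hF : ∀ k, g ((f ^ k) (f x)) = h (k + 1) := by
      intro k
      show _ = g ((f ^ (k+1)) x)
      rw [pow_succ, Equiv.Perm.mul_apply]
    have : (List.range (q+1)).map (fun k => g ((f ^ k) (f x))) =
        ((List.range q).map (h ∘ Nat.succ)) ++ [h 0] := by
      have : (List.range (q+1)).map (fun k => g ((f ^ k) (f x))) =
          (List.range (q+1)).map (h ∘ Nat.succ) := by
        apply List.map_congr_left
        intro a _
        exact hF a
      rw [this, List.range_succ, List.map_append]
      simp [hx0]
    rw [this, List.reverse_append, List.reverse_cons, List.reverse_nil, List.nil_append,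
      List.singleton_append, List.prod_cons]
  rw [hA, hB, ConjClasses.mk_eq_mk_iff_isConj]
  rw [isConj_iff]
  exact ⟨(h 0)⁻¹, by group⟩

lemma mk_cycleProd_pow {m : ℕ} (f : Equiv.Perm (Fin m)) (g : Fin m → G) (k : ℕ) (x : Fin m) :
    ConjClasses.mk (cycleProd f g ((f ^ k) x)) = ConjClasses.mk (cycleProd f g x) := by
  induction k generalizing x with
  | zero => simp
  | succ k ih =>
    rw [pow_succ, Equiv.Perm.mul_apply]
    rw [ih (f x), mk_cycleProd_apply]

lemma mk_cycleProd_sameCycle {m : ℕ} (f : Equiv.Perm (Fin m)) (g : Fin m → G) {x y : Fin m}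
    (h : f.SameCycle x y) :
    ConjClasses.mk (cycleProd f g x) = ConjClasses.mk (cycleProd f g y) := by
  obtain ⟨k, -, hk⟩ := h.exists_pow_eq'
  rw [← hk, mk_cycleProd_pow]

variable {n : ℕ}

lemma castSucc_projPerm (s : Equiv.Perm (Fin (n+1))) (i : Fin n) :
    (projPerm s i).castSucc =
      if s i.castSucc = Fin.last n then s (Fin.last n) else s i.castSucc := by
  have key : ∀ x : Fin (n+1), x ≠ Fin.last n → ∃ j : Fin n, x = j.castSucc := by
    intro x hx
    obtain ⟨j, hj⟩ := Fin.exists_castSucc_eq.mpr hx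
    exact ⟨j, hj.symm⟩
  by_cases h : s i.castSucc = Fin.last n
  · rw [if_pos h]
    have hli : (Fin.last n : Fin (n+1)) ≠ i.castSucc := (Fin.castSucc_lt_last i).ne'
    have hsl : s (Fin.last n) ≠ Fin.last n := fun hc =>
      hli (s.injective (hc.trans h.symm))
    obtain ⟨j, hj⟩ := key _ hsl
    have h1 : (finSuccEquivLast.permCongr s) (some i) = none := by
      simp [h]
    have h2 := Equiv.removeNone_none (finSuccEquivLast.permCongr s) h1
    have h3 : (finSuccEquivLast.permCongr s) none = some j := by
      simp [hj]
    rw [h3] at h2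
    have : projPerm s i = j := Option.some_injective _ h2
    rw [this, hj]
  · rw [if_neg h]
    obtain ⟨j, hj⟩ := key _ h
    have h1 : (finSuccEquivLast.permCongr s) (some i) = some j := by
      simp [hj]
    have h2 := Equiv.removeNone_some (finSuccEquivLast.permCongr s) ⟨j, h1⟩
    rw [h1] at h2
    have : projPerm s i = j := Option.some_injective _ h2
    rw [this, hj]

lemma step_ne (s : Equiv.Perm (Fin (n+1))) (i : Fin n) (h : s i.castSucc ≠ Fin.last n) :
    (projPerm s i).castSucc = s i.castSucc := by rw [castSucc_projPerm, if_neg h]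

lemma step_eq (s : Equiv.Perm (Fin (n+1))) (i : Fin n) (h : s i.castSucc = Fin.last n) :
    (projPerm s i).castSucc = s (Fin.last n) := by rw [castSucc_projPerm, if_pos h]

lemma sc_step (s : Equiv.Perm (Fin (n+1))) (i : Fin n) :
    s.SameCycle i.castSucc (projPerm s i).castSucc := by
  by_cases h : s i.castSucc = Fin.last n
  · rw [step_eq s i h, ← h]
    exact (Equiv.Perm.sameCycle_apply_right.mpr
      (Equiv.Perm.sameCycle_apply_right.mpr (Equiv.Perm.SameCycle.refl _ _)))
  · rw [step_ne s i h]
    exact Equiv.Perm.sameCycle_apply_right.mpr (Equiv.Perm.SameCycle.refl _ _)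

lemma sc_forward_pow (s : Equiv.Perm (Fin (n+1))) (k : ℕ) (i : Fin n) :
    s.SameCycle i.castSucc (((projPerm s) ^ k) i).castSucc := by
  induction k generalizing i with
  | zero => exact Equiv.Perm.SameCycle.refl _ _
  | succ k ih =>
    rw [pow_succ, Equiv.Perm.mul_apply]
    exact (sc_step s i).trans (ih (projPerm s i))

lemma sc_forward {s : Equiv.Perm (Fin (n+1))} {i j : Fin n}
    (h : (projPerm s).SameCycle i j) : s.SameCycle i.castSucc j.castSucc := by
  obtain ⟨k, -, hk⟩ := h.exists_pow_eq'
  rw [← hk]; exact sc_forward_pow s k i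

lemma sc_backward_pow (s : Equiv.Perm (Fin (n+1))) (k : ℕ) :
    ∀ i j : Fin n, (s ^ k) i.castSucc = j.castSucc → (projPerm s).SameCycle i j := by
  induction k using Nat.strong_induction_on with
  | _ k ih =>
    intro i j hk
    match k, hk with
    | 0, hk =>
      have : i = j := Fin.castSucc_injective n hk
      rw [this]
    | 1, hk =>
      have h : s i.castSucc ≠ Fin.last n := by
        intro hc
        rw [pow_one, hc] at hk
        exact (Fin.castSucc_lt_last j).ne' hk
      have := step_ne s i h
      rw [pow_one, ← this] at hk
      have : projPerm s i = j := Fin.castSucc_injective n hk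
      rw [← this]
      exact Equiv.Perm.sameCycle_apply_right.mpr (Equiv.Perm.SameCycle.refl _ _)
    | (k+2), hk =>
      by_cases h : s i.castSucc = Fin.last n
      · rw [show (k:ℕ)+2 = (k+1)+1 by ring, pow_succ, Equiv.Perm.mul_apply, h,
          show (k:ℕ)+1 = k+1 by ring, pow_succ, Equiv.Perm.mul_apply,
          ← step_eq s i h] at hk
        exact ((Equiv.Perm.sameCycle_apply_right.mpr
          (Equiv.Perm.SameCycle.refl _ _)).trans
          (ih k (by omega) _ _ hk))
      · rw [show (k:ℕ)+2 = (k+1)+1 by ring, pow_succ, Equiv.Perm.mul_apply,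
          ← step_ne s i h] at hk
        exact ((Equiv.Perm.sameCycle_apply_right.mpr
          (Equiv.Perm.SameCycle.refl _ _)).trans
          (ih (k+1) (by omega) _ _ hk))

lemma sc_backward {s : Equiv.Perm (Fin (n+1))} {i j : Fin n}
    (h : s.SameCycle i.castSucc j.castSucc) : (projPerm s).SameCycle i j := by
  obtain ⟨k, -, hk⟩ := h.exists_pow_eq'
  exact sc_backward_pow s k i j hk

end ProjAux
namespace ProjAux2
open ProjAux

variable {G : Type*} [Group G] {n : ℕ}

lemma pow_succ_apply {m : ℕ} (f : Equiv.Perm (Fin m)) (k : ℕ) (x : Fin m) :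
    f ((f ^ k) x) = (f ^ (k+1)) x := by
  rw [pow_succ', Equiv.Perm.mul_apply]

lemma pow_castSucc_no_last {s : Equiv.Perm (Fin (n+1))} {i : Fin n}
    (h : ¬ s.SameCycle i.castSucc (Fin.last n)) (k : ℕ) :
    (((projPerm s) ^ k) i).castSucc = (s ^ k) i.castSucc := by
  induction k with
  | zero => simp
  | succ k ih =>
    have hsc : s.SameCycle i.castSucc ((s ^ (k+1)) i.castSucc) :=
      ⟨(k+1 : ℕ), by rw [zpow_natCast]⟩
    have hne : s ((s ^ k) i.castSucc) ≠ Fin.last n := by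
      intro hc
      apply h
      rw [← hc]
      have : s ((s ^ k) i.castSucc) = (s ^ (k+1)) i.castSucc := by
        rw [pow_succ', Equiv.Perm.mul_apply]
      rw [this]
      exact hsc
    rw [pow_succ', Equiv.Perm.mul_apply, step_ne s _ (by rw [ih]; exact hne),
      ih, pow_succ', Equiv.Perm.mul_apply]

lemma minimalPeriod_no_last {s : Equiv.Perm (Fin (n+1))} {i : Fin n}
    (h : ¬ s.SameCycle i.castSucc (Fin.last n)) :
    Function.minimalPeriod (projPerm s) i = Function.minimalPeriod s i.castSucc := by
  apply Nat.dvd_antisymm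
  · apply Function.IsPeriodicPt.minimalPeriod_dvd
    show (projPerm s)^[_] i = i
    rw [← Equiv.Perm.coe_pow]
    apply Fin.castSucc_injective
    rw [pow_castSucc_no_last h, pow_apply_eq_of_minimalPeriod]
  · apply Function.IsPeriodicPt.minimalPeriod_dvd
    show s^[_] i.castSucc = i.castSucc
    rw [← Equiv.Perm.coe_pow, ← pow_castSucc_no_last h, pow_apply_eq_of_minimalPeriod]

lemma sc_slast_last (s : Equiv.Perm (Fin (n+1))) :
    s.SameCycle (s (Fin.last n)) (Fin.last n) :=
  Equiv.Perm.sameCycle_apply_left.mpr (Equiv.Perm.SameCycle.refl _ _)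

lemma cycleProd_no_last (g : Fin (n+1) → G) {s : Equiv.Perm (Fin (n+1))} {i : Fin n}
    (h : ¬ s.SameCycle i.castSucc (Fin.last n)) :
    cycleProd (projPerm s) (projG g s) i = cycleProd s g i.castSucc := by
  unfold cycleProd
  rw [minimalPeriod_no_last h]
  congr 1
  congr 1
  apply List.map_congr_left
  intro k _
  have hval : (((projPerm s) ^ k) i).castSucc = (s ^ k) i.castSucc := pow_castSucc_no_last h k
  have hne : (((projPerm s) ^ k) i).castSucc ≠ s (Fin.last n) := by
    rw [hval]
    intro hc
    apply h
    have h1 : s.SameCycle i.castSucc ((s ^ k) i.castSucc) := ⟨(k : ℕ), by rw [zpow_natCast]⟩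
    rw [hc] at h1
    exact h1.trans (sc_slast_last s)
  rw [projG, if_neg hne, hval]

lemma two_le_minimalPeriod_last {s : Equiv.Perm (Fin (n+1))} (hl : s (Fin.last n) ≠ Fin.last n) :
    2 ≤ Function.minimalPeriod s (Fin.last n) := by
  have h1 : Function.minimalPeriod s (Fin.last n) ≠ 1 := by
    intro hc
    exact hl (Function.minimalPeriod_eq_one_iff_isFixedPt.mp hc)
  have h0 : 0 < Function.minimalPeriod s (Fin.last n) :=
    Function.minimalPeriod_pos_of_mem_periodicPts (perm_mem_periodicPts s _)
  omega

lemma not_periodic_lt {s : Equiv.Perm (Fin (n+1))} {p : ℕ} (hp : 0 < p)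
    (hlt : p < Function.minimalPeriod s (Fin.last n)) :
    (s ^ p) (Fin.last n) ≠ Fin.last n := by
  intro hc
  exact Function.not_isPeriodicPt_of_pos_of_lt_minimalPeriod (by omega) hlt
    (by show s^[p] _ = _; rw [← Equiv.Perm.coe_pow]; exact hc)

lemma pow_castSucc_from_slast {s : Equiv.Perm (Fin (n+1))} (hl : s (Fin.last n) ≠ Fin.last n)
    {i₀ : Fin n} (h0 : i₀.castSucc = s (Fin.last n)) (k : ℕ)
    (hk : k ≤ Function.minimalPeriod s (Fin.last n) - 2) :
    (((projPerm s) ^ k) i₀).castSucc = (s ^ (k+1)) (Fin.last n) := by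
  have hr := two_le_minimalPeriod_last hl
  induction k with
  | zero => simpa [pow_one] using h0
  | succ k ih =>
    have ihk := ih (by omega)
    have hne : s ((((projPerm s) ^ k) i₀).castSucc) ≠ Fin.last n := by
      rw [ihk, pow_succ_apply]
      exact not_periodic_lt (by omega) (by omega)
    rw [← pow_succ_apply (projPerm s) k i₀, step_ne s _ hne, ihk, pow_succ_apply]

lemma minimalPeriod_from_slast {s : Equiv.Perm (Fin (n+1))} (hl : s (Fin.last n) ≠ Fin.last n)
    {i₀ : Fin n} (h0 : i₀.castSucc = s (Fin.last n)) :
    Function.minimalPeriod (projPerm s) i₀ = Function.minimalPeriod s (Fin.last n) - 1 := by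
  set r := Function.minimalPeriod s (Fin.last n) with hrdef
  have hr := two_le_minimalPeriod_last hl
  have hfix : ((projPerm s) ^ (r-1)) i₀ = i₀ := by
    apply Fin.castSucc_injective
    have : ((projPerm s) ^ (r-1)) i₀ = projPerm s (((projPerm s) ^ (r-2)) i₀) := by
      rw [show r - 1 = (r-2)+1 by omega, ← pow_succ_apply]
    rw [this]
    have h2 : (((projPerm s) ^ (r-2)) i₀).castSucc = (s ^ (r-1)) (Fin.last n) := by
      have := pow_castSucc_from_slast hl h0 (r-2) le_rfl
      rwa [show (r-2)+1 = r-1 by omega] at this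
    have h3 : s ((((projPerm s) ^ (r-2)) i₀).castSucc) = Fin.last n := by
      rw [h2, pow_succ_apply, show (r-1)+1 = r by omega]
      exact pow_apply_eq_of_minimalPeriod s (Fin.last n)
    rw [step_eq s _ h3, h0]
  have hdvd : Function.minimalPeriod (projPerm s) i₀ ∣ r - 1 := by
    apply Function.IsPeriodicPt.minimalPeriod_dvd
    show (projPerm s)^[r-1] i₀ = i₀
    rw [← Equiv.Perm.coe_pow]
    exact hfix
  set p := Function.minimalPeriod (projPerm s) i₀ with hpdef
  have hppos : 0 < p :=
    Function.minimalPeriod_pos_of_mem_periodicPts (perm_mem_periodicPts _ _)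
  have hple : p ≤ r - 1 := Nat.le_of_dvd (by omega) hdvd
  by_contra hne
  have hplt : p < r - 1 := by omega
  have hpfix : ((projPerm s) ^ p) i₀ = i₀ := by
    rw [Equiv.Perm.coe_pow] at *
    show (projPerm s)^[p] i₀ = i₀
    exact Function.iterate_minimalPeriod
  have := congrArg Fin.castSucc hpfix
  rw [pow_castSucc_from_slast hl h0 p (by omega), h0] at this
  have h4 : s ((s ^ p) (Fin.last n)) = s (Fin.last n) := by
    rw [pow_succ_apply]
    exact this
  have h5 : (s ^ p) (Fin.last n) = Fin.last n := s.injective h4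
  exact not_periodic_lt hppos (by omega) h5

lemma cycleProd_from_slast (g : Fin (n+1) → G) {s : Equiv.Perm (Fin (n+1))}
    (hl : s (Fin.last n) ≠ Fin.last n)
    {i₀ : Fin n} (h0 : i₀.castSucc = s (Fin.last n)) :
    cycleProd (projPerm s) (projG g s) i₀ = cycleProd s g (Fin.last n) := by
  set r := Function.minimalPeriod s (Fin.last n) with hrdef
  have hr := two_le_minimalPeriod_last hl
  set q := r - 2 with hqdef
  have hq2 : r = q + 2 := by omega
  set H : ℕ → G := fun k => g ((s ^ k) (Fin.last n)) with hH
  set D : List G := (List.range q).map (fun k => H (k+2)) with hD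
  have hLt : (List.range (Function.minimalPeriod (projPerm s) i₀)).map
      (fun k => projG g s (((projPerm s) ^ k) i₀)) = (H 1 * H 0) :: D := by
    rw [minimalPeriod_from_slast hl h0, show r - 1 = q + 1 by omega,
      List.range_succ_eq_map, List.map_cons, List.map_map]
    congr 1
    · show projG g s i₀ = _
      rw [projG, if_pos h0, h0]
      show g (s (Fin.last n)) * g (Fin.last n) = g ((s^1) (Fin.last n)) * g ((s^0) (Fin.last n))
      simp
    · rw [hD]
      apply List.map_congr_left
      intro a ha
      rw [List.mem_range] at ha
      have hcast : (((projPerm s) ^ (a+1)) i₀).castSucc = (s ^ (a+2)) (Fin.last n) := by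
        rw [pow_castSucc_from_slast hl h0 (a+1) (by omega)]
      have hne : (((projPerm s) ^ (a+1)) i₀).castSucc ≠ s (Fin.last n) := by
        rw [hcast]
        intro hc
        have h4 : s ((s ^ (a+1)) (Fin.last n)) = s (Fin.last n) := by
          rw [pow_succ_apply]
          exact hc
        have h5 := s.injective h4
        exact not_periodic_lt (Nat.succ_pos a) (by omega) h5
      show projG g s (((projPerm s) ^ (a+1)) i₀) = H (a+2)
      rw [projG, if_neg hne, hcast]
  have hLs : (List.range r).map (fun k => g ((s ^ k) (Fin.last n))) = H 0 :: H 1 :: D := by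
    rw [hq2, List.range_succ_eq_map, List.map_cons, List.map_map,
      List.range_succ_eq_map, List.map_cons, List.map_map]
    rfl
  unfold cycleProd
  rw [hLt, hLs]
  simp only [List.reverse_cons, List.prod_append, List.prod_cons, List.prod_nil,
    List.append_assoc, List.singleton_append, mul_one, mul_assoc]

lemma cycleProd_last_of_fixed (g : Fin (n+1) → G) {s : Equiv.Perm (Fin (n+1))}
    (hl : s (Fin.last n) = Fin.last n) :
    cycleProd s g (Fin.last n) = g (Fin.last n) := by
  unfold cycleProd
  rw [Function.minimalPeriod_eq_one_iff_isFixedPt.mpr hl,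
    show List.range 1 = [0] from rfl, List.map_singleton, List.reverse_singleton,
    List.prod_singleton, pow_zero]
  rfl

lemma mk_cycleProd_proj (g : Fin (n+1) → G) (s : Equiv.Perm (Fin (n+1))) (i : Fin n) :
    ConjClasses.mk (cycleProd (projPerm s) (projG g s) i)
      = ConjClasses.mk (cycleProd s g i.castSucc) := by
  by_cases h : s.SameCycle i.castSucc (Fin.last n)
  · have hl : s (Fin.last n) ≠ Fin.last n := by
      intro hc
      obtain ⟨b, hb⟩ := h.symm
      have : (s ^ b) (Fin.last n) = Fin.last n :=
        (Function.IsFixedPt.perm_zpow hc b)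
      rw [this] at hb
      exact (Fin.castSucc_lt_last i).ne' hb
    obtain ⟨i₀, hi₀⟩ := Fin.exists_castSucc_eq.mpr hl
    have hsc : s.SameCycle i.castSucc i₀.castSucc := by
      rw [hi₀]
      exact h.trans (sc_slast_last s).symm
    rw [mk_cycleProd_sameCycle (projPerm s) (projG g s) (sc_backward hsc),
      cycleProd_from_slast g hl hi₀]
    exact (mk_cycleProd_sameCycle s g h).symm
  · rw [cycleProd_no_last g h]

lemma mem_cycleReps_iff {s : Equiv.Perm (Fin (n+1))} (i : Fin n) :
    i ∈ cycleReps (projPerm s) ↔ i.castSucc ∈ cycleReps s := by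
  simp only [cycleReps, Finset.mem_filter, Finset.mem_univ, true_and]
  constructor
  · intro hi b hb
    by_cases hbl : b = Fin.last n
    · subst hbl; exact Fin.le_last _
    · obtain ⟨j, hj⟩ := Fin.exists_castSucc_eq.mpr hbl
      rw [← hj] at hb ⊢
      exact Fin.castSucc_le_castSucc_iff.mpr (hi j (sc_backward hb))
  · intro hi j hj
    exact Fin.castSucc_le_castSucc_iff.mp (hi j.castSucc (sc_forward hj))

lemma last_mem_cycleReps_iff {s : Equiv.Perm (Fin (n+1))} :
    Fin.last n ∈ cycleReps s ↔ s (Fin.last n) = Fin.last n := by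
  simp only [cycleReps, Finset.mem_filter, Finset.mem_univ, true_and]
  constructor
  · intro hi
    have h1 : s.SameCycle (Fin.last n) (s (Fin.last n)) :=
      Equiv.Perm.sameCycle_apply_right.mpr (Equiv.Perm.SameCycle.refl _ _)
    exact le_antisymm (Fin.le_last _) (hi _ h1)
  · intro hl j hj
    obtain ⟨b, hb⟩ := hj
    rw [Function.IsFixedPt.perm_zpow hl b] at hb
    rw [← hb]

lemma cycleReps_eq_fixed {s : Equiv.Perm (Fin (n+1))} (hl : s (Fin.last n) = Fin.last n) :
    cycleReps s = insert (Fin.last n) ((cycleReps (projPerm s)).image Fin.castSucc) := by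
  ext b
  by_cases hbl : b = Fin.last n
  · subst hbl
    simp only [Finset.mem_insert, true_or, iff_true]
    exact last_mem_cycleReps_iff.mpr hl
  · obtain ⟨j, hj⟩ := Fin.exists_castSucc_eq.mpr hbl
    subst hj
    rw [Finset.mem_insert]
    simp only [Finset.mem_image]
    constructor
    · intro hb
      exact Or.inr ⟨j, (mem_cycleReps_iff j).mpr hb, rfl⟩
    · rintro (hc | ⟨a, ha, hc⟩)
      · exact absurd hc hbl
      · have hja : a = j := Fin.castSucc_injective n hc
        subst hja
        exact (mem_cycleReps_iff a).mp ha

lemma cycleReps_eq_not_fixed {s : Equiv.Perm (Fin (n+1))} (hl : s (Fin.last n) ≠ Fin.last n) :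
    cycleReps s = (cycleReps (projPerm s)).image Fin.castSucc := by
  ext b
  by_cases hbl : b = Fin.last n
  · subst hbl
    simp only [Finset.mem_image]
    constructor
    · intro hb
      exact absurd (last_mem_cycleReps_iff.mp hb) hl
    · rintro ⟨a, -, hc⟩
      exact absurd hc (Fin.castSucc_lt_last a).ne
  · obtain ⟨j, hj⟩ := Fin.exists_castSucc_eq.mpr hbl
    subst hj
    simp only [Finset.mem_image]
    constructor
    · intro hb
      exact ⟨j, (mem_cycleReps_iff j).mpr hb, rfl⟩
    · rintro ⟨a, ha, hc⟩
      have hja : a = j := Fin.castSucc_injective n hc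
      subst hja
      exact (mem_cycleReps_iff a).mp ha

lemma colorMultiset_image (g : Fin (n+1) → G) (s : Equiv.Perm (Fin (n+1))) :
    (((cycleReps (projPerm s)).image Fin.castSucc).val).map
        (fun b => ConjClasses.mk (cycleProd s g b))
      = colorMultiset (projG g s) (projPerm s) := by
  rw [Finset.image_val_of_injOn ((Fin.castSucc_injective n).injOn)]
  rw [Multiset.map_map]
  unfold colorMultiset
  apply Multiset.map_congr rfl
  intro i _
  exact (mk_cycleProd_proj g s i).symm

end ProjAux2

/-- The canonical projection `p_{n,n+1} : S_{n+1}(G) → S_n(G)` preserves the colors of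
cycles: the multiset of colors (conjugacy classes of the cycle products) of the image is
obtained from that of `x̃ = ((g_1,…,g_{n+1}), s̃)` by removing one occurrence of the
class of `g_{n+1}` if `n+1` is a fixed point of `s̃`, and is unchanged otherwise. -/
theorem canonical_projection_preserves_colors (G : Type*) [Group G] [TopologicalSpace G]
    [IsTopologicalGroup G] [CompactSpace G] (n : ℕ)
    (g : Fin (n + 1) → G) (s : Equiv.Perm (Fin (n + 1))) :
    (s (Fin.last n) = Fin.last n →
        colorMultiset (projG g s) (projPerm s)
          = (colorMultiset g s).erase (ConjClasses.mk (g (Fin.last n)))) ∧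
    (s (Fin.last n) ≠ Fin.last n →
        colorMultiset (projG g s) (projPerm s) = colorMultiset g s) := by
  constructor
  · intro hl
    have hnot : Fin.last n ∉ (cycleReps (projPerm s)).image Fin.castSucc := by
      simp only [Finset.mem_image]
      rintro ⟨a, -, hc⟩
      exact absurd hc (Fin.castSucc_lt_last a).ne
    have h1 : colorMultiset g s
        = ConjClasses.mk (g (Fin.last n)) ::ₘ colorMultiset (projG g s) (projPerm s) := by
      unfold colorMultiset
      rw [show cycleReps s = _ from ProjAux2.cycleReps_eq_fixed hl,
        Finset.insert_val_of_notMem hnot, Multiset.map_cons,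
        ProjAux2.cycleProd_last_of_fixed g hl]
      congr 1
      have := ProjAux2.colorMultiset_image g s
      unfold colorMultiset at this
      exact this
    rw [h1, Multiset.erase_cons_head]
  · intro hl
    have h1 := ProjAux2.colorMultiset_image g s
    rw [← h1]
    unfold colorMultiset
    rw [show cycleReps s = _ from ProjAux2.cycleReps_eq_not_fixed hl]


end
end
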